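/- arXiv:1610.01914 — 8 statements merged into one kernel-verified Lean document; each statement's English description precedes it below -/
import Mathlib

section
/- Let $u$ be a positive integer, $G$ a finite abelian group, and $X \in \mathbb{Z}[\zeta_u][G]$ a group ring element with cyclotomic integer coefficients. If $X X^{(-1)} = 1$ (where $X^{(-1)} = \sum_{g} \overline{X_g} g^{-1}$), then $X = \pm \zeta_u^e g$ for some $g \in G$ and integer $e$, i.e., $X$ is plus or minus a root of unity times a single group element. -/
open Finset


lemma conj_mul_self_eq_one {c : ℂ} (hc : ‖c‖ = 1) : (starRingEnd ℂ) c * c = 1 := by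
  rw [mul_comm, Complex.mul_conj]
  rw [Complex.normSq_eq_norm_sq, hc]
  norm_num

lemma conj_eq_inv_of_norm_one {c : ℂ} (hc : ‖c‖ = 1) : (starRingEnd ℂ) c = c⁻¹ := by
  have h0 : c ≠ 0 := by intro h; rw [h] at hc; simp at hc
  field_simp
  exact conj_mul_self_eq_one hc

/-- Triangle-equality: if `n` unit vectors sum to `n·c` with `‖c‖ = 1`, all equal `c`. -/
lemma tri_eq {ι : Type*} [Fintype ι] (f : ι → ℂ) (c : ℂ) (hc : ‖c‖ = 1)
    (hf : ∀ i, ‖f i‖ = 1) (hsum : ∑ i, f i = (Fintype.card ι : ℂ) * c) (i : ι) : f i = c := by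
  have hle : ∀ j : ι, ((starRingEnd ℂ) c * f j).re ≤ 1 := by
    intro j
    calc ((starRingEnd ℂ) c * f j).re ≤ ‖(starRingEnd ℂ) c * f j‖ := Complex.re_le_norm _
    _ = 1 := by rw [norm_mul, RingHomIsometric.norm_map, hc, hf, one_mul]
  have hsr : ∑ j : ι, ((starRingEnd ℂ) c * f j).re = (Fintype.card ι : ℝ) := by
    have h2 : ∑ j : ι, (starRingEnd ℂ) c * f j = (Fintype.card ι : ℂ) := by
      rw [← Finset.mul_sum, hsum, ← mul_assoc, mul_comm ((starRingEnd ℂ) c),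
        mul_assoc, conj_mul_self_eq_one hc, mul_one]
    calc ∑ j : ι, ((starRingEnd ℂ) c * f j).re = (∑ j : ι, (starRingEnd ℂ) c * f j).re := by
          rw [Complex.re_sum]
    _ = (Fintype.card ι : ℝ) := by rw [h2]; simp
  have heq : ((starRingEnd ℂ) c * f i).re = 1 := by
    by_contra hne
    have hlt : ((starRingEnd ℂ) c * f i).re < 1 := lt_of_le_of_ne (hle i) hne
    have : ∑ j : ι, ((starRingEnd ℂ) c * f j).re < ∑ _j : ι, (1:ℝ) :=
      Finset.sum_lt_sum (fun j _ => hle j) ⟨i, Finset.mem_univ i, hlt⟩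
    rw [hsr] at this
    simp at this
  have hnz : ‖(starRingEnd ℂ) c * f i‖ = 1 := by
    rw [norm_mul, RingHomIsometric.norm_map, hc, hf, one_mul]
  have him : ((starRingEnd ℂ) c * f i).im = 0 := by
    have h1 : ((starRingEnd ℂ) c * f i).re ^ 2 + ((starRingEnd ℂ) c * f i).im ^ 2 = 1 := by
      have h3 := Complex.sq_norm ((starRingEnd ℂ) c * f i)
      rw [hnz] at h3
      rw [Complex.normSq_apply] at h3
      nlinarith [h3]
    nlinarith [heq]
  have hz1 : (starRingEnd ℂ) c * f i = 1 := Complex.ext (by rw [heq]; rfl) (by rw [him]; rfl)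
  have h5 : c * ((starRingEnd ℂ) c * f i) = c * 1 := by rw [hz1]
  rwa [← mul_assoc, mul_comm c, conj_mul_self_eq_one hc, one_mul, mul_one] at h5


/-- A nonzero algebraic integer in a number field all of whose conjugates have norm at most 1
has all conjugates of norm exactly 1. -/
lemma kron_helper {K : Type*} [Field K] [NumberField K] {x : K} (hx0 : x ≠ 0)
    (hxi : IsIntegral ℤ x) (h : ∀ ψ : K →+* ℂ, ‖ψ x‖ ≤ 1) (ψ : K →+* ℂ) : ‖ψ x‖ = 1 := by
  classical
  have hN : IsIntegral ℤ (Algebra.norm ℚ x) := Algebra.isIntegral_norm ℚ hxi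
  obtain ⟨z, hz⟩ := IsIntegrallyClosed.isIntegral_iff.mp hN
  have hNne : Algebra.norm ℚ x ≠ 0 := by
    rw [Algebra.norm_ne_zero_iff]
    exact hx0
  have hzne : z ≠ 0 := by rintro rfl; simp at hz; exact hNne hz.symm
  have hz1 : (1:ℝ) ≤ ‖algebraMap ℚ ℂ (Algebra.norm ℚ x)‖ := by
    rw [← hz]
    have : (algebraMap ℚ ℂ) ((algebraMap ℤ ℚ) z) = (z : ℂ) := by
      push_cast; simp
    rw [this]
    rw [Complex.norm_intCast]
    exact_mod_cast Int.one_le_abs (by exact_mod_cast hzne)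
  rw [Algebra.norm_eq_prod_embeddings ℚ ℂ x, norm_prod] at hz1
  -- each factor ≤ 1
  have hle : ∀ σ : K →ₐ[ℚ] ℂ, ‖σ x‖ ≤ 1 := fun σ => h σ.toRingHom
  set ψa : K →ₐ[ℚ] ℂ := ψ.toRatAlgHom
  have hψa : ψa x = ψ x := rfl
  have hfac : ∏ σ : K →ₐ[ℚ] ℂ, ‖σ x‖ = ‖ψa x‖ * ∏ σ ∈ Finset.univ.erase ψa, ‖σ x‖ :=
    (Finset.mul_prod_erase Finset.univ _ (Finset.mem_univ ψa)).symm
  have hrest : ∏ σ ∈ Finset.univ.erase ψa, ‖σ x‖ ≤ 1 :=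
    Finset.prod_le_one (fun σ _ => norm_nonneg _) (fun σ _ => hle σ)
  have h1 : (1:ℝ) ≤ ‖ψa x‖ := by
    by_contra hlt
    push_neg at hlt
    have : ∏ σ : K →ₐ[ℚ] ℂ, ‖σ x‖ < 1 := by
      rw [hfac]
      calc ‖ψa x‖ * ∏ σ ∈ Finset.univ.erase ψa, ‖σ x‖ ≤ ‖ψa x‖ * 1 :=
            mul_le_mul_of_nonneg_left hrest (norm_nonneg _)
      _ < 1 := by rwa [mul_one]
    linarith
  rw [hψa] at h1
  exact le_antisymm (h ψ) h1

set_option maxHeartbeats 2000000 in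
/-- If `X ∈ ℤ[ζ_u][G]` satisfies `X X⁽⁻¹⁾ = 1`, then `X = ± ζ_u^e g` for some `g ∈ G`, `e ∈ ℤ`. -/
theorem group_ring_unit_form
    (u : ℕ) (hu : 0 < u) (ζ : ℂ) (hζ : IsPrimitiveRoot ζ u)
    (G : Type) [CommGroup G] [Fintype G]
    (X : MonoidAlgebra ℂ G)
    (hcoef : ∀ g : G, X.coeff g ∈ Algebra.adjoin ℤ ({ζ} : Set ℂ))
    (hXX : X * (∑ g : G, MonoidAlgebra.single g⁻¹ ((starRingEnd ℂ) (X.coeff g))) = 1) :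
    ∃ (g : G) (e : ℤ) (ε : ℂ), (ε = 1 ∨ ε = -1) ∧
      X = MonoidAlgebra.single g (ε * ζ ^ e) := by
  classical
  -- pick a nonzero coefficient
  have hXne : X ≠ 0 := by
    rintro rfl
    rw [zero_mul] at hXX
    exact one_ne_zero hXX.symm
  obtain ⟨g₀, hg₀⟩ : ∃ g : G, X.coeff g ≠ 0 := by
    by_contra hcon
    push_neg at hcon
    exact hXne (MonoidAlgebra.ext (Finsupp.ext fun g => hcon g))
  set n := Fintype.card G with hn
  have hn0 : 0 < n := Fintype.card_pos
  -- characters of G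
  haveI : NeZero ((Monoid.exponent G : ℕ) : ℂ) :=
    ⟨Nat.cast_ne_zero.mpr Monoid.exponent_ne_zero_of_finite⟩
  obtain ⟨eqv⟩ := CommGroup.monoidHom_mulEquiv_of_hasEnoughRootsOfUnity G ℂ
  haveI : Fintype (G →* ℂˣ) := Fintype.ofEquiv G eqv.toEquiv.symm
  have hcard : Fintype.card (G →* ℂˣ) = n := Fintype.card_congr eqv.toEquiv
  -- character values are roots of unity
  have hχpow : ∀ (χ : G →* ℂˣ) (g : G), ((χ g : ℂˣ) : ℂ) ^ n = 1 := by
    intro χ g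
    have h1 : (χ g) ^ n = 1 := by rw [← map_pow, pow_card_eq_one, map_one]
    have := congrArg (Units.val) h1
    simpa using this
  have hχnorm : ∀ (χ : G →* ℂˣ) (g : G), ‖((χ g : ℂˣ) : ℂ)‖ = 1 := fun χ g =>
    Complex.norm_eq_one_of_pow_eq_one (hχpow χ g) hn0.ne'
  -- orthogonality
  have ortho : ∀ h : G, ∑ χ : G →* ℂˣ, ((χ h : ℂˣ) : ℂ) = if h = 1 then (n : ℂ) else 0 := by
    intro h
    by_cases h1 : h = 1
    · subst h1
      simp only [map_one, Units.val_one, if_true]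
      rw [Finset.sum_const, Finset.card_univ, hcard, nsmul_eq_mul, mul_one]
    · rw [if_neg h1]
      obtain ⟨χ₀, hχ₀⟩ := CommGroup.exists_apply_ne_one_of_hasEnoughRootsOfUnity G ℂ h1
      have hperm : ∑ χ : G →* ℂˣ, (((χ₀ * χ) h : ℂˣ) : ℂ) = ∑ χ : G →* ℂˣ, ((χ h : ℂˣ) : ℂ) :=
        Fintype.sum_equiv (Equiv.mulLeft χ₀) _ _ fun χ => rfl
      have hexp : (((χ₀ h : ℂˣ) : ℂ) - 1) * ∑ χ : G →* ℂˣ, ((χ h : ℂˣ) : ℂ) = 0 := by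
        rw [sub_mul, one_mul, sub_eq_zero, Finset.mul_sum, ← hperm]
        exact Finset.sum_congr rfl fun χ _ => by simp
      rcases mul_eq_zero.mp hexp with hc | hs
      · exact absurd (Units.ext (by simpa using sub_eq_zero.mp hc)) hχ₀
      · exact hs
  -- evaluation of the group ring at characters
  set Φ : (G →* ℂˣ) → (MonoidAlgebra ℂ G →ₐ[ℂ] ℂ) :=
    fun χ => (MonoidAlgebra.lift ℂ ℂ G) ((Units.coeHom ℂ).comp χ) with hΦ
  have hΦapp : ∀ (χ : G →* ℂˣ) (Y : MonoidAlgebra ℂ G),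
      Φ χ Y = ∑ g : G, Y.coeff g * ((χ g : ℂˣ) : ℂ) := by
    intro χ Y
    rw [hΦ]
    simp only [MonoidAlgebra.lift_apply]
    rw [Finsupp.sum_fintype]
    · exact Finset.sum_congr rfl fun g _ => by simp [smul_eq_mul]
    · intro g; simp
  set Z : (G →* ℂˣ) → ℂ := fun χ => ∑ g : G, X.coeff g * ((χ g : ℂˣ) : ℂ) with hZ
  have Hχ : ∀ χ : G →* ℂˣ,
      Z χ * (∑ g : G, (starRingEnd ℂ) (X.coeff g) * (((χ g : ℂˣ) : ℂ))⁻¹) = 1 := by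
    intro χ
    have h1 := congrArg (Φ χ) hXX
    rw [map_mul, map_one, map_sum] at h1
    rw [hΦapp] at h1
    have h2 : ∀ g : G, Φ χ (MonoidAlgebra.single g⁻¹ ((starRingEnd ℂ) (X.coeff g)))
        = (starRingEnd ℂ) (X.coeff g) * (((χ g : ℂˣ) : ℂ))⁻¹ := by
      intro g
      rw [hΦ]
      simp only [MonoidAlgebra.lift_single, smul_eq_mul]
      congr 1
      rw [map_inv]
      simp
    rw [Finset.sum_congr rfl (fun g _ => h2 g)] at h1
    exact h1
  -- Fourier inversion
  have finv : ∀ h : G,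
      ∑ χ : G →* ℂˣ, (((χ h : ℂˣ) : ℂ))⁻¹ * Z χ = (n : ℂ) * X.coeff h := by
    intro h
    have step : ∀ χ : G →* ℂˣ, (((χ h : ℂˣ) : ℂ))⁻¹ * Z χ
        = ∑ g : G, X.coeff g * ((χ (g * h⁻¹) : ℂˣ) : ℂ) := by
      intro χ
      rw [hZ, Finset.mul_sum]
      refine Finset.sum_congr rfl fun g _ => ?_
      have : ((χ (g * h⁻¹) : ℂˣ) : ℂ) = ((χ g : ℂˣ) : ℂ) * (((χ h : ℂˣ) : ℂ))⁻¹ := by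
        rw [map_mul, map_inv]
        simp [Units.val_mul]
      rw [this]; ring
    calc ∑ χ : G →* ℂˣ, (((χ h : ℂˣ) : ℂ))⁻¹ * Z χ
        = ∑ χ : G →* ℂˣ, ∑ g : G, X.coeff g * ((χ (g * h⁻¹) : ℂˣ) : ℂ) :=
          Finset.sum_congr rfl fun χ _ => step χ
      _ = ∑ g : G, ∑ χ : G →* ℂˣ, X.coeff g * ((χ (g * h⁻¹) : ℂˣ) : ℂ) := Finset.sum_comm
      _ = ∑ g : G, X.coeff g * (if g * h⁻¹ = 1 then (n : ℂ) else 0) := by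
          refine Finset.sum_congr rfl fun g _ => ?_
          rw [← Finset.mul_sum, ortho]
      _ = (n : ℂ) * X.coeff h := by
          rw [Finset.sum_congr rfl (fun g _ => by rw [mul_inv_eq_one (b := h)])]
          simp [mul_ite, Finset.sum_ite_eq', mul_comm]
  -- ===== the cyclotomic field K = ℚ(ξ), ξ a primitive lcm(u,n)-th root of unity =====
  set m := Nat.lcm u n with hm
  have hm0 : 0 < m := Nat.lcm_pos hu hn0
  have hum : u ∣ m := Nat.dvd_lcm_left _ _
  have hnm : n ∣ m := Nat.dvd_lcm_right _ _
  haveI : NeZero m := ⟨hm0.ne'⟩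
  obtain ⟨ξ, hξ⟩ : ∃ ξ : ℂ, IsPrimitiveRoot ξ m := ⟨_, Complex.isPrimitiveRoot_exp m hm0.ne'⟩
  set K := IntermediateField.adjoin ℚ ({ξ} : Set ℂ) with hK
  have hξK : ξ ∈ K := IntermediateField.mem_adjoin_simple_self ℚ ξ
  have hξint : IsIntegral ℚ ξ := (hξ.isIntegral hm0).tower_top
  have memK : ∀ z : ℂ, z ^ m = 1 → z ∈ K := by
    intro z hz
    obtain ⟨i, -, hi⟩ := hξ.eq_pow_of_pow_eq_one hz
    rw [← hi]
    exact pow_mem hξK i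
  have hζm : ζ ^ m = 1 := by
    obtain ⟨t, ht⟩ := hum
    rw [ht, pow_mul, hζ.pow_eq_one, one_pow]
  have hζK : ζ ∈ K := memK ζ hζm
  have hadj : Algebra.adjoin ℤ ({ζ} : Set ℂ) ≤ Subalgebra.restrictScalars ℤ K.toSubalgebra := by
    rw [Algebra.adjoin_le_iff]
    intro x hx
    rw [Set.mem_singleton_iff] at hx
    subst hx
    exact hζK
  have hXgK : ∀ g : G, X.coeff g ∈ K := fun g => hadj (hcoef g)
  -- complex conjugation preserves K
  have hξnorm : ‖ξ‖ = 1 := Complex.norm_eq_one_of_pow_eq_one hξ.pow_eq_one hm0.ne'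
  have hconjξ : (starRingEnd ℂ) ξ = ξ ^ (m - 1) := by
    rw [conj_eq_inv_of_norm_one hξnorm]
    have h2 : ξ * ξ ^ (m - 1) = 1 := by
      rw [← pow_succ', Nat.sub_add_cancel hm0, hξ.pow_eq_one]
    exact inv_eq_of_mul_eq_one_right h2
  have hconjK : ∀ x ∈ K, (starRingEnd ℂ) x ∈ K := by
    intro x hx
    have hmap : K.map (Complex.conjAe.restrictScalars ℚ).toAlgHom ≤ K := by
      rw [hK, IntermediateField.adjoin_map]
      refine IntermediateField.adjoin_le_iff.mpr ?_
      intro y hy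
      simp only [Set.image_singleton, Set.mem_singleton_iff] at hy
      subst hy
      show (starRingEnd ℂ) ξ ∈ _
      rw [hconjξ]
      exact pow_mem hξK _
    exact hmap ⟨x, hx, rfl⟩
  set cjK : K →+* K :=
    { toFun := fun x => ⟨(starRingEnd ℂ) x, hconjK x x.2⟩
      map_one' := by ext : 1; push_cast; simp
      map_mul' := fun x y => by ext : 1; push_cast; simp
      map_zero' := by ext : 1; push_cast; simp
      map_add' := fun x y => by ext : 1; push_cast; simp } with hcjK
  have hcjapp : ∀ x : K, (algebraMap K ℂ) (cjK x) = (starRingEnd ℂ) (algebraMap K ℂ x) := fun x => rfl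
  have hgenpow : (⟨ξ, hξK⟩ : K) ^ m = 1 := by
    apply Subtype.ext
    push_cast
    exact hξ.pow_eq_one
  have E2 : ∀ (ψ : K →+* ℂ) (x : K), ψ (cjK x) = (starRingEnd ℂ) (ψ x) := by
    intro ψ x
    have hψroot : (ψ (IntermediateField.AdjoinSimple.gen ℚ ξ)) ^ m = 1 := by
      rw [← map_pow]
      have : (IntermediateField.AdjoinSimple.gen ℚ ξ) ^ m = 1 := hgenpow
      rw [this, map_one]
    have key : (ψ.comp cjK).toRatAlgHom = ((starRingEnd ℂ).comp ψ).toRatAlgHom := by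
      apply (IntermediateField.adjoin.powerBasis hξint).algHom_ext
      show ψ (cjK (IntermediateField.AdjoinSimple.gen ℚ ξ))
          = (starRingEnd ℂ) (ψ (IntermediateField.AdjoinSimple.gen ℚ ξ))
      have h1 : cjK (IntermediateField.AdjoinSimple.gen ℚ ξ)
          = (IntermediateField.AdjoinSimple.gen ℚ ξ) ^ (m - 1) := by
        apply Subtype.ext
        push_cast
        exact hconjξ
      rw [h1, map_pow]
      rw [conj_eq_inv_of_norm_one (Complex.norm_eq_one_of_pow_eq_one hψroot hm0.ne')]
      have h2 : ψ (IntermediateField.AdjoinSimple.gen ℚ ξ)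
          * ψ (IntermediateField.AdjoinSimple.gen ℚ ξ) ^ (m - 1) = 1 := by
        rw [← pow_succ', Nat.sub_add_cancel hm0, hψroot]
      exact (inv_eq_of_mul_eq_one_right h2).symm
    exact congrArg (fun (f : K →ₐ[ℚ] ℂ) => f x) key
  -- elements of K
  set aK : G → K := fun g => ⟨X.coeff g, hXgK g⟩ with haK
  have hχm : ∀ (χ : G →* ℂˣ) (g : G), ((χ g : ℂˣ) : ℂ) ^ m = 1 := by
    intro χ g
    obtain ⟨t, ht⟩ := hnm
    rw [ht, pow_mul, hχpow, one_pow]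
  set cK : (G →* ℂˣ) → G → K := fun χ g => ⟨((χ g : ℂˣ) : ℂ), memK _ (hχm χ g)⟩ with hcK
  set w : (G →* ℂˣ) → K := fun χ => ∑ g : G, aK g * cK χ g with hw
  have hwcoe : ∀ χ, algebraMap K ℂ (w χ) = Z χ := by
    intro χ
    rw [hw, map_sum]
    exact Finset.sum_congr rfl fun g _ => by rw [map_mul]; rfl
  have hcKpow : ∀ χ g, (cK χ g) ^ m = 1 := by
    intro χ g
    apply Subtype.ext
    push_cast
    exact hχm χ g
  -- all conjugates of `w χ` have norm 1
  have hw1 : ∀ (χ : G →* ℂˣ) (ψ : K →+* ℂ), ‖ψ (w χ)‖ = 1 := by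
    intro χ ψ
    have hψc : ∀ g : G, ‖ψ (cK χ g)‖ = 1 := fun g =>
      Complex.norm_eq_one_of_pow_eq_one (by rw [← map_pow, hcKpow, map_one]) hm0.ne'
    set s : K := ∑ g : G, cjK (aK g) * (cK χ g)⁻¹ with hs
    have hprod : w χ * s = 1 := by
      apply (algebraMap K ℂ).injective
      rw [map_mul, map_one, hwcoe, hs, map_sum]
      have hterm : ∀ g : G, algebraMap K ℂ (cjK (aK g) * (cK χ g)⁻¹)
          = (starRingEnd ℂ) (X.coeff g) * (((χ g : ℂˣ) : ℂ))⁻¹ := by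
        intro g
        rw [map_mul, map_inv₀, hcjapp]
        rfl
      rw [Finset.sum_congr rfl fun g _ => hterm g]
      exact Hχ χ
    have hψs : ψ s = (starRingEnd ℂ) (ψ (w χ)) := by
      have hw' : ψ (w χ) = ∑ g : G, ψ (aK g) * ψ (cK χ g) := by
        rw [hw, map_sum]
        exact Finset.sum_congr rfl fun g _ => map_mul ψ _ _
      rw [hs, map_sum, hw', map_sum]
      refine Finset.sum_congr rfl fun g _ => ?_
      rw [map_mul, map_mul ((starRingEnd ℂ)), E2 ψ (aK g), map_inv₀,
        conj_eq_inv_of_norm_one (hψc g)]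
    have hone := congrArg ψ hprod
    rw [map_mul, map_one, hψs, Complex.mul_conj] at hone
    have hsq : Complex.normSq (ψ (w χ)) = 1 := by exact_mod_cast hone
    have h5 : ‖ψ (w χ)‖ ^ 2 = 1 := by
      rw [Complex.sq_norm]
      exact hsq
    nlinarith [norm_nonneg (ψ (w χ))]
  -- the Fourier inversion identity, in K
  set vK : (G →* ℂˣ) → K := fun χ => (cK χ g₀)⁻¹ with hv
  have hIK : (n : K) * aK g₀ = ∑ χ : G →* ℂˣ, vK χ * w χ := by
    apply (algebraMap K ℂ).injective
    rw [map_mul, map_natCast, map_sum]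
    have hterm : ∀ χ : G →* ℂˣ, algebraMap K ℂ (vK χ * w χ)
        = (((χ g₀ : ℂˣ) : ℂ))⁻¹ * Z χ := by
      intro χ
      rw [map_mul, hv, map_inv₀, hwcoe]
      rfl
    rw [Finset.sum_congr rfl fun χ _ => hterm χ, finv g₀]
    rfl
  have hale : ∀ ψ : K →+* ℂ, ‖ψ (aK g₀)‖ ≤ 1 := by
    intro ψ
    have h1 := congrArg ψ hIK
    rw [map_mul, map_natCast, map_sum] at h1
    have h2 : ‖(n : ℂ) * ψ (aK g₀)‖ ≤ (n : ℝ) := by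
      rw [h1]
      calc ‖∑ χ : G →* ℂˣ, ψ (vK χ * w χ)‖ ≤ ∑ χ : G →* ℂˣ, ‖ψ (vK χ * w χ)‖ :=
            norm_sum_le _ _
        _ = ∑ _χ : G →* ℂˣ, (1:ℝ) := by
            refine Finset.sum_congr rfl fun χ _ => ?_
            rw [map_mul, norm_mul, hv, map_inv₀, norm_inv, hw1 χ ψ]
            have h3 : ‖ψ (cK χ g₀)‖ = 1 :=
              Complex.norm_eq_one_of_pow_eq_one (by rw [← map_pow, hcKpow, map_one]) hm0.ne'
            rw [h3]
            norm_num
        _ = (n : ℝ) := by rw [Finset.sum_const, Finset.card_univ, hcard]; simp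
    rw [norm_mul, Complex.norm_natCast] at h2
    have hn' : (0:ℝ) < n := by exact_mod_cast hn0
    nlinarith [norm_nonneg (ψ (aK g₀))]
  have ha0 : aK g₀ ≠ 0 := by
    intro h
    apply hg₀
    have := congrArg (algebraMap K ℂ) h
    rwa [map_zero] at this
  have hXint : IsIntegral ℤ (X.coeff g₀) :=
    IsIntegral.of_mem_of_fg (Algebra.adjoin ℤ {ζ}) (hζ.isIntegral hu).fg_adjoin_singleton _
      (hcoef g₀)
  have haint : IsIntegral ℤ (aK g₀) := by
    rw [← isIntegral_algebraMap_iff (A := K) (B := ℂ) (algebraMap K ℂ).injective]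
    exact hXint
  haveI hKcyc : IsCyclotomicExtension {m} ℚ K := by
    have H := IntermediateField.adjoin_simple_toSubalgebra_of_isAlgebraic hξint.isAlgebraic
    refine IsCyclotomicExtension.equiv _ _ _ (h := ?_) (.refl : K.toSubalgebra ≃ₐ[ℚ] _)
    rw [hK, H]
    exact (show IsPrimitiveRoot ξ m from hξ).adjoin_isCyclotomicExtension ℚ
  haveI : NumberField K := IsCyclotomicExtension.numberField {m} ℚ K
  have haeq : ∀ ψ : K →+* ℂ, ‖ψ (aK g₀)‖ = 1 := kron_helper ha0 haint hale
  obtain ⟨k, hk0, hkpow⟩ := NumberField.Embeddings.pow_eq_one_of_norm_eq_one K ℂ haint haeq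
  have hXg₀norm : ‖X.coeff g₀‖ = 1 := by
    have := haeq (algebraMap K ℂ)
    simpa using this
  have hXg₀pow : (X.coeff g₀) ^ k = 1 := by
    have := congrArg (algebraMap K ℂ) hkpow
    rw [map_pow, map_one] at this
    exact this
  -- triangle equality: X is a single monomial
  have hZnorm : ∀ χ : G →* ℂˣ, ‖Z χ‖ = 1 := fun χ => by
    rw [← hwcoe]; exact hw1 χ (algebraMap K ℂ)
  have hZeq : ∀ χ : G →* ℂˣ, (((χ g₀ : ℂˣ) : ℂ))⁻¹ * Z χ = X.coeff g₀ := by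
    intro χ
    refine tri_eq (fun χ' => (((χ' g₀ : ℂˣ) : ℂ))⁻¹ * Z χ') (X.coeff g₀) hXg₀norm ?_ ?_ χ
    · intro χ'
      rw [norm_mul, norm_inv, hχnorm, hZnorm]
      norm_num
    · rw [hcard]
      exact finv g₀
  have hXh : ∀ h : G, h ≠ g₀ → X.coeff h = 0 := by
    intro h hne
    have h1 := finv h
    have h2 : ∀ χ : G →* ℂˣ, (((χ h : ℂˣ) : ℂ))⁻¹ * Z χ
        = ((χ (g₀ * h⁻¹) : ℂˣ) : ℂ) * X.coeff g₀ := by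
      intro χ
      have h3 : Z χ = ((χ g₀ : ℂˣ) : ℂ) * X.coeff g₀ := by
        rw [← hZeq χ, ← mul_assoc, mul_inv_cancel₀ (Units.ne_zero (χ g₀)), one_mul]
      rw [h3, map_mul, map_inv]
      simp only [Units.val_mul, Units.val_inv_eq_inv_val]
      ring
    rw [Finset.sum_congr rfl fun χ _ => h2 χ, ← Finset.sum_mul, ortho, if_neg] at h1
    · rw [zero_mul] at h1
      have hnne : (n : ℂ) ≠ 0 := Nat.cast_ne_zero.mpr hn0.ne'
      exact (mul_eq_zero.mp h1.symm).resolve_left hnne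
    · intro hcon
      rw [mul_inv_eq_one] at hcon
      exact hne hcon.symm
  have hXsingle : X = MonoidAlgebra.single g₀ (X.coeff g₀) := by
    apply MonoidAlgebra.ext
    apply Finsupp.ext
    intro h
    by_cases hh : h = g₀
    · subst hh
      exact (Finsupp.single_eq_same).symm
    · rw [hXh h hh]
      exact (Finsupp.single_eq_of_ne' (Ne.symm hh)).symm
  -- ===== classification of the root of unity X.coeff g₀ in ℚ(ζ) =====
  have hζint : IsIntegral ℚ ζ := (hζ.isIntegral hu).tower_top
  set Ku := IntermediateField.adjoin ℚ ({ζ} : Set ℂ) with hKu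
  haveI hKucyc : IsCyclotomicExtension {u} ℚ Ku := by
    have H := IntermediateField.adjoin_simple_toSubalgebra_of_isAlgebraic hζint.isAlgebraic
    refine IsCyclotomicExtension.equiv _ _ _ (h := ?_) (.refl : Ku.toSubalgebra ≃ₐ[ℚ] _)
    rw [hKu, H]
    exact (haveI : NeZero u := ⟨hu.ne'⟩; (show IsPrimitiveRoot ζ u from hζ).adjoin_isCyclotomicExtension ℚ)
  haveI : NumberField Ku := IsCyclotomicExtension.numberField {u} ℚ Ku
  have hζKu : ζ ∈ Ku := IntermediateField.mem_adjoin_simple_self ℚ ζ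
  have hXg₀Ku : X.coeff g₀ ∈ Ku := by
    have hadj' : Algebra.adjoin ℤ ({ζ} : Set ℂ) ≤ Subalgebra.restrictScalars ℤ Ku.toSubalgebra := by
      rw [Algebra.adjoin_le_iff]
      intro x hx
      rw [Set.mem_singleton_iff] at hx
      subst hx
      exact hζKu
    exact hadj' (hcoef g₀)
  set ζu : Ku := ⟨ζ, hζKu⟩ with hζudef
  have hζu : IsPrimitiveRoot ζu u := by
    rw [← IsPrimitiveRoot.coe_submonoidClass_iff (B := IntermediateField ℚ ℂ) (N := Ku)]
    exact hζ
  set cu : Ku := ⟨X.coeff g₀, hXg₀Ku⟩ with hcudef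
  have hcuk : cu ^ k = 1 := by
    apply Subtype.ext
    push_cast
    exact hXg₀pow
  have hfin : IsOfFinOrder cu := isOfFinOrder_iff_pow_eq_one.mpr ⟨k, hk0, hcuk⟩
  haveI : NeZero u := ⟨hu.ne'⟩
  rcases Nat.even_or_odd u with hue | huo
  · -- u even: the order of cu divides u, so cu is a power of ζu
    set l := orderOf cu with hl
    have hl0 : l ≠ 0 := (hfin.orderOf_pos).ne'
    have hlprim : IsPrimitiveRoot cu l := IsPrimitiveRoot.orderOf cu
    have hl2u : l ∣ 2 * u :=
      IsPrimitiveRoot.dvd_of_isCyclotomicExtension u hlprim hl0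
    have hlu : l ∣ u := by
      by_contra hnd
      set d := Nat.lcm l u with hd
      have hud : u ∣ d := Nat.dvd_lcm_right _ _
      have hd2u : d ∣ 2 * u := Nat.lcm_dvd hl2u (dvd_mul_left u 2)
      have hd0 : 0 < d := Nat.lcm_pos (Nat.pos_of_ne_zero hl0) hu
      have hdeq : d = 2 * u := by
        obtain ⟨t, ht⟩ := hud
        have ht2 : t ∣ 2 := by
          have h5 : u * t ∣ u * 2 := by rw [← ht, mul_comm u 2]; exact hd2u
          exact (mul_dvd_mul_iff_left hu.ne').mp h5
        rcases (Nat.dvd_prime Nat.prime_two).mp ht2 with rfl | rfl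
        · exfalso
          apply hnd
          rw [mul_one] at ht
          have h6 : l ∣ d := Nat.dvd_lcm_left l u
          rwa [ht] at h6
        · omega
      have hkey := IsPrimitiveRoot.lcm_totient_le_finrank hlprim hζu
        (Polynomial.cyclotomic.irreducible_rat hd0)
      rw [IsCyclotomicExtension.finrank (n := u) Ku
        (Polynomial.cyclotomic.irreducible_rat hu)] at hkey
      rw [show Nat.lcm l u = d from rfl, hdeq,
        Nat.totient_mul_of_prime_of_dvd Nat.prime_two hue.two_dvd] at hkey
      have htpos : 0 < Nat.totient u := Nat.totient_pos.mpr hu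
      have hkey' : 2 * Nat.totient u ≤ Nat.totient u := hkey
      omega
    have hcuu : cu ^ u = 1 := orderOf_dvd_iff_pow_eq_one.mp hlu
    have hXu : (X.coeff g₀) ^ u = 1 := by
      have := congrArg (algebraMap Ku ℂ) hcuu
      rw [map_pow, map_one] at this
      exact this
    obtain ⟨i, -, hi⟩ := hζ.eq_pow_of_pow_eq_one hXu
    refine ⟨g₀, (i : ℤ), 1, Or.inl rfl, ?_⟩
    rw [hXsingle, ← hi, one_mul, zpow_natCast]
  · -- u odd
    obtain ⟨r, -, hcases⟩ :=
      IsPrimitiveRoot.exists_pow_or_neg_mul_pow_of_isOfFinOrder (n := u)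
        (by exact huo) hζu hfin
    rcases hcases with hcc | hcc
    · refine ⟨g₀, (r : ℤ), 1, Or.inl rfl, ?_⟩
      have : X.coeff g₀ = ζ ^ r := by
        have := congrArg (algebraMap Ku ℂ) hcc
        rw [map_pow] at this
        exact this
      rw [hXsingle, this, one_mul, zpow_natCast]
    · refine ⟨g₀, (r : ℤ), -1, Or.inr rfl, ?_⟩
      have : X.coeff g₀ = -ζ ^ r := by
        have := congrArg (algebraMap Ku ℂ) hcc
        rw [map_neg, map_pow] at this
        exact this
      rw [hXsingle, this, zpow_natCast]
      ring_nf
end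

section
/- An algebraic integer all of whose Galois conjugates (over $\mathbb{Q}$) have absolute value equal to $1$ is a root of unity. -/
open IntermediateField in

/-- Kronecker's theorem: an algebraic integer all of whose conjugates over `ℚ`
have absolute value `1` is a root of unity. -/
theorem kronecker_root_of_unity (α : ℂ) (hint : IsIntegral ℤ α)
    (habs : ∀ z : ℂ, Polynomial.aeval z (minpoly ℚ α) = 0 → ‖z‖ = 1) :
    ∃ n : ℕ, 0 < n ∧ α ^ n = 1 := by
  have hQ : IsIntegral ℚ α := hint.tower_top
  let K : IntermediateField ℚ ℂ := ℚ⟮α⟯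
  have : FiniteDimensional ℚ K := IntermediateField.adjoin.finiteDimensional hQ
  have : NumberField K := ⟨⟩
  set x : K := IntermediateField.AdjoinSimple.gen ℚ α with hx
  have hcoe : (algebraMap K ℂ) x = α := rfl
  have hmin : minpoly ℚ x = minpoly ℚ α := by
    rw [← hcoe, minpoly.algebraMap_eq (algebraMap K ℂ).injective]
  have hxi : IsIntegral ℤ x := by
    obtain ⟨p, hp, hp0⟩ := hint
    refine ⟨p, hp, ?_⟩
    have : (algebraMap K ℂ) (Polynomial.aeval x p) = 0 := by
      rw [← Polynomial.aeval_algebraMap_apply, hcoe]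
      exact hp0
    exact (map_eq_zero_iff _ (algebraMap K ℂ).injective).mp this
  have hnorm : ∀ φ : K →+* ℂ, ‖φ x‖ = 1 := by
    intro φ
    have : Polynomial.aeval (φ x) (minpoly ℚ α) = 0 := by
      rw [← hmin]
      show Polynomial.aeval (φ.toRatAlgHom x) (minpoly ℚ x) = 0
      rw [Polynomial.aeval_algHom_apply, minpoly.aeval, map_zero]
    simpa using habs (φ x) this
  obtain ⟨n, hn, hpow⟩ := NumberField.Embeddings.pow_eq_one_of_norm_eq_one K ℂ hxi hnorm
  refine ⟨n, hn, ?_⟩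
  have := congrArg (algebraMap K ℂ) hpow
  rwa [map_pow, hcoe, map_one] at this
end

section
/- Let $u = \prod_{i=1}^{\delta} q_i^{a_i}$ be the prime factorization of $u$. Then the set $B = \{ \prod_{i=1}^{\delta} \zeta_{q_i}^{k_i} \zeta_{q_i^{a_i}}^{l_i} : 0 \le k_i \le q_i - 2,\ 0 \le l_i \le q_i^{a_i - 1} - 1 \}$ is an integral basis of $\mathbb{Q}(\zeta_u)$ over $\mathbb{Q}$. Moreover, if $X = \sum_{j=0}^{u-1} b_j \zeta_u^j$ with all $|b_j| \le C$, and $X = \sum_{x \in B} c_x x$ is its representation in the basis $B$, then $|c_x| \le 2^{\delta} C$ for all $x \in B$. -/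
open Complex

/-- The primitive `m`-th root of unity `e^{2πi/m}`. -/
noncomputable def zeta (m : ℕ) : ℂ := Complex.exp (2 * Real.pi * Complex.I / m)

/-- The integral basis of `ℚ(ζ_u)` described in Result 2.9: for each prime power
`q^a ∥ u`, exponents `0 ≤ k ≤ q-2` for `ζ_q` and `0 ≤ l ≤ q^{a-1}-1` for `ζ_{q^a}`. -/
noncomputable def basisElt (u : ℕ)
    (f : (q : u.primeFactors) → Fin ((q : ℕ) - 1) × Fin ((q : ℕ) ^ (u.factorization q - 1))) :
    ℂ :=
  ∏ q : u.primeFactors,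
    zeta (q : ℕ) ^ (((f q).1 : ℕ)) * zeta ((q : ℕ) ^ u.factorization q) ^ (((f q).2 : ℕ))

namespace R29

/-- Expansion coefficient of `η^m` (η a primitive q^a-th root) in the basis
`η^{k q^{a-1} + l}`, `k < q-1`, `l < q^{a-1}`. -/
def D (q a m : ℕ) (kl : Fin (q - 1) × Fin (q ^ (a - 1))) : ℤ :=
  if (m % q ^ a) / q ^ (a - 1) = q - 1 then
    (if (kl.2 : ℕ) = (m % q ^ a) % q ^ (a - 1) then -1 else 0)
  else if (kl.1 : ℕ) = (m % q ^ a) / q ^ (a - 1) ∧ (kl.2 : ℕ) = (m % q ^ a) % q ^ (a - 1)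
    then 1 else 0

lemma abs_D_le (q a m : ℕ) (kl : Fin (q - 1) × Fin (q ^ (a - 1))) : |D q a m kl| ≤ 1 := by
  unfold D; split_ifs <;> simp

lemma D_ne_zero {q a m : ℕ} {kl : Fin (q - 1) × Fin (q ^ (a - 1))} (h : D q a m kl ≠ 0) :
    m % q ^ a = (kl.1 : ℕ) * q ^ (a - 1) + (kl.2 : ℕ) ∨
    m % q ^ a = (q - 1) * q ^ (a - 1) + (kl.2 : ℕ) := by
  unfold D at h
  split_ifs at h with h1 h2 h3
  · right
    rw [h2, ← h1, Nat.mul_comm]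
    exact (Nat.div_add_mod _ _).symm
  · exact absurd rfl h
  · left
    rw [h3.1, h3.2, Nat.mul_comm]
    exact (Nat.div_add_mod _ _).symm
  · exact absurd rfl h

/-- Per-prime-power expansion: `η^m` in terms of the basis. -/
lemma pow_eq_sum_D {q a : ℕ} (hq : q.Prime) (ha : 1 ≤ a) {η : ℂ}
    (hη : IsPrimitiveRoot η (q ^ a)) (m : ℕ) :
    η ^ m = ∑ kl : Fin (q - 1) × Fin (q ^ (a - 1)),
      (D q a m kl : ℂ) * η ^ ((kl.1 : ℕ) * q ^ (a - 1) + (kl.2 : ℕ)) := by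
  have hq1 : 1 < q := hq.one_lt
  have hqa : 0 < q ^ a := pow_pos hq.pos a
  have hqa1 : 0 < q ^ (a - 1) := pow_pos hq.pos _
  set s := (m % q ^ a) / q ^ (a - 1) with hs_def
  set l0 := (m % q ^ a) % q ^ (a - 1) with hl0_def
  have hm1 : η ^ m = η ^ (m % q ^ a) := by
    conv_lhs => rw [← Nat.div_add_mod m (q ^ a)]
    rw [pow_add, pow_mul, hη.pow_eq_one, one_pow, one_mul]
  have hsplit : m % q ^ a = s * q ^ (a - 1) + l0 := by
    rw [hs_def, hl0_def, Nat.mul_comm]; exact (Nat.div_add_mod _ _).symm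
  have hl0 : l0 < q ^ (a - 1) := Nat.mod_lt _ hqa1
  have hpow : q ^ (a - 1) * q = q ^ a := by
    rw [← pow_succ, Nat.sub_add_cancel ha]
  have hs : s < q := by
    rw [hs_def, Nat.div_lt_iff_lt_mul hqa1, Nat.mul_comm q (q ^ (a - 1)), hpow]
    exact Nat.mod_lt _ hqa
  by_cases hcase : s = q - 1
  · -- top case: use vanishing geometric sum
    have hθ : IsPrimitiveRoot (η ^ (q ^ (a - 1))) q := by
      exact hη.pow hqa hpow.symm
    have hgeom : ∑ k ∈ Finset.range q, (η ^ (q ^ (a - 1))) ^ k = 0 :=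
      hθ.geom_sum_eq_zero hq1
    have hsum : ∑ kl : Fin (q - 1) × Fin (q ^ (a - 1)),
        (D q a m kl : ℂ) * η ^ ((kl.1 : ℕ) * q ^ (a - 1) + (kl.2 : ℕ)) =
        ∑ k : Fin (q - 1), -(η ^ ((k : ℕ) * q ^ (a - 1) + l0)) := by
      rw [Fintype.sum_prod_type]
      refine Finset.sum_congr rfl fun k _ => ?_
      rw [Finset.sum_eq_single (⟨l0, hl0⟩ : Fin (q ^ (a - 1)))]
      · simp [D, hcase, ← hs_def, ← hl0_def]
      · intro l _ hl
        have : (l : ℕ) ≠ l0 := by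
          intro h; exact hl (Fin.ext h)
        simp [D, hcase, ← hs_def, ← hl0_def, this]
      · intro h; exact absurd (Finset.mem_univ _) h
    rw [hm1, hsplit, hcase, hsum]
    have hrange : ∑ k : Fin (q - 1), -(η ^ ((k : ℕ) * q ^ (a - 1) + l0)) =
        -∑ k ∈ Finset.range (q - 1), (η ^ (q ^ (a - 1))) ^ k * η ^ l0 := by
      rw [← Finset.sum_neg_distrib, ← Fin.sum_univ_eq_sum_range]
      refine Finset.sum_congr rfl fun k _ => ?_
      rw [← pow_mul, ← pow_add, mul_comm (q ^ (a-1)) (k : ℕ)]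
    rw [hrange, ← Finset.sum_mul]
    have hq' : q - 1 + 1 = q := by omega
    have key : ∑ k ∈ Finset.range (q - 1), (η ^ (q ^ (a - 1))) ^ k +
        (η ^ (q ^ (a - 1))) ^ (q - 1) = 0 := by
      rw [← Finset.sum_range_succ, hq']; exact hgeom
    have hkey : ∑ k ∈ Finset.range (q - 1), (η ^ (q ^ (a - 1))) ^ k =
        -((η ^ (q ^ (a - 1))) ^ (q - 1)) := by linear_combination key
    rw [hkey, pow_add, mul_comm (q - 1), pow_mul]
    ring
  · -- generic case: sum collapses to a single term
    have hs' : s < q - 1 := by omega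
    rw [Finset.sum_eq_single (⟨⟨s, hs'⟩, ⟨l0, hl0⟩⟩ : Fin (q - 1) × Fin (q ^ (a - 1)))]
    · have hD : D q a m ⟨⟨s, hs'⟩, ⟨l0, hl0⟩⟩ = 1 := by
        simp [D, ← hs_def, ← hl0_def, hcase]
      rw [hD, hm1, hsplit]; push_cast; ring
    · intro kl _ hkl
      have : ¬((kl.1 : ℕ) = s ∧ (kl.2 : ℕ) = l0) := by
        rintro ⟨h1, h2⟩
        exact hkl (Prod.ext (Fin.ext h1) (Fin.ext h2))
      simp [D, ← hs_def, ← hl0_def, hcase, this]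
    · intro h; exact absurd (Finset.mem_univ _) h


/-! ### Arithmetic layer -/

abbrev Idx (u : ℕ) := (q : u.primeFactors) → Fin ((q : ℕ) - 1) × Fin ((q : ℕ) ^ (u.factorization q - 1))

def pp (u q : ℕ) : ℕ := q ^ u.factorization q
def vv (u q : ℕ) : ℕ := u / pp u q
noncomputable def ww (u q : ℕ) : ℕ := ZMod.val (((vv u q : ZMod (pp u q)))⁻¹)
noncomputable def mm (u j q : ℕ) : ℕ := (j * ww u q) % pp u q

section facts
variable {u q : ℕ} (hu : 0 < u) (hq : q ∈ u.primeFactors)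
include hu hq

lemma hqprime : q.Prime := (Nat.mem_primeFactors.1 hq).1
lemma ha1 : 1 ≤ u.factorization q :=
  (Nat.Prime.factorization_pos_of_dvd (hqprime hu hq) hu.ne' (Nat.mem_primeFactors.1 hq).2.1)
lemma hpp_dvd : pp u q ∣ u := Nat.ordProj_dvd u q
lemma hpp_pos : 0 < pp u q := pow_pos (hqprime hu hq).pos _
lemma hpp_one_lt : 1 < pp u q :=
  Nat.one_lt_pow (by have := ha1 hu hq; omega) (hqprime hu hq).one_lt
lemma hvv_pp : vv u q * pp u q = u := Nat.div_mul_cancel (hpp_dvd hu hq)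
lemma hco : Nat.Coprime (vv u q) (pp u q) :=
  (((Nat.coprime_ordCompl (hqprime hu hq) hu.ne').pow_left _).symm)

lemma hvw : vv u q * ww u q ≡ 1 [MOD pp u q] := by
  haveI : NeZero (pp u q) := ⟨(hpp_pos hu hq).ne'⟩
  rw [← ZMod.natCast_eq_natCast_iff]
  push_cast
  rw [ww, ZMod.natCast_val, ZMod.cast_id]
  exact ZMod.coe_mul_inv_eq_one _ (hco hu hq)

lemma mm_lt : ∀ j, mm u j q < pp u q := fun j => Nat.mod_lt _ (hpp_pos hu hq)

end facts

/-- CRT: congruence modulo every maximal prime power divisor gives congruence mod `u`. -/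
lemma modEq_of_forall_pp {u : ℕ} (hu : 0 < u) {x y : ℕ}
    (h : ∀ q ∈ u.primeFactors, x ≡ y [MOD pp u q]) : x ≡ y [MOD u] := by
  have hprod : ∏ q ∈ u.primeFactors, pp u q = u := by
    conv_rhs => rw [← Nat.factorization_prod_pow_eq_self hu.ne']
    rw [Nat.prod_factorization_eq_prod_primeFactors]
    rfl
  rw [Nat.modEq_iff_dvd, ← hprod]
  push_cast
  refine Finset.prod_dvd_of_coprime ?_ (fun q hq => Nat.modEq_iff_dvd.1 (h q hq))
  intro q hq q' hq' hne
  simp only [Function.onFun]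
  rw [Nat.isCoprime_iff_coprime]
  exact Nat.Coprime.pow _ _ ((Nat.coprime_primes (hqprime hu hq) (hqprime hu hq')).2 hne)

lemma pp_dvd_vv {u : ℕ} (hu : 0 < u) {q q' : ℕ} (hq : q ∈ u.primeFactors)
    (hq' : q' ∈ u.primeFactors) (hne : q' ≠ q) : pp u q' ∣ vv u q := by
  rw [vv, Nat.dvd_div_iff_mul_dvd (hpp_dvd hu hq)]
  refine Nat.Coprime.mul_dvd_of_dvd_of_dvd ?_ (hpp_dvd hu hq) (hpp_dvd hu hq')
  exact Nat.Coprime.pow _ _ ((Nat.coprime_primes (hqprime hu hq) (hqprime hu hq')).2 hne.symm)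

/-- The exponents `mm u j q` reconstruct `j` modulo `u`. -/
lemma sum_mm_modEq {u : ℕ} (hu : 0 < u) (j : ℕ) :
    ∑ q : u.primeFactors, vv u (q : ℕ) * mm u j (q : ℕ) ≡ j [MOD u] := by
  refine modEq_of_forall_pp hu fun q hq => ?_
  set q₀ : u.primeFactors := ⟨q, hq⟩
  rw [← Finset.add_sum_erase _ _ (Finset.mem_univ q₀)]
  have h0 : ∑ x ∈ Finset.univ.erase q₀, vv u (x : ℕ) * mm u j (x : ℕ) ≡ 0 [MOD pp u q] := by
    rw [Nat.modEq_zero_iff_dvd]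
    refine Finset.dvd_sum fun x hx => Dvd.dvd.mul_right ?_ _
    exact pp_dvd_vv hu x.2 hq (fun hcon => (Finset.mem_erase.1 hx).1 (Subtype.ext hcon.symm))
  calc vv u q * mm u j q + ∑ x ∈ Finset.univ.erase q₀, vv u (x : ℕ) * mm u j (x : ℕ)
      ≡ vv u q * mm u j q + 0 [MOD pp u q] := (Nat.ModEq.refl _).add h0
    _ = vv u q * ((j * ww u q) % pp u q) := by rw [add_zero, mm]
    _ ≡ vv u q * (j * ww u q) [MOD pp u q] := (Nat.mod_modEq _ _).mul_left _
    _ = j * (vv u q * ww u q) := by ring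
    _ ≡ j * 1 [MOD pp u q] := (hvw hu hq).mul_left j
    _ = j := by ring

/-- mm determines j mod u. -/
lemma modEq_of_mm_eq {u : ℕ} (hu : 0 < u) {j j' : ℕ}
    (h : ∀ q ∈ u.primeFactors, mm u j q = mm u j' q) : j ≡ j' [MOD u] := by
  refine modEq_of_forall_pp hu fun q hq => ?_
  have h1 : j * ww u q ≡ j' * ww u q [MOD pp u q] := by
    have := h q hq
    unfold mm at this
    calc j * ww u q ≡ (j * ww u q) % pp u q [MOD pp u q] := (Nat.mod_modEq _ _).symm
      _ = (j' * ww u q) % pp u q := this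
      _ ≡ j' * ww u q [MOD pp u q] := Nat.mod_modEq _ _
  have h2 : j * (vv u q * ww u q) ≡ j' * (vv u q * ww u q) [MOD pp u q] := by
    calc j * (vv u q * ww u q) = (j * ww u q) * vv u q := by ring
      _ ≡ (j' * ww u q) * vv u q [MOD pp u q] := h1.mul_right _
      _ = j' * (vv u q * ww u q) := by ring
  calc j = j * 1 := by ring
    _ ≡ j * (vv u q * ww u q) [MOD pp u q] := ((hvw hu hq).symm).mul_left j
    _ ≡ j' * (vv u q * ww u q) [MOD pp u q] := h2
    _ ≡ j' * 1 [MOD pp u q] := (hvw hu hq).mul_left j'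
    _ = j' := by ring

/-! ### Expansion of powers of `zeta u` in the basis -/

noncomputable def coeff (u j : ℕ) (f : Idx u) : ℤ :=
  ∏ q : u.primeFactors, D (q : ℕ) (u.factorization q) (mm u j (q : ℕ)) (f q)

lemma hzeta (u : ℕ) (hu : 0 < u) : IsPrimitiveRoot (zeta u) u := by
  rw [zeta]; exact Complex.isPrimitiveRoot_exp u hu.ne'

lemma zeta_pow_mod {u : ℕ} (hu : 0 < u) {x y : ℕ} (h : x ≡ y [MOD u]) :
    zeta u ^ x = zeta u ^ y := by
  have h1 : ∀ t, zeta u ^ t = zeta u ^ (t % u) := fun t => by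
    conv_lhs => rw [← Nat.div_add_mod t u]
    rw [pow_add, pow_mul, (hzeta u hu).pow_eq_one, one_pow, one_mul]
  rw [h1 x, h1 y]
  exact congrArg (zeta u ^ ·) h

lemma zeta_dvd {u d : ℕ} (hu : 0 < u) (hd : 0 < d) (hdvd : d ∣ u) :
    zeta d = zeta u ^ (u / d) := by
  rw [zeta, zeta, ← Complex.exp_nat_mul]
  congr 1
  have hne : (d : ℂ) ≠ 0 := Nat.cast_ne_zero.2 hd.ne'
  have hne' : (u : ℂ) ≠ 0 := Nat.cast_ne_zero.2 hu.ne'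
  have hcast : ((u / d : ℕ) : ℂ) * d = u := by
    exact_mod_cast congrArg (Nat.cast : ℕ → ℂ) (Nat.div_mul_cancel hdvd)
  field_simp
  rw [← hcast]; ring

/-- `basisElt` as a product of powers of `zeta u ^ vv u q`. -/
lemma basisElt_eq {u : ℕ} (hu : 0 < u) (f : Idx u) :
    basisElt u f = ∏ q : u.primeFactors,
      (zeta u ^ vv u (q : ℕ)) ^ (((f q).1 : ℕ) * (q : ℕ) ^ (u.factorization q - 1)
        + ((f q).2 : ℕ)) := by
  rw [basisElt]
  refine Finset.prod_congr rfl fun q _ => ?_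
  have hq := q.2
  have hqp : (q : ℕ).Prime := hqprime hu hq
  have ha := ha1 hu hq
  have hppu := hpp_dvd hu hq
  have hv := hvv_pp hu hq
  have hudivq : u / (q : ℕ) = vv u (q : ℕ) * (q : ℕ) ^ (u.factorization q - 1) := by
    have h1 : u = (vv u (q : ℕ) * (q : ℕ) ^ (u.factorization q - 1)) * (q : ℕ) := by
      rw [mul_assoc, ← pow_succ, Nat.sub_add_cancel ha]
      exact hv.symm
    exact Nat.div_eq_of_eq_mul_left hqp.pos h1
  have hz1 : zeta (q : ℕ) = zeta u ^ (u / (q : ℕ)) :=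
    zeta_dvd hu hqp.pos (Nat.mem_primeFactors.1 hq).2.1
  have hz2 : zeta ((q : ℕ) ^ u.factorization q) = zeta u ^ vv u (q : ℕ) := by
    have := zeta_dvd hu (hpp_pos hu hq) hppu
    rw [← pp]
    exact this
  rw [hz1, hz2, hudivq]
  simp only [← pow_mul, ← pow_add]
  congr 1
  ring

/-- Key expansion: each power of `zeta u` is an explicit small integer combination
of the basis elements. -/
lemma zeta_pow_eq_sum {u : ℕ} (hu : 0 < u) (j : ℕ) :
    zeta u ^ j = ∑ f : Idx u, (coeff u j f : ℂ) * basisElt u f := by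
  classical
  have step1 : zeta u ^ j = ∏ q : u.primeFactors,
      (zeta u ^ vv u (q : ℕ)) ^ (mm u j (q : ℕ)) := by
    rw [← zeta_pow_mod hu (sum_mm_modEq hu j)]
    rw [← Finset.prod_pow_eq_pow_sum]
    exact Finset.prod_congr rfl fun q _ => (pow_mul _ _ _)
  rw [step1]
  have step2 : ∀ q : u.primeFactors,
      (zeta u ^ vv u (q : ℕ)) ^ (mm u j (q : ℕ)) =
      ∑ kl : Fin ((q : ℕ) - 1) × Fin ((q : ℕ) ^ (u.factorization q - 1)),
        (D (q : ℕ) (u.factorization q) (mm u j (q : ℕ)) kl : ℂ) *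
          (zeta u ^ vv u (q : ℕ)) ^ ((kl.1 : ℕ) * (q : ℕ) ^ (u.factorization q - 1)
            + (kl.2 : ℕ)) := by
    intro q
    have hq := q.2
    refine pow_eq_sum_D (hqprime hu hq) (ha1 hu hq) ?_ _
    refine (hzeta u hu).pow hu ?_
    rw [← pp]
    exact (hvv_pp hu hq).symm
  calc ∏ q : u.primeFactors, (zeta u ^ vv u (q : ℕ)) ^ (mm u j (q : ℕ))
      = ∏ q : u.primeFactors, ∑ kl ∈ Finset.univ,
        (D (q : ℕ) (u.factorization q) (mm u j (q : ℕ)) kl : ℂ) *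
          (zeta u ^ vv u (q : ℕ)) ^ ((kl.1 : ℕ) * (q : ℕ) ^ (u.factorization q - 1)
            + (kl.2 : ℕ)) := Finset.prod_congr rfl fun q _ => step2 q
    _ = ∑ f ∈ Fintype.piFinset (fun _ => Finset.univ), ∏ q : u.primeFactors,
        (D (q : ℕ) (u.factorization q) (mm u j (q : ℕ)) (f q) : ℂ) *
          (zeta u ^ vv u (q : ℕ)) ^ (((f q).1 : ℕ) * (q : ℕ) ^ (u.factorization q - 1)
            + ((f q).2 : ℕ)) := Finset.prod_univ_sum _ _
    _ = ∑ f : Idx u, (coeff u j f : ℂ) * basisElt u f := by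
        rw [Fintype.piFinset_univ]
        refine Finset.sum_congr rfl fun f _ => ?_
        rw [Finset.prod_mul_distrib, coeff, basisElt_eq hu f]
        push_cast
        rfl

/-! ### Spanning, independence, bounds -/

lemma sum_pow_eq {u : ℕ} (hu : 0 < u) (b : Fin u → ℤ) :
    ∑ j, (b j : ℂ) * zeta u ^ (j : ℕ) =
      ∑ f : Idx u, ((∑ j, b j * coeff u (j : ℕ) f : ℤ) : ℂ) * basisElt u f := by
  calc ∑ j, (b j : ℂ) * zeta u ^ (j : ℕ)
      = ∑ j : Fin u, ∑ f : Idx u,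
          (b j : ℂ) * ((coeff u (j : ℕ) f : ℂ) * basisElt u f) := by
        refine Finset.sum_congr rfl fun j _ => ?_
        rw [zeta_pow_eq_sum hu (j : ℕ), Finset.mul_sum]
    _ = ∑ f : Idx u, ∑ j : Fin u,
          (b j : ℂ) * ((coeff u (j : ℕ) f : ℂ) * basisElt u f) := Finset.sum_comm
    _ = _ := by
        refine Finset.sum_congr rfl fun f _ => ?_
        push_cast
        rw [Finset.sum_mul]
        exact Finset.sum_congr rfl fun j _ => by ring

lemma basisElt_mem {u : ℕ} (hu : 0 < u) (f : Idx u) :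
    basisElt u f ∈ Algebra.adjoin ℤ ({zeta u} : Set ℂ) := by
  rw [basisElt_eq hu f]
  exact Subalgebra.prod_mem _ fun q _ => Subalgebra.pow_mem _
    (Subalgebra.pow_mem _ (Algebra.subset_adjoin (Set.mem_singleton _)) _) _

lemma adjoin_le_span {u : ℕ} (hu : 0 < u) {X : ℂ}
    (hX : X ∈ Algebra.adjoin ℤ ({zeta u} : Set ℂ)) :
    X ∈ Submodule.span ℤ (Set.range (basisElt u)) := by
  rw [Algebra.adjoin_singleton_eq_range_aeval] at hX
  obtain ⟨p, rfl⟩ := hX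
  have heval : (Polynomial.aeval (zeta u)).toRingHom p = Polynomial.aeval (zeta u) p := rfl
  rw [heval, Polynomial.aeval_eq_sum_range]
  refine Submodule.sum_mem _ fun i _ => Submodule.smul_mem _ _ ?_
  rw [zeta_pow_eq_sum hu i]
  refine Submodule.sum_mem _ fun f _ => ?_
  rw [← zsmul_eq_mul]
  exact Submodule.smul_mem _ _ (Submodule.subset_span ⟨f, rfl⟩)

lemma cardIdx {u : ℕ} (hu : 0 < u) : Fintype.card (Idx u) = u.totient := by
  rw [Fintype.card_pi]
  simp only [Fintype.card_prod, Fintype.card_fin]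
  calc ∏ q : u.primeFactors, ((q : ℕ) - 1) * (q : ℕ) ^ (u.factorization q - 1)
      = ∏ q ∈ u.primeFactors, (q - 1) * q ^ (u.factorization q - 1) :=
        Finset.prod_coe_sort u.primeFactors (fun q => (q - 1) * q ^ (u.factorization q - 1))
    _ = u.totient := by
        rw [Nat.totient_eq_prod_factorization hu.ne', Finsupp.prod]
        exact Finset.prod_congr rfl fun q _ => mul_comm _ _

noncomputable def L (u : ℕ) : (Idx u → ℤ) →ₗ[ℤ] ℂ :=
  Fintype.linearCombination ℤ (basisElt u)

lemma L_apply (u : ℕ) (c : Idx u → ℤ) :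
    L u c = ∑ f : Idx u, (c f : ℂ) * basisElt u f := by
  rw [L, Fintype.linearCombination_apply]
  exact Finset.sum_congr rfl fun f _ => zsmul_eq_mul _ _

lemma L_injective {u : ℕ} (hu : 0 < u) : Function.Injective (L u) := by
  classical
  set A := Algebra.adjoin ℤ ({zeta u} : Set ℂ) with hA
  have hint : IsIntegral ℤ (zeta u) := (hzeta u hu).isIntegral hu
  let PB : PowerBasis ℤ A := Algebra.adjoin.powerBasis' hint
  have hdim : PB.dim = u.totient := by
    rw [Algebra.adjoin.powerBasis'_dim, ← Polynomial.cyclotomic_eq_minpoly (hzeta u hu) hu,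
      Polynomial.natDegree_cyclotomic]
  have hmem : ∀ c : Idx u → ℤ, L u c ∈ Subalgebra.toSubmodule A := by
    intro c
    rw [Subalgebra.mem_toSubmodule, L_apply]
    refine Subalgebra.sum_mem _ fun f _ => ?_
    rw [← zsmul_eq_mul]
    exact Subalgebra.smul_mem _ (basisElt_mem hu f) _
  let L' : (Idx u → ℤ) →ₗ[ℤ] (Subalgebra.toSubmodule A) :=
    (L u).codRestrict (Subalgebra.toSubmodule A) hmem
  have hsurj : Function.Surjective L' := by
    intro x
    have hx : (x : ℂ) ∈ Submodule.span ℤ (Set.range (basisElt u)) :=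
      adjoin_le_span hu x.2
    rw [Submodule.mem_span_range_iff_exists_fun] at hx
    obtain ⟨c, hc⟩ := hx
    refine ⟨c, Subtype.ext ?_⟩
    show L u c = (x : ℂ)
    rw [L_apply, ← hc]
    exact Finset.sum_congr rfl fun f _ => (zsmul_eq_mul _ _).symm
  have eIdx : Fin PB.dim ≃ Idx u :=
    Fintype.equivOfCardEq (by rw [Fintype.card_fin, hdim, cardIdx hu])
  let e : (Subalgebra.toSubmodule A) ≃ₗ[ℤ] (Idx u → ℤ) := (PB.basis.reindex eIdx).equivFun
  have hg : Function.Surjective (e.toLinearMap ∘ₗ L') :=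
    e.surjective.comp hsurj
  have hinj : Function.Injective (e.toLinearMap ∘ₗ L') :=
    OrzechProperty.injective_of_surjective_endomorphism _ hg
  intro c c' hcc
  apply hinj
  simp only [LinearMap.coe_comp, Function.comp_apply]
  congr 1
  exact Subtype.ext hcc

lemma rep_unique {u : ℕ} (hu : 0 < u) {c c' : Idx u → ℤ}
    (h : ∑ f : Idx u, (c f : ℂ) * basisElt u f = ∑ f : Idx u, (c' f : ℂ) * basisElt u f) :
    c = c' := by
  apply L_injective hu
  rw [L_apply, L_apply]
  exact h

lemma card_coeff_ne_zero {u : ℕ} (hu : 0 < u) (f : Idx u) :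
    (Finset.univ.filter fun j : Fin u => coeff u (j : ℕ) f ≠ 0).card ≤
      2 ^ u.primeFactors.card := by
  classical
  set t : (q : u.primeFactors) → Finset ℕ := fun q =>
    {((f q).1 : ℕ) * (q : ℕ) ^ (u.factorization q - 1) + ((f q).2 : ℕ),
     ((q : ℕ) - 1) * (q : ℕ) ^ (u.factorization q - 1) + ((f q).2 : ℕ)} with ht
  have hmaps : ∀ j ∈ Finset.univ.filter fun j : Fin u => coeff u (j : ℕ) f ≠ 0,
      (fun q : u.primeFactors => mm u (j : ℕ) (q : ℕ)) ∈ Fintype.piFinset t := by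
    intro j hj
    rw [Finset.mem_filter] at hj
    rw [Fintype.mem_piFinset]
    intro q
    have hD : D (q : ℕ) (u.factorization q) (mm u (j : ℕ) (q : ℕ)) (f q) ≠ 0 := by
      intro h0
      exact hj.2 (Finset.prod_eq_zero (Finset.mem_univ q) h0)
    have hd := D_ne_zero hD
    have hlt : mm u (j : ℕ) (q : ℕ) < (q : ℕ) ^ u.factorization q := mm_lt hu q.2 (j : ℕ)
    rw [Nat.mod_eq_of_lt hlt] at hd
    rw [ht]
    rcases hd with hd | hd
    · exact Finset.mem_insert.2 (Or.inl hd)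
    · exact Finset.mem_insert.2 (Or.inr (Finset.mem_singleton.2 hd))
  have hinj : Set.InjOn (fun j : Fin u => fun q : u.primeFactors => mm u (j : ℕ) (q : ℕ))
      (Finset.univ.filter fun j : Fin u => coeff u (j : ℕ) f ≠ 0) := by
    intro j _ j' _ hjj
    have : (j : ℕ) ≡ (j' : ℕ) [MOD u] := by
      refine modEq_of_mm_eq hu fun q hq => ?_
      exact congrFun hjj ⟨q, hq⟩
    have := this
    rw [Nat.ModEq] at this
    rw [Nat.mod_eq_of_lt j.2, Nat.mod_eq_of_lt j'.2] at this
    exact Fin.ext this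
  calc (Finset.univ.filter fun j : Fin u => coeff u (j : ℕ) f ≠ 0).card
      ≤ (Fintype.piFinset t).card := Finset.card_le_card_of_injOn _ hmaps hinj
    _ = ∏ q : u.primeFactors, (t q).card := Fintype.card_piFinset t
    _ ≤ ∏ _q : u.primeFactors, 2 := by
        refine Finset.prod_le_prod' fun q _ => ?_
        rw [ht]
        exact le_trans (Finset.card_insert_le _ _) (by simp)
    _ = 2 ^ u.primeFactors.card := by
        rw [Finset.prod_const, Finset.card_univ, Fintype.card_coe]

lemma coeff_bound {u : ℕ} (hu : 0 < u) (C : ℤ) (b : Fin u → ℤ)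
    (hb : ∀ j, |b j| ≤ C) (f : Idx u) :
    |∑ j : Fin u, b j * coeff u (j : ℕ) f| ≤ 2 ^ u.primeFactors.card * C := by
  classical
  have hC : 0 ≤ C := le_trans (abs_nonneg _) (hb ⟨0, hu⟩)
  have habs : ∀ j : Fin u, |coeff u (j : ℕ) f| ≤ 1 := by
    intro j
    rw [coeff, Finset.abs_prod]
    calc ∏ q : u.primeFactors, |D (q : ℕ) (u.factorization q) (mm u (j : ℕ) (q : ℕ)) (f q)|
        ≤ ∏ _q : u.primeFactors, 1 :=
          Finset.prod_le_prod (fun q _ => abs_nonneg _) (fun q _ => abs_D_le _ _ _ _)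
      _ = 1 := Finset.prod_const_one
  set S := Finset.univ.filter fun j : Fin u => coeff u (j : ℕ) f ≠ 0 with hS
  have h1 : ∑ j : Fin u, b j * coeff u (j : ℕ) f = ∑ j ∈ S, b j * coeff u (j : ℕ) f := by
    refine (Finset.sum_subset (Finset.filter_subset _ _) ?_).symm
    intro j _ hj
    rw [Finset.mem_filter, not_and, not_not] at hj
    rw [hj (Finset.mem_univ j), mul_zero]
  calc |∑ j : Fin u, b j * coeff u (j : ℕ) f| = |∑ j ∈ S, b j * coeff u (j : ℕ) f| := by rw [h1]
    _ ≤ ∑ j ∈ S, |b j * coeff u (j : ℕ) f| := Finset.abs_sum_le_sum_abs _ _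
    _ ≤ ∑ _j ∈ S, C := by
        refine Finset.sum_le_sum fun j _ => ?_
        rw [abs_mul]
        calc |b j| * |coeff u (j : ℕ) f| ≤ C * 1 :=
              mul_le_mul (hb j) (habs j) (abs_nonneg _) hC
          _ = C := mul_one C
    _ = (S.card : ℤ) * C := by rw [Finset.sum_const, nsmul_eq_mul]
    _ ≤ 2 ^ u.primeFactors.card * C := by
        refine mul_le_mul_of_nonneg_right ?_ hC
        exact_mod_cast card_coeff_ne_zero hu f

end R29

/-- Result 2.9: the family `B` is an integral basis of `ℚ(ζ_u)` over `ℚ`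
(a `ℤ`-basis of `ℤ[ζ_u]`), and if `X = ∑ b_j ζ_u^j` with `|b_j| ≤ C`, then the
coordinates of `X` in the basis `B` are bounded by `2^{δ(u)} C` in absolute value. -/
theorem integral_basis_and_coefficient_bound (u : ℕ) (hu : 0 < u) :
    (∀ f, basisElt u f ∈ Algebra.adjoin ℤ ({zeta u} : Set ℂ)) ∧
    (∀ X ∈ Algebra.adjoin ℤ ({zeta u} : Set ℂ),
      ∃! c : ((q : u.primeFactors) → Fin ((q : ℕ) - 1) ×
          Fin ((q : ℕ) ^ (u.factorization q - 1))) → ℤ,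
        X = ∑ f, (c f : ℂ) * basisElt u f) ∧
    (∀ (C : ℤ) (b : Fin u → ℤ)
        (c : ((q : u.primeFactors) → Fin ((q : ℕ) - 1) ×
          Fin ((q : ℕ) ^ (u.factorization q - 1))) → ℤ),
      (∀ j, |b j| ≤ C) →
      (∑ j, (b j : ℂ) * zeta u ^ (j : ℕ)) = ∑ f, (c f : ℂ) * basisElt u f →
      ∀ f, |c f| ≤ 2 ^ u.primeFactors.card * C) := by
  refine ⟨fun f => R29.basisElt_mem hu f, ?_, ?_⟩
  · intro X hX
    obtain ⟨c, hc⟩ := (Submodule.mem_span_range_iff_exists_fun ℤ).1 (R29.adjoin_le_span hu hX)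
    have hrep : X = ∑ f, (c f : ℂ) * basisElt u f := by
      rw [← hc]
      exact Finset.sum_congr rfl fun f _ => zsmul_eq_mul _ _
    refine ⟨c, hrep, fun c' hc' => ?_⟩
    exact R29.rep_unique hu (hc'.symm.trans hrep)
  · intro C b c hb heq f
    have h2 : ∑ g : R29.Idx u, ((∑ j : Fin u, b j * R29.coeff u (j : ℕ) g : ℤ) : ℂ) *
        basisElt u g = ∑ g : R29.Idx u, (c g : ℂ) * basisElt u g :=
      (R29.sum_pow_eq hu b).symm.trans heq
    have hce : (fun g => ∑ j : Fin u, b j * R29.coeff u (j : ℕ) g) = c :=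
      R29.rep_unique hu h2
    rw [← hce]
    exact R29.coeff_bound hu C b hb f
end

section
/- Let $X \in \mathbb{Z}[\zeta_{2^c}]$ satisfy $|X|^2 = n$. Write $X = \sum_{j=0}^{2^{c-1}-1} c_j \zeta_{2^c}^j$ with integer coefficients $c_j$ (this representation exists and is unique since $\{1, \zeta_{2^c}, \ldots, \zeta_{2^c}^{2^{c-1}-1}\}$ is an integral basis). Then $|c_j| \le \sqrt{n}$ for each $j$. -/
open Polynomial Finset

/-- Key computation: if `ζ^S = -1` and powers `ζ^0,…,ζ^{S-1}` are linearly
independent over `ℚ`, then `|X|² = n` forces `∑ bⱼ² = n`. -/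
lemma aux_sum_sq (S n : ℕ) (hS : 0 < S) (ζ : ℂ) (hζS : ζ ^ S = -1)
    (hlin : ∀ q : Polynomial ℚ, Polynomial.aeval ζ q = 0 → q.degree < (S : ℕ) → q = 0)
    (b : Fin S → ℤ)
    (hnorm : (∑ j, (b j : ℂ) * ζ ^ (j : ℕ)) *
        (starRingEnd ℂ) (∑ j, (b j : ℂ) * ζ ^ (j : ℕ)) = (n : ℂ)) :
    ∑ j, (b j) ^ 2 = (n : ℤ) := by
  have hζN : ζ ^ (2 * S) = 1 := by
    rw [two_mul, pow_add, hζS]; ring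
  have hζne : ζ ≠ 0 := by
    intro h
    rw [h, zero_pow hS.ne'] at hζS
    exact absurd hζS (by norm_num)
  -- conj of powers
  have hnsq : Complex.normSq ζ = 1 := by
    have h1 : (Complex.normSq ζ) ^ (2 * S) = 1 := by
      rw [← map_pow, hζN, map_one]
    have h2 : 0 ≤ Complex.normSq ζ := Complex.normSq_nonneg ζ
    rcases pow_eq_one_iff_cases.mp h1 with h | h | h
    · omega
    · exact h
    · rw [h.1] at h2; linarith
  have hconjpow : ∀ k : Fin S, (starRingEnd ℂ) (ζ ^ (k : ℕ)) = ζ ^ (2 * S - (k : ℕ)) := by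
    intro k
    have hk : (k : ℕ) ≤ 2 * S := by have := k.2; omega
    have h1 : ζ ^ (k : ℕ) * ζ ^ (2 * S - (k : ℕ)) = 1 := by
      rw [← pow_add, Nat.add_sub_cancel' hk, hζN]
    have h2 : ζ ^ (k : ℕ) * (starRingEnd ℂ) (ζ ^ (k : ℕ)) = 1 := by
      rw [Complex.mul_conj, map_pow, hnsq, one_pow, Complex.ofReal_one]
    exact mul_left_cancel₀ (pow_ne_zero _ hζne) (h2.trans h1.symm)
  -- expand hnorm into a double sum
  have hexp : ∑ j : Fin S, ∑ k : Fin S,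
      ((b j * b k : ℤ) : ℂ) * ζ ^ ((j : ℕ) + (2 * S - (k : ℕ))) = (n : ℂ) := by
    rw [← hnorm, map_sum, Finset.sum_mul_sum]
    refine Finset.sum_congr rfl fun j _ => Finset.sum_congr rfl fun k _ => ?_
    rw [map_mul, hconjpow k, map_intCast, pow_add]
    push_cast
    ring
  -- per-term reduction to exponents < S
  set m : Fin S → Fin S → ℕ := fun j k =>
    if (k : ℕ) ≤ (j : ℕ) then (j : ℕ) - k else S + j - k with hm
  set ε : Fin S → Fin S → ℤ := fun j k => if (k : ℕ) ≤ (j : ℕ) then 1 else -1 with hε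
  have hmlt : ∀ j k, m j k < S := by
    intro j k
    have hj := j.2; have hk := k.2
    simp only [hm]
    split <;> omega
  have hterm : ∀ j k : Fin S,
      ζ ^ ((j : ℕ) + (2 * S - (k : ℕ))) = (ε j k : ℂ) * ζ ^ (m j k) := by
    intro j k
    have hj := j.2; have hk := k.2
    simp only [hm, hε]
    by_cases h : (k : ℕ) ≤ (j : ℕ)
    · rw [if_pos h, if_pos h]
      have he : (j : ℕ) + (2 * S - (k : ℕ)) = ((j : ℕ) - k) + 2 * S := by omega
      rw [he, pow_add, hζN, mul_one]
      push_cast; rw [one_mul]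
    · rw [if_neg h, if_neg h]
      have he : (j : ℕ) + (2 * S - (k : ℕ)) = (S + (j : ℕ) - k) + S := by omega
      rw [he, pow_add, hζS]
      push_cast; ring
  -- group by exponent
  set D : ℕ → ℤ := fun t => ∑ j : Fin S, ∑ k : Fin S,
      if m j k = t then ε j k * (b j * b k) else 0 with hD
  have hfiber : ∑ t ∈ Finset.range S, ((D t : ℤ) : ℂ) * ζ ^ t = (n : ℂ) := by
    rw [← hexp]
    have key : ∀ t ∈ Finset.range S, ((D t : ℤ) : ℂ) * ζ ^ t
        = ∑ j : Fin S, ∑ k : Fin S,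
          if m j k = t then (ε j k : ℂ) * ((b j * b k : ℤ) : ℂ) * ζ ^ t else 0 := by
      intro t _
      rw [hD]
      push_cast
      rw [Finset.sum_mul]
      refine Finset.sum_congr rfl fun j _ => ?_
      rw [Finset.sum_mul]
      refine Finset.sum_congr rfl fun k _ => ?_
      split <;> simp
    rw [Finset.sum_congr rfl key, Finset.sum_comm]
    refine Finset.sum_congr rfl fun j _ => ?_
    rw [Finset.sum_comm]
    refine Finset.sum_congr rfl fun k _ => ?_
    rw [Finset.sum_ite_eq (Finset.range S) (m j k)
      (fun t => (ε j k : ℂ) * ((b j * b k : ℤ) : ℂ) * ζ ^ t)]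
    rw [if_pos (Finset.mem_range.mpr (hmlt j k)), hterm j k]
    push_cast; ring
  -- D 0 is the sum of squares
  have hD0 : D 0 = ∑ j, (b j) ^ 2 := by
    rw [hD]
    refine Finset.sum_congr rfl fun j _ => ?_
    rw [Finset.sum_eq_single j]
    · have h1 : m j j = 0 := by simp [hm]
      have h2 : ε j j = 1 := by simp [hε]
      rw [if_pos h1, h2]; ring
    · intro k _ hkj
      have : m j k ≠ 0 := by
        have hj := j.2; have hk := k.2
        have : (k : ℕ) ≠ (j : ℕ) := fun h => hkj (Fin.ext h)
        simp only [hm]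
        split <;> omega
      rw [if_neg this]
    · intro h; exact absurd (Finset.mem_univ j) h
  -- the polynomial argument
  set q : Polynomial ℚ := (∑ t ∈ Finset.range S, Polynomial.C ((D t : ℚ)) * Polynomial.X ^ t)
      - Polynomial.C (n : ℚ) with hq
  have haev : Polynomial.aeval ζ q = 0 := by
    rw [hq, map_sub, map_sum]
    simp only [map_mul, map_pow, Polynomial.aeval_C, Polynomial.aeval_X]
    have : ∀ t, (algebraMap ℚ ℂ) ((D t : ℚ)) = ((D t : ℤ) : ℂ) := by
      intro t; simp
    simp only [this]
    rw [hfiber]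
    simp
  have hdeg : q.degree < (S : ℕ) := by
    rw [hq]
    apply lt_of_le_of_lt (Polynomial.degree_sub_le _ _)
    rw [max_lt_iff]
    constructor
    · apply lt_of_le_of_lt (Polynomial.degree_sum_le _ _)
      rw [Finset.sup_lt_iff (by exact Batteries.compareOfLessAndEq_eq_lt.mp rfl : (⊥ : WithBot ℕ) < (S : ℕ))]
      intro t ht
      apply lt_of_le_of_lt (Polynomial.degree_C_mul_X_pow_le _ _)
      exact_mod_cast Finset.mem_range.mp ht
    · apply lt_of_le_of_lt (Polynomial.degree_C_le)
      exact_mod_cast hS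
  have hq0 : q = 0 := hlin q haev hdeg
  have hcoeff : q.coeff 0 = (D 0 : ℚ) - (n : ℚ) := by
    rw [hq, Polynomial.coeff_sub, Polynomial.coeff_C, Polynomial.finset_sum_coeff]
    simp only [Polynomial.coeff_C_mul, Polynomial.coeff_X_pow]
    rw [Finset.sum_eq_single 0]
    · simp
    · intro t _ ht; simp [ht, (Ne.symm ht)]
    · intro h; exact absurd (Finset.mem_range.mpr hS) h
  rw [hq0, Polynomial.coeff_zero] at hcoeff
  have : (D 0 : ℚ) = (n : ℚ) := by linarith
  rw [← hD0]
  exact_mod_cast this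

/-- If `X ∈ ℤ[ζ_{2^c}]` satisfies `|X|² = n` and `X = ∑ c_j ζ_{2^c}^j` over the
integral basis `{1, ζ, …, ζ^{2^{c-1}-1}}`, then each `|c_j| ≤ √n`. -/
theorem power_of_two_coefficient_bound
    (c n : ℕ) (hc : 1 ≤ c)
    (ζ : ℂ) (hζ : IsPrimitiveRoot ζ (2 ^ c))
    (b : Fin (2 ^ (c - 1)) → ℤ)
    (hnorm : (∑ j, (b j : ℂ) * ζ ^ (j : ℕ)) *
        (starRingEnd ℂ) (∑ j, (b j : ℂ) * ζ ^ (j : ℕ)) = (n : ℂ)) :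
    ∀ j, |(b j : ℝ)| ≤ Real.sqrt n := by
  have hS : 0 < 2 ^ (c - 1) := Nat.pow_pos (by norm_num)
  have hNS : 2 ^ c = 2 ^ (c - 1) * 2 := by
    rw [← pow_succ]; congr 1; omega
  have hζS : ζ ^ (2 ^ (c - 1)) = -1 :=
    IsPrimitiveRoot.eq_neg_one_of_two_right
      (hζ.pow (Nat.pow_pos (by norm_num)) hNS)
  have hlin : ∀ q : Polynomial ℚ, Polynomial.aeval ζ q = 0 →
      q.degree < ((2 ^ (c - 1) : ℕ) : ℕ) → q = 0 := by
    intro q haev hdeg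
    by_contra hne
    have hmin := minpoly.degree_le_of_ne_zero ℚ ζ hne haev
    have hcyc : Polynomial.cyclotomic (2 ^ c) ℚ = minpoly ℚ ζ :=
      Polynomial.cyclotomic_eq_minpoly_rat hζ (Nat.pow_pos (by norm_num))
    have hdm : (minpoly ℚ ζ).natDegree = 2 ^ (c - 1) := by
      rw [← hcyc, Polynomial.natDegree_cyclotomic, Nat.totient_prime_pow Nat.prime_two hc]
      simp
    have hmne : minpoly ℚ ζ ≠ 0 := by
      rw [← hcyc]
      exact Polynomial.cyclotomic_ne_zero _ ℚ
    rw [Polynomial.degree_eq_natDegree hmne, hdm] at hmin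
    exact absurd (lt_of_le_of_lt hmin hdeg) (lt_irrefl _)
  have hsum : ∑ j, (b j) ^ 2 = (n : ℤ) :=
    aux_sum_sq (2 ^ (c - 1)) n hS ζ hζS hlin b hnorm
  intro j
  have h1 : (b j) ^ 2 ≤ (n : ℤ) := by
    rw [← hsum]
    exact Finset.single_le_sum (fun i _ => sq_nonneg (b i)) (Finset.mem_univ j)
  have h2 : ((b j : ℝ)) ^ 2 ≤ (n : ℝ) := by exact_mod_cast h1
  calc |(b j : ℝ)| = Real.sqrt ((b j : ℝ) ^ 2) := (Real.sqrt_sq_eq_abs _).symm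
    _ ≤ Real.sqrt n := Real.sqrt_le_sqrt h2
end

section
/- Let $G$ be a finite abelian group, $u$ a positive integer, $X \in \mathbb{Z}[\zeta_u][G]$, and $t$ an integer coprime to $u \cdot \exp(G)$ with $X^{(t)} = \pm \zeta_u^e g X$ for some $g \in G$, $e \in \mathbb{Z}$. If $\gcd(t-1, \mathrm{lcm}(u, \exp(G))) = 1$, then there exists a translate $Y = \zeta_u^f h X$ (for some integer $f$ and $h \in G$) such that $Y^{(t)} = \pm Y$. -/
/-- If `t` is a multiplier of `X ∈ ℤ[ζ_u][G]` (so `X⁽ᵗ⁾ = ± ζ_u^e g X`) and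
`gcd(t-1, lcm(u, exp G)) = 1`, then some translate `Y = ζ_u^f h X` satisfies
`Y⁽ᵗ⁾ = ± Y` (note `Y⁽ᵗ⁾ = ζ_u^{tf} h^t X⁽ᵗ⁾`). -/
theorem multiplier_fixed_translate
    (G : Type) [CommGroup G] [Fintype G]
    (u : ℕ) (t : ℤ) (hu : 0 < u)
    (htcop : Int.gcd t (u * Monoid.exponent G) = 1)
    (ζ : ℂ) (hζ : IsPrimitiveRoot ζ u)
    (σ : Algebra.adjoin ℤ ({ζ} : Set ℂ) →+* Algebra.adjoin ℤ ({ζ} : Set ℂ))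
    (hσ : (σ ⟨ζ, Algebra.self_mem_adjoin_singleton ℤ ζ⟩ : ℂ) = ζ ^ t)
    (cX : G → Algebra.adjoin ℤ ({ζ} : Set ℂ))
    (X : MonoidAlgebra ℂ G) (hXdef : X = ∑ g : G, MonoidAlgebra.single g (cX g : ℂ))
    (hmult : ∃ (g : G) (e : ℤ) (ε : ℂ), (ε = 1 ∨ ε = -1) ∧
      (∑ g' : G, MonoidAlgebra.single (g' ^ t) ((σ (cX g') : ℂ)))
        = MonoidAlgebra.single g (ε * ζ ^ e) * X)
    (hgcd : Int.gcd (t - 1) (Nat.lcm u (Monoid.exponent G)) = 1) :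
    ∃ (f : ℤ) (h : G) (ε' : ℂ), (ε' = 1 ∨ ε' = -1) ∧
      MonoidAlgebra.single (h ^ t) (ζ ^ (t * f)) *
          (∑ g' : G, MonoidAlgebra.single (g' ^ t) ((σ (cX g') : ℂ)))
        = ε' • (MonoidAlgebra.single h (ζ ^ f) * X) := by
  obtain ⟨g, e, ε, hε, heq⟩ := hmult
  have hne : ζ ≠ 0 := hζ.ne_zero hu.ne'
  have hcop : IsCoprime (t - 1) ((Nat.lcm u (Monoid.exponent G) : ℤ)) :=
    Int.isCoprime_iff_gcd_eq_one.mpr hgcd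
  have hcopu : IsCoprime (t - 1) (u : ℤ) :=
    hcop.of_isCoprime_of_dvd_right (Int.natCast_dvd_natCast.mpr (Nat.dvd_lcm_left _ _))
  have hcopE : IsCoprime (t - 1) ((Monoid.exponent G : ℤ)) :=
    hcop.of_isCoprime_of_dvd_right (Int.natCast_dvd_natCast.mpr (Nat.dvd_lcm_right _ _))
  obtain ⟨a, b, hab⟩ := hcopu
  obtain ⟨c, d, hcd⟩ := hcopE
  refine ⟨-e * a, g⁻¹ ^ c, ε, hε, ?_⟩
  have hkE : (g⁻¹ : G) ^ ((Monoid.exponent G : ℤ)) = 1 := by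
    rw [zpow_natCast]; exact Monoid.pow_exponent_eq_one _
  have hk1 : (g⁻¹ : G) ^ (c * (t - 1)) = g⁻¹ := by
    have hex : c * (t - 1) = 1 - (Monoid.exponent G : ℤ) * d := by linarith
    rw [hex, zpow_sub, zpow_one, zpow_mul, hkE, one_zpow, inv_one, mul_one]
  have hgrp : (g⁻¹ ^ c) ^ t * g = g⁻¹ ^ c := by
    rw [← zpow_mul]
    have hct : c * t = c * (t - 1) + c := by ring
    rw [hct, zpow_add, hk1, mul_comm g⁻¹, mul_assoc, inv_mul_cancel, mul_one]
  have hzu : ζ ^ ((u : ℤ)) = 1 := by rw [zpow_natCast]; exact hζ.pow_eq_one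
  have hcoef : ζ ^ (t * (-e * a)) * (ε * ζ ^ e) = ε * ζ ^ (-e * a) := by
    have h1 : t * (-e * a) + e = (-e * a) + (u : ℤ) * (e * b) := by
      linear_combination (-e) * hab
    calc ζ ^ (t * (-e * a)) * (ε * ζ ^ e)
        = ε * (ζ ^ (t * (-e * a)) * ζ ^ e) := by ring
      _ = ε * ζ ^ (t * (-e * a) + e) := by rw [zpow_add₀ hne]
      _ = ε * (ζ ^ (-e * a) * (ζ ^ (u : ℤ)) ^ (e * b)) := by
          rw [h1, zpow_add₀ hne, zpow_mul ζ (u : ℤ) (e * b)]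
      _ = ε * ζ ^ (-e * a) := by rw [hzu, one_zpow, mul_one]
  rw [heq, ← mul_assoc, MonoidAlgebra.single_mul_single, hgrp, hcoef,
    ← smul_mul_assoc, MonoidAlgebra.smul_single']
end

section
/- Let $p$ be an odd prime, $u$ a positive integer coprime to $p$, and $V$ a finite abelian $p$-group. Let $X \in \mathbb{Z}[\zeta_u][V]$ with $X X^{(-1)} = k^2$ for a positive integer $k$ coprime to $p$. Suppose $t$ is a multiplier of $X$ with $t \equiv 1 \pmod u$, i.e., $X^{(t)} = \pm \zeta_u^e g X$ for some $g \in V$ and integer $e$. Then some translate $Y$ of $X$ satisfies $Y^{(t)} = Y$. -/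
open MonoidAlgebra

private lemma sum_single_eq_self {V : Type} [Group V] [Fintype V]
    (Y : MonoidAlgebra ℂ V) :
    ∑ g : V, MonoidAlgebra.single g (Y.coeff g) = Y := by
  classical
  ext a
  rw [MonoidAlgebra.coeff_sum, Finset.sum_apply']
  simp [MonoidAlgebra.coeff_single, Finsupp.single_apply]

/-- If `V` is an abelian `p`-group (`p` odd), `X ∈ ℤ[ζ_u][V]` with `X X⁽⁻¹⁾ = k²`,
`gcd(k,p) = gcd(u,p) = 1`, and `t ≡ 1 (mod u)` is a multiplier of `X`, then some
translate `Y` of `X` satisfies `Y⁽ᵗ⁾ = Y`.  (Since `t ≡ 1 (mod u)`, `σ_t` is trivial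
on the coefficients and `Y⁽ᵗ⁾ = ∑_g Y_g g^t`.) -/
theorem multiplier_exactly_fixed_translate
    (p u k : ℕ) (hp : p.Prime) (hpodd : Odd p)
    (hu : 0 < u) (hup : Nat.Coprime u p) (hk : 0 < k) (hkp : Nat.Coprime k p)
    (V : Type) [CommGroup V] [Fintype V] (hV : IsPGroup p V)
    (ζ : ℂ) (hζ : IsPrimitiveRoot ζ u)
    (X : MonoidAlgebra ℂ V)
    (hcoef : ∀ g : V, X.coeff g ∈ Algebra.adjoin ℤ ({ζ} : Set ℂ))
    (t : ℤ) (ht1 : (t : ZMod u) = 1)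
    (hXX : X * (∑ g : V, MonoidAlgebra.single g⁻¹ ((starRingEnd ℂ) (X.coeff g)))
      = ((k : MonoidAlgebra ℂ V)) ^ 2)
    (hmult : ∃ (g : V) (e : ℤ) (ε : ℂ), (ε = 1 ∨ ε = -1) ∧
      (∑ g' : V, MonoidAlgebra.single (g' ^ t) (X.coeff g'))
        = MonoidAlgebra.single g (ε * ζ ^ e) * X) :
    ∃ (h : V) (f : ℤ) (ε : ℂ), (ε = 1 ∨ ε = -1) ∧
      (∑ g : V, MonoidAlgebra.single (g ^ t)
          ((MonoidAlgebra.single h (ε * ζ ^ f) * X).coeff g))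
        = MonoidAlgebra.single h (ε * ζ ^ f) * X := by
  classical
  obtain ⟨g₀, e, ε, hε, hXt⟩ := hmult
  set w : ℂ := ε * ζ ^ e with hw
  set Z : MonoidAlgebra ℂ V :=
    ∑ g : V, MonoidAlgebra.single g⁻¹ ((starRingEnd ℂ) (X.coeff g)) with hZ
  -- the augmentation map
  set aug : MonoidAlgebra ℂ V →ₐ[ℂ] ℂ := (MonoidAlgebra.lift ℂ ℂ V) 1 with haug
  have aug_single : ∀ (a : V) (c : ℂ), aug (MonoidAlgebra.single a c) = c := by
    intro a c
    simp [haug, MonoidAlgebra.lift_single]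
  have augX : aug X = ∑ g : V, X.coeff g := by
    conv_lhs => rw [← sum_single_eq_self X]
    rw [map_sum]
    simp [aug_single]
  have augZ : aug Z = (starRingEnd ℂ) (∑ g : V, X.coeff g) := by
    rw [hZ, map_sum, map_sum]
    simp [aug_single]
  have hne : (∑ g : V, X.coeff g) ≠ 0 := by
    intro h0
    have := congrArg aug hXX
    rw [map_mul, augX, augZ, h0, map_zero, mul_zero] at this
    rw [map_pow, map_natCast] at this
    have h6 : (k : ℂ) = 0 := by
      have := this.symm
      simpa using pow_eq_zero_iff (n := 2) (by norm_num) |>.mp this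
    rw [Nat.cast_eq_zero] at h6
    omega
  -- w = 1
  have hw1 : w = 1 := by
    have := congrArg aug hXt
    rw [map_sum, map_mul, aug_single, augX] at this
    simp only [aug_single] at this
    have h5 : (w - 1) * (∑ g : V, X.coeff g) = 0 := by linear_combination -this
    rcases mul_eq_zero.mp h5 with h | h
    · exact sub_eq_zero.mp h
    · exact absurd h hne
  -- quotient by the subgroup of (t-1)-th powers
  set H : Subgroup V := (zpowGroupHom (t - 1) : V →* V).range with hH
  set π : V →* V ⧸ H := QuotientGroup.mk' H with hπdef
  have hπpow : ∀ g : V, π g ^ t = π g := by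
    intro g
    have h1 : π g ^ (t - 1) = 1 := by
      rw [← map_zpow]
      exact (QuotientGroup.eq_one_iff _).mpr ⟨g, rfl⟩
    have : π g ^ t = π g ^ (t - 1) * π g ^ (1 : ℤ) := by
      rw [← zpow_add]; norm_num
    rw [this, h1, one_mul, zpow_one]
  set φ : MonoidAlgebra ℂ V →+* MonoidAlgebra ℂ (V ⧸ H) :=
    MonoidAlgebra.mapDomainRingHom ℂ π with hφdef
  have φ_single : ∀ (a : V) (c : ℂ),
      φ (MonoidAlgebra.single a c) = MonoidAlgebra.single (π a) c := by
    intro a c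
    simp [hφdef, Finsupp.mapDomain_single]
  have hφX : φ X = ∑ g : V, MonoidAlgebra.single (π g) (X.coeff g) := by
    conv_lhs => rw [← sum_single_eq_self X]
    rw [map_sum]
    simp [φ_single]
  -- φ applied to the multiplier equation
  have key : MonoidAlgebra.single (π g₀) (1 : ℂ) * φ X = φ X := by
    have := congrArg φ hXt
    rw [map_sum, map_mul, φ_single] at this
    simp only [φ_single, map_zpow, hπpow] at this
    rw [← hφX, hw1] at this
    exact this.symm
  -- φ X is invertible, hence π g₀ = 1
  have hkC : ((k : ℂ)) ^ 2 ≠ 0 := by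
    exact pow_ne_zero 2 (Nat.cast_ne_zero.mpr (by omega))
  have hπg₀ : π g₀ = 1 := by
    have hXZ : φ X * φ Z = ((k : MonoidAlgebra ℂ (V ⧸ H))) ^ 2 := by
      rw [← map_mul, hXX]
      have : ((k : MonoidAlgebra ℂ V)) ^ 2 = ((k ^ 2 : ℕ) : MonoidAlgebra ℂ V) := by
        push_cast; ring
      rw [this, map_natCast]; push_cast; ring
    have h2 : MonoidAlgebra.single (π g₀) (1 : ℂ)
        * ((k : MonoidAlgebra ℂ (V ⧸ H))) ^ 2
        = ((k : MonoidAlgebra ℂ (V ⧸ H))) ^ 2 := by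
      rw [← hXZ, ← mul_assoc, key]
    have hkW : ((k : MonoidAlgebra ℂ (V ⧸ H))) ^ 2
        = MonoidAlgebra.single (1 : V ⧸ H) ((k : ℂ) ^ 2) := by
      have : ((k : MonoidAlgebra ℂ (V ⧸ H))) ^ 2
          = ((k ^ 2 : ℕ) : MonoidAlgebra ℂ (V ⧸ H)) := by push_cast; ring
      rw [this, MonoidAlgebra.natCast_def]; push_cast; ring_nf
    rw [hkW, MonoidAlgebra.single_mul_single, one_mul, mul_one] at h2
    rcases (Finsupp.single_eq_single_iff _ _ _ _).mp (by simpa only [MonoidAlgebra.coeff_single] using congrArg MonoidAlgebra.coeff h2) with ⟨h3, _⟩ | ⟨h3, _⟩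
    · exact h3
    · exact absurd h3 hkC
  -- extract a (t-1)-th root of g₀
  obtain ⟨h₀, hh₀⟩ : g₀ ∈ H := (QuotientGroup.eq_one_iff _).mp hπg₀
  simp only [zpowGroupHom_apply] at hh₀
  -- the fixed translate
  refine ⟨h₀⁻¹, 0, 1, Or.inl rfl, ?_⟩
  have hcoe : (1 : ℂ) * ζ ^ (0 : ℤ) = 1 := by simp
  rw [hcoe]
  have happ : ∀ g : V, (MonoidAlgebra.single h₀⁻¹ (1 : ℂ) * X).coeff g = X.coeff (h₀ * g) := by
    intro g
    rw [MonoidAlgebra.coeff_single_mul_apply, one_mul, inv_inv]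
  calc ∑ g : V, MonoidAlgebra.single (g ^ t)
        ((MonoidAlgebra.single h₀⁻¹ (1 : ℂ) * X).coeff g)
      = ∑ g : V, MonoidAlgebra.single (g ^ t) (X.coeff (h₀ * g)) := by
        simp only [happ]
    _ = ∑ g : V, MonoidAlgebra.single ((h₀⁻¹ * g) ^ t) (X.coeff g) := by
        refine Fintype.sum_equiv (Equiv.mulLeft h₀⁻¹).symm _ _ ?_
        intro g
        simp [mul_assoc]
    _ = ∑ g : V, MonoidAlgebra.single (h₀⁻¹ ^ t) (1 : ℂ)
          * MonoidAlgebra.single (g ^ t) (X.coeff g) := by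
        refine Finset.sum_congr rfl ?_
        intro g _
        rw [MonoidAlgebra.single_mul_single, one_mul, mul_zpow]
    _ = MonoidAlgebra.single (h₀⁻¹ ^ t) (1 : ℂ)
          * ∑ g : V, MonoidAlgebra.single (g ^ t) (X.coeff g) := by
        rw [Finset.mul_sum]
    _ = MonoidAlgebra.single (h₀⁻¹ ^ t) (1 : ℂ)
          * (MonoidAlgebra.single g₀ (1 : ℂ) * X) := by
        rw [hXt, hw1]
    _ = MonoidAlgebra.single (h₀⁻¹ ^ t * g₀) (1 : ℂ) * X := by
        rw [← mul_assoc, MonoidAlgebra.single_mul_single, one_mul]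
    _ = MonoidAlgebra.single h₀⁻¹ (1 : ℂ) * X := by
        congr 2
        have : h₀⁻¹ ^ t = h₀⁻¹ ^ (t - 1) * h₀⁻¹ ^ (1 : ℤ) := by
          rw [← zpow_add]; norm_num
        rw [this, zpow_one, ← hh₀]
        group
end

section
/- There is no circulant weighing matrix $CW(155, 36)$. That is, there is no $D \in \mathbb{Z}[C_{155}]$ with all coefficients in $\{0, \pm 1\}$ satisfying $DD^{(-1)} = 36$. -/
/-- Existence of a circulant weighing matrix `CW(v, n)`: an element `D` of the
integer group ring `ℤ[C_v]` with coefficients in `{0, ±1}` such that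
`D D⁽⁻¹⁾ = n` (n times the identity). -/
def CWExists (v n : ℕ) : Prop :=
  ∃ D : AddMonoidAlgebra ℤ (ZMod v),
    (∀ g : ZMod v, D.coeff g = 0 ∨ D.coeff g = 1 ∨ D.coeff g = -1) ∧
    D * (show AddMonoidAlgebra ℤ (ZMod v) from
        AddMonoidAlgebra.ofCoeff (Finsupp.equivMapDomain (Equiv.neg (ZMod v)) D.coeff))
      = (n : AddMonoidAlgebra ℤ (ZMod v))

open Finsupp Finset

section ConvCoeff

/-- Coefficient formula for `f * g⁽⁻¹⁾` in a group algebra over a finite group. -/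
lemma CW_conv_coeff {A : Type*} [AddCommGroup A] [Fintype A] [DecidableEq A]
    {R : Type*} [CommRing R] (f g : AddMonoidAlgebra R A) (k : A) :
    (f * (show AddMonoidAlgebra R A from
      AddMonoidAlgebra.ofCoeff (Finsupp.equivMapDomain (Equiv.neg A) g.coeff))).coeff k
      = ∑ x : A, f.coeff x * g.coeff (x - k) := by
  rw [AddMonoidAlgebra.coeff_mul, AddMonoidAlgebra.coeff_ofCoeff]
  rw [Finsupp.sum_fintype _ _ (by intro i; simp)]
  refine Finset.sum_congr rfl fun a _ => ?_
  rw [Finsupp.sum_fintype _ _ (by intro i; simp)]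
  have h1 : ∀ a₂ : A, (Finsupp.equivMapDomain (Equiv.neg A) g.coeff) a₂ = g.coeff (-a₂) := by
    intro a₂; simp [Finsupp.equivMapDomain_apply]
  have h2 : ∀ a₂ : A, (if a + a₂ = k then f.coeff a * (Finsupp.equivMapDomain (Equiv.neg A) g.coeff) a₂ else 0)
      = if a₂ = k - a then f.coeff a * g.coeff (a - k) else 0 := by
    intro a₂
    rw [h1]
    rcases eq_or_ne (a + a₂) k with h | h
    · rw [if_pos h, if_pos (by rw [← h]; abel)]
      have : -a₂ = a - k := by rw [← h]; abel
      rw [this]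
    · rw [if_neg h, if_neg (by intro hc; exact h (by rw [hc]; abel))]
  simp only [h2]
  rw [Finset.sum_ite_eq' Finset.univ (k - a) (fun _ => f.coeff a * g.coeff (a - k))]
  simp

end ConvCoeff

section Proj

/-- Reduction mod 31 on `ZMod 155`. -/
abbrev CWpim : ZMod 155 →+* ZMod 31 := ZMod.castHom (by norm_num : (31:ℕ) ∣ 155) (ZMod 31)

lemma CW_fiber_card : ∀ j : ZMod 31,
    (Finset.univ.filter (fun a : ZMod 155 => CWpim a = j)).card = 5 := by decide

/-- Projection of the coefficients to the quotient `C₃₁`. -/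
def CWFp (D : ZMod 155 → ℤ) (j : ZMod 31) : ℤ := ∑ a : ZMod 155, if CWpim a = j then D a else 0

lemma CWFp_auto (D : ZMod 155 → ℤ)
    (hDauto : ∀ k : ZMod 155, ∑ a : ZMod 155, D a * D (a - k) = if k = 0 then 36 else 0) :
    ∀ k : ZMod 31,
    ∑ j : ZMod 31, CWFp D j * CWFp D (j - k) = if k = 0 then 36 else 0 := by
  intro k
  unfold CWFp
  have step1 : ∑ j : ZMod 31, (∑ a : ZMod 155, if CWpim a = j then D a else 0) *
      (∑ b : ZMod 155, if CWpim b = j - k then D b else 0)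
      = ∑ a : ZMod 155, ∑ b : ZMod 155, D a * (if CWpim b = CWpim a - k then D b else 0) := by
    have : ∀ j : ZMod 31, (∑ a : ZMod 155, if CWpim a = j then D a else 0) *
        (∑ b : ZMod 155, if CWpim b = j - k then D b else 0)
        = ∑ a : ZMod 155, ∑ b : ZMod 155,
            (if CWpim a = j then D a else 0) * (if CWpim b = j - k then D b else 0) := by
      intro j; rw [Finset.sum_mul_sum]
    rw [Finset.sum_congr rfl (fun j _ => this j)]
    rw [Finset.sum_comm]
    refine Finset.sum_congr rfl fun a _ => ?_
    rw [Finset.sum_comm]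
    refine Finset.sum_congr rfl fun b _ => ?_
    have : ∀ j : ZMod 31, (if CWpim a = j then D a else 0) * (if CWpim b = j - k then D b else 0)
        = if CWpim a = j then D a * (if CWpim b = j - k then D b else 0) else 0 := by
      intro j; split <;> simp
    rw [Finset.sum_congr rfl (fun j _ => this j), Finset.sum_ite_eq Finset.univ (CWpim a)]
    simp
  rw [step1]
  have step2 : ∀ a : ZMod 155, ∑ b : ZMod 155, D a * (if CWpim b = CWpim a - k then D b else 0)
      = ∑ k' : ZMod 155, if CWpim k' = k then D a * D (a - k') else 0 := by
    intro a
    rw [← Fintype.sum_equiv (Equiv.subLeft a) _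
      (fun b => D a * (if CWpim b = CWpim a - k then D b else 0)) (fun k' => rfl)]
    refine Finset.sum_congr rfl fun k' _ => ?_
    show D a * (if CWpim (a - k') = CWpim a - k then D (a - k') else 0)
        = if CWpim k' = k then D a * D (a - k') else 0
    have hcond : (CWpim (a - k') = CWpim a - k) ↔ (CWpim k' = k) := by
      rw [map_sub, sub_right_inj]
    rw [if_congr hcond rfl rfl, mul_ite, mul_zero]
  rw [Finset.sum_congr rfl (fun a _ => step2 a), Finset.sum_comm]
  have step3 : ∀ k' : ZMod 155, (∑ a : ZMod 155, if CWpim k' = k then D a * D (a - k') else 0)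
      = if k' = 0 then (if k = 0 then (36:ℤ) else 0) else 0 := by
    intro k'
    by_cases hk' : k' = 0
    · subst hk'
      rw [if_pos rfl]
      by_cases hpk : k = 0
      · subst hpk
        rw [if_pos rfl]
        have hterm : ∀ x : ZMod 155,
            (if CWpim (0 : ZMod 155) = (0 : ZMod 31) then D x * D (x - 0) else 0)
              = D x * D (x - 0) := fun x => if_pos (map_zero CWpim)
        rw [Finset.sum_congr rfl (fun x _ => hterm x), hDauto 0, if_pos rfl]
      · rw [if_neg hpk]
        have hc : ¬ (CWpim (0 : ZMod 155) = k) := by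
          rw [map_zero]; exact fun h => hpk h.symm
        rw [Finset.sum_congr rfl (fun x _ => if_neg hc), Finset.sum_const_zero]
    · rw [if_neg hk']
      by_cases hpk : CWpim k' = k
      · rw [Finset.sum_congr rfl (fun x _ => if_pos hpk), hDauto k', if_neg hk']
      · rw [Finset.sum_congr rfl (fun x _ => if_neg hpk), Finset.sum_const_zero]
  rw [Finset.sum_congr rfl (fun k' _ => step3 k')]
  rw [Finset.sum_ite_eq' Finset.univ (0 : ZMod 155) (fun _ => if k = 0 then (36:ℤ) else 0)]
  simp

lemma CWFp_bound (D : ZMod 155 → ℤ) (hDval : ∀ a, D a = 0 ∨ D a = 1 ∨ D a = -1) (j : ZMod 31) :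
    |CWFp D j| ≤ 5 := by
  unfold CWFp
  calc |∑ a : ZMod 155, if CWpim a = j then D a else 0|
      ≤ ∑ a : ZMod 155, |if CWpim a = j then D a else 0| := Finset.abs_sum_le_sum_abs _ _
    _ ≤ ∑ a : ZMod 155, (if CWpim a = j then (1:ℤ) else 0) := by
        refine Finset.sum_le_sum fun a _ => ?_
        split
        · rcases hDval a with h | h | h <;> simp [h]
        · simp
    _ = 5 := by rw [Finset.sum_boole, CW_fiber_card]; norm_num

end Proj

section Char3

instance CW_fact31 : Fact (Nat.Prime 31) := ⟨by norm_num⟩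

/-- The group algebra `𝔽₃[C₃₁]`. -/
abbrev CWAMA := AddMonoidAlgebra (ZMod 3) (ZMod 31)

instance : CharP CWAMA 3 :=
  charP_of_injective_ringHom
    (f := AddMonoidAlgebra.singleZeroRingHom (R := ZMod 3) (M := ZMod 31))
    (fun a b h => by
      have h' := congrArg (fun v : CWAMA => v.coeff 0) h
      simpa [AddMonoidAlgebra.singleZeroRingHom, AddMonoidAlgebra.coeff_single] using h') 3

def CWemd (e : ZMod 31 ≃ ZMod 31) (f : CWAMA) : CWAMA := AddMonoidAlgebra.ofCoeff (equivMapDomain e f.coeff)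

lemma CWemd_congr (e e' : ZMod 31 ≃ ZMod 31) (h : ∀ x, e x = e' x) (f : CWAMA) :
    CWemd e f = CWemd e' f := by
  have : e = e' := Equiv.ext h
  rw [this]

lemma CW_mulLeft₀_apply (a : ZMod 31) (ha : a ≠ 0) (x : ZMod 31) :
    Equiv.mulLeft₀ a ha x = a * x := rfl

lemma CW_pow3 (f : CWAMA) :
    f ^ 3 = CWemd (Equiv.mulLeft₀ (3 : ZMod 31) (by decide)) f := by
  induction f using AddMonoidAlgebra.induction with
  | zero => ext; simp [CWemd, AddMonoidAlgebra.coeff_ofCoeff]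
  | single_add a b g ha hb ih =>
    have hchar : ((AddMonoidAlgebra.single a b + (show CWAMA from g)) : CWAMA) ^ 3
        = (AddMonoidAlgebra.single a b : CWAMA) ^ 3 + (show CWAMA from g) ^ 3 :=
      add_pow_char _ _ 3
    show ((AddMonoidAlgebra.single a b + (show CWAMA from g)) : CWAMA) ^ 3 = _
    rw [hchar, ih, AddMonoidAlgebra.single_pow]
    have h1 : (3 : ℕ) • a = (3 : ZMod 31) * a := by
      rw [nsmul_eq_mul]; norm_num
    have h2 : b ^ 3 = b := ZMod.pow_card b
    rw [h1, h2]
    show _ = CWemd _ (AddMonoidAlgebra.single a b + (show CWAMA from g))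
    unfold CWemd
    rw [AddMonoidAlgebra.coeff_add, Finsupp.equivMapDomain_eq_mapDomain,
      Finsupp.equivMapDomain_eq_mapDomain, Finsupp.mapDomain_add, AddMonoidAlgebra.coeff_single, Finsupp.mapDomain_single]
    rfl

lemma CW_pow3n (n : ℕ) (f : CWAMA) :
    f ^ (3 ^ n) = CWemd (Equiv.mulLeft₀ ((3 : ZMod 31) ^ n)
      (pow_ne_zero n (by decide))) f := by
  induction n with
  | zero =>
    simp only [pow_zero, pow_one]
    rw [CWemd_congr _ (Equiv.refl _) (by intro x; rw [CW_mulLeft₀_apply]; simp)]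
    unfold CWemd
    ext x; simp [AddMonoidAlgebra.coeff_ofCoeff]
  | succ n ih =>
    rw [pow_succ, pow_mul, ih, CW_pow3]
    unfold CWemd
    rw [AddMonoidAlgebra.coeff_ofCoeff, ← Finsupp.equivMapDomain_trans]
    apply CWemd_congr
    intro x
    simp only [Equiv.trans_apply, CW_mulLeft₀_apply]
    ring

/-- `𝔽₃[C₃₁]` kills self-conjugate products: the "3 is self-conjugate mod 31" argument. -/
lemma CW_nilp (f : CWAMA)
    (h : f * (show CWAMA from AddMonoidAlgebra.ofCoeff (equivMapDomain (Equiv.neg (ZMod 31)) f.coeff)) = 0) : f = 0 := by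
  have hneg : (show CWAMA from AddMonoidAlgebra.ofCoeff (equivMapDomain (Equiv.neg (ZMod 31)) f.coeff)) = f ^ (3 ^ 15) := by
    rw [CW_pow3n]
    show CWemd (Equiv.neg (ZMod 31)) f = _
    apply CWemd_congr
    intro x
    rw [CW_mulLeft₀_apply]
    have h315 : ((3 : ZMod 31) ^ 15) = -1 := by decide
    rw [h315]
    simp
  rw [hneg, ← pow_succ'] at h
  have h16 : f ^ ((3:ℕ) ^ 16) = 0 := by
    have he : (3:ℕ) ^ 16 = (3 ^ 15 + 1) + 28697813 := by norm_num
    rw [he, pow_add, h, zero_mul]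
  have hp := CW_pow3n 16 f
  rw [h16] at hp
  have h0 : CWemd (Equiv.mulLeft₀ ((3 : ZMod 31) ^ 16) (pow_ne_zero _ (by decide))) f = 0 :=
    hp.symm
  ext x
  have hx := congrArg (fun v : CWAMA => v.coeff (((3 : ZMod 31) ^ 16) * x)) h0
  simp only [CWemd, AddMonoidAlgebra.coeff_ofCoeff, Finsupp.equivMapDomain_apply] at hx
  have hsymm : (Equiv.mulLeft₀ ((3 : ZMod 31) ^ 16) (pow_ne_zero _ (by decide))).symm
      ((3 : ZMod 31) ^ 16 * x) = x := by
    apply (Equiv.mulLeft₀ ((3 : ZMod 31) ^ 16) (pow_ne_zero _ (by decide))).injective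
    rw [Equiv.apply_symm_apply, CW_mulLeft₀_apply]
  rw [hsymm] at hx
  simpa using hx

/-- Every integer sequence on `C₃₁` with autocorrelation `36·δ₀` has all values
divisible by 3. -/
lemma CW_F_dvd3 (F : ZMod 31 → ℤ)
    (hF : ∀ k : ZMod 31, ∑ j : ZMod 31, F j * F (j - k) = if k = 0 then 36 else 0) :
    ∀ j, (3:ℤ) ∣ F j := by
  set f3 : CWAMA := AddMonoidAlgebra.ofCoeff (Finsupp.equivFunOnFinite.symm (fun j => ((F j : ℤ) : ZMod 3))) with hf3
  have happ : ∀ j, f3.coeff j = ((F j : ℤ) : ZMod 3) := fun j => by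
    rw [hf3]; simp [AddMonoidAlgebra.coeff_ofCoeff]
  have hmul : f3 * (show CWAMA from AddMonoidAlgebra.ofCoeff (Finsupp.equivMapDomain (Equiv.neg (ZMod 31)) f3.coeff)) = 0 := by
    ext k
    rw [CW_conv_coeff]
    have hterm : ∀ x : ZMod 31, f3.coeff x * f3.coeff (x - k) = (((F x * F (x - k) : ℤ)) : ZMod 3) := by
      intro x; rw [happ, happ, Int.cast_mul]
    rw [Finset.sum_congr rfl fun x _ => hterm x, ← Int.cast_sum, hF k]
    split
    · rw [show ((36 : ℤ) : ZMod 3) = 0 from by decide]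
      simp
    · simp
  have h0 := CW_nilp f3 hmul
  intro j
  have hz : ((F j : ℤ) : ZMod 3) = 0 := by rw [← happ j, h0]; simp
  exact_mod_cast (ZMod.intCast_zmod_eq_zero_iff_dvd (F j) 3).mp hz

end Char3

section Comb

def CWchi (a b c e y : ZMod 31) : ℤ :=
  (if y = a then 1 else 0) + (if y = b then 1 else 0) + (if y = c then 1 else 0)
    - (if y = e then 1 else 0)

def CWind (a b c e k : ZMod 31) : ℤ :=
  CWchi a b c e (a - k) + CWchi a b c e (b - k) + CWchi a b c e (c - k) - CWchi a b c e (e - k)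

def CWpred (a b c e : ZMod 31) : Prop :=
  (a ≠ b ∧ a ≠ c ∧ b ≠ c ∧ a ≠ e ∧ b ≠ e ∧ c ≠ e) ∧
    ∀ k : ZMod 31, k ≠ 0 → CWind a b c e k = 0

instance (a b c e : ZMod 31) : Decidable (CWpred a b c e) := by
  unfold CWpred; infer_instance

lemma CWpred_core : ∀ b c : ZMod 31, ¬ CWpred 1 b c 0 := by decide

lemma CWchi_shift (a b c e y t : ZMod 31) :
    CWchi (a+t) (b+t) (c+t) (e+t) (y+t) = CWchi a b c e y := by
  simp only [CWchi, add_left_inj]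

lemma CWchi_scale (a b c e y t : ZMod 31) (ht : t ≠ 0) :
    CWchi (t*a) (t*b) (t*c) (t*e) (t*y) = CWchi a b c e y := by
  simp only [CWchi, mul_right_inj' ht]

lemma CWpred_shift (a b c e t : ZMod 31) (h : CWpred a b c e) :
    CWpred (a+t) (b+t) (c+t) (e+t) := by
  obtain ⟨⟨h1,h2,h3,h4,h5,h6⟩, hk⟩ := h
  refine ⟨⟨fun hc => h1 (by simpa using hc), fun hc => h2 (by simpa using hc),
    fun hc => h3 (by simpa using hc), fun hc => h4 (by simpa using hc),
    fun hc => h5 (by simpa using hc), fun hc => h6 (by simpa using hc)⟩, ?_⟩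
  intro k hk0
  have := hk k hk0
  unfold CWind at this ⊢
  have hs : ∀ x : ZMod 31, x + t - k = (x - k) + t := fun x => by ring
  rw [hs a, hs b, hs c, hs e, CWchi_shift, CWchi_shift, CWchi_shift, CWchi_shift]
  exact this

lemma CWpred_scale (a b c e t : ZMod 31) (ht : t ≠ 0) (h : CWpred a b c e) :
    CWpred (t*a) (t*b) (t*c) (t*e) := by
  obtain ⟨⟨h1,h2,h3,h4,h5,h6⟩, hk⟩ := h
  refine ⟨⟨fun hc => h1 ((mul_right_inj' ht).mp hc), fun hc => h2 ((mul_right_inj' ht).mp hc),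
    fun hc => h3 ((mul_right_inj' ht).mp hc), fun hc => h4 ((mul_right_inj' ht).mp hc),
    fun hc => h5 ((mul_right_inj' ht).mp hc), fun hc => h6 ((mul_right_inj' ht).mp hc)⟩, ?_⟩
  intro k hk0
  have hki : k = t * (t⁻¹ * k) := by rw [← mul_assoc, mul_inv_cancel₀ ht, one_mul]
  have hk0' : t⁻¹ * k ≠ 0 := by
    intro hc; rw [hki, hc, mul_zero] at hk0; exact hk0 rfl
  have := hk (t⁻¹ * k) hk0'
  unfold CWind at this ⊢
  rw [hki]
  have hs : ∀ x : ZMod 31, t * x - t * (t⁻¹ * k) = t * (x - t⁻¹ * k) := fun x => by ring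
  rw [hs a, hs b, hs c, hs e, CWchi_scale _ _ _ _ _ _ ht, CWchi_scale _ _ _ _ _ _ ht,
    CWchi_scale _ _ _ _ _ _ ht, CWchi_scale _ _ _ _ _ _ ht]
  exact this

lemma CW_no_pred (a b c e : ZMod 31) : ¬ CWpred a b c e := by
  intro h
  have h0 := CWpred_shift a b c e (-e) h
  rw [add_neg_cancel] at h0
  set a' := a + -e with ha'def
  have ha' : a' ≠ 0 := by
    have := h0.1.2.2.2.1
    simpa using this
  have h1 := CWpred_scale _ _ _ _ (a'⁻¹) (inv_ne_zero ha') h0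
  rw [mul_zero, inv_mul_cancel₀ ha'] at h1
  exact CWpred_core _ _ h1

lemma CW_final2 (G : ZMod 31 → ℤ) (hv : ∀ a, G a = 0 ∨ G a = 1 ∨ G a = -1)
    (h : ∀ k : ZMod 31, ∑ a : ZMod 31, G a * G (a - k) = if k = 0 then 4 else 0)
    (hs : ∑ a : ZMod 31, G a = 2) : False := by
  classical
  set P := Finset.univ.filter (fun a : ZMod 31 => G a = 1) with hPdef
  set N := Finset.univ.filter (fun a : ZMod 31 => G a = -1) with hNdef
  have h0 := h 0
  rw [if_pos rfl] at h0
  have h0' : ∑ a : ZMod 31, G a * G a = 4 := by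
    rw [← h0]; exact Finset.sum_congr rfl fun a _ => by rw [sub_zero]
  have hsq : ∀ a : ZMod 31, G a * G a
      = (if G a = 1 then (1:ℤ) else 0) + (if G a = -1 then (1:ℤ) else 0) := by
    intro a; rcases hv a with h' | h' | h' <;> rw [h'] <;> norm_num
  have hcard4 : ((P.card : ℤ) + N.card) = 4 := by
    rw [← h0', Finset.sum_congr rfl fun a _ => hsq a, Finset.sum_add_distrib,
      Finset.sum_boole, Finset.sum_boole]
  have hlin : ∀ a : ZMod 31, G a
      = (if G a = 1 then (1:ℤ) else 0) - (if G a = -1 then (1:ℤ) else 0) := by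
    intro a; rcases hv a with h' | h' | h' <;> rw [h'] <;> norm_num
  have hcard2 : ((P.card : ℤ) - N.card) = 2 := by
    rw [← hs, Finset.sum_congr rfl fun a _ => hlin a, Finset.sum_sub_distrib,
      Finset.sum_boole, Finset.sum_boole]
  have hP3 : P.card = 3 := by omega
  have hN1 : N.card = 1 := by omega
  obtain ⟨a, b, c, hab, hac, hbc, hP⟩ := Finset.card_eq_three.mp hP3
  obtain ⟨e, hN⟩ := Finset.card_eq_one.mp hN1
  have hGa : G a = 1 := by
    have : a ∈ P := by rw [hP]; simp
    exact (Finset.mem_filter.mp this).2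
  have hGb : G b = 1 := by
    have : b ∈ P := by rw [hP]; simp
    exact (Finset.mem_filter.mp this).2
  have hGc : G c = 1 := by
    have : c ∈ P := by rw [hP]; simp
    exact (Finset.mem_filter.mp this).2
  have hGe : G e = -1 := by
    have : e ∈ N := by rw [hN]; simp
    exact (Finset.mem_filter.mp this).2
  have hae : a ≠ e := fun hc => by rw [hc, hGe] at hGa; norm_num at hGa
  have hbe : b ≠ e := fun hc => by rw [hc, hGe] at hGb; norm_num at hGb
  have hce : c ≠ e := fun hc => by rw [hc, hGe] at hGc; norm_num at hGc
  have hmem : ∀ y : ZMod 31, G y = 1 → y = a ∨ y = b ∨ y = c := by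
    intro y hy
    have : y ∈ P := Finset.mem_filter.mpr ⟨Finset.mem_univ y, hy⟩
    rw [hP] at this
    simpa using this
  have hmemN : ∀ y : ZMod 31, G y = -1 → y = e := by
    intro y hy
    have : y ∈ N := Finset.mem_filter.mpr ⟨Finset.mem_univ y, hy⟩
    rw [hN] at this
    simpa using this
  have hform : ∀ y : ZMod 31, G y = CWchi a b c e y := by
    intro y
    rcases hv y with h' | h' | h'
    · have hya : y ≠ a := fun hc => by rw [hc, hGa] at h'; norm_num at h'
      have hyb : y ≠ b := fun hc => by rw [hc, hGb] at h'; norm_num at h'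
      have hyc : y ≠ c := fun hc => by rw [hc, hGc] at h'; norm_num at h'
      have hye : y ≠ e := fun hc => by rw [hc, hGe] at h'; norm_num at h'
      rw [h']; simp [CWchi, hya, hyb, hyc, hye]
    · rw [h']
      rcases hmem y h' with rfl | rfl | rfl
      · simp [CWchi, hab, hac, hae]
      · simp [CWchi, hab.symm, hbc, hbe]
      · simp [CWchi, hac.symm, hbc.symm, hce]
    · rw [h', hmemN y h']
      simp [CWchi, hae.symm, hbe.symm, hce.symm]
  have hpred : CWpred a b c e := by
    refine ⟨⟨hab, hac, hbc, hae, hbe, hce⟩, ?_⟩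
    intro k hk
    have hk' := h k
    rw [if_neg hk] at hk'
    set S : Finset (ZMod 31) := insert a (insert b (insert c {e})) with hSdef
    have hsum : ∑ x : ZMod 31, G x * G (x - k) = ∑ x ∈ S, G x * G (x - k) := by
      refine (Finset.sum_subset (Finset.subset_univ S) ?_).symm
      intro x _ hx
      have hxa : x ≠ a := fun hc => hx (by rw [hc, hSdef]; simp)
      have hxb : x ≠ b := fun hc => hx (by rw [hc, hSdef]; simp)
      have hxc : x ≠ c := fun hc => hx (by rw [hc, hSdef]; simp)
      have hxe : x ≠ e := fun hc => hx (by rw [hc, hSdef]; simp)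
      have : G x = 0 := by
        rcases hv x with h' | h' | h'
        · exact h'
        · rcases hmem x h' with rfl | rfl | rfl <;> simp at hxa hxb hxc
        · exact absurd (hmemN x h') hxe
      rw [this, zero_mul]
    have hexp : ∑ x ∈ S, G x * G (x - k)
        = G a * G (a - k) + G b * G (b - k) + G c * G (c - k) + G e * G (e - k) := by
      rw [hSdef]
      rw [Finset.sum_insert (by simp [hab, hac, hae]),
        Finset.sum_insert (by simp [hbc, hbe]),
        Finset.sum_insert (by simp [hce]),
        Finset.sum_singleton]
      ring
    rw [hsum, hexp, hGa, hGb, hGc, hGe] at hk'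
    unfold CWind
    rw [← hform (a - k), ← hform (b - k), ← hform (c - k), ← hform (e - k)]
    linarith
  exact CW_no_pred a b c e hpred

/-- No `{0,±1}` sequence on `C₃₁` has autocorrelation `4·δ₀` (no `CW(31,4)`). -/
lemma CW_final (G : ZMod 31 → ℤ) (hv : ∀ a, G a = 0 ∨ G a = 1 ∨ G a = -1)
    (h : ∀ k : ZMod 31, ∑ a : ZMod 31, G a * G (a - k) = if k = 0 then 4 else 0) : False := by
  set s := ∑ a : ZMod 31, G a with hsdef
  have hsum4 : ∑ k : ZMod 31, (if k = (0 : ZMod 31) then (4:ℤ) else 0) = 4 := by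
    rw [Finset.sum_ite_eq' Finset.univ (0 : ZMod 31) (fun _ => (4:ℤ))]
    simp
  have hss : s * s = 4 := by
    have h1 : ∑ k : ZMod 31, ∑ a : ZMod 31, G a * G (a - k) = 4 := by
      rw [Finset.sum_congr rfl fun k _ => h k, hsum4]
    rw [Finset.sum_comm] at h1
    have h2 : ∀ a : ZMod 31, ∑ k : ZMod 31, G a * G (a - k) = G a * s := by
      intro a
      rw [← Finset.mul_sum]
      congr 1
      exact Fintype.sum_equiv (Equiv.subLeft a) _ _ (fun k => rfl)
    rw [Finset.sum_congr rfl fun a _ => h2 a, ← Finset.sum_mul] at h1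
    rw [← h1]
  have hfac : (s - 2) * (s + 2) = 0 := by linear_combination hss
  rcases mul_eq_zero.mp hfac with h' | h'
  · exact CW_final2 G hv h (by linarith [sub_eq_zero.mp h'])
  · have hs' : s = -2 := by linarith
    refine CW_final2 (fun x => -G x) (fun a => ?_) (fun k => ?_) ?_
    · rcases hv a with h'' | h'' | h'' <;> simp [h'']
    · simp only [neg_mul_neg]; exact h k
    · have hns : ∑ x : ZMod 31, -G x = -∑ x : ZMod 31, G x := by
        rw [← Finset.sum_neg_distrib]
      rw [hns, ← hsdef, hs']
      norm_num

end Comb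

/-- Theorem 4.22: there is no `CW(155, 36)`. -/
theorem no_CW_155_36 : ¬ CWExists 155 36 := by
  rintro ⟨D, hDval, hDeq⟩
  -- coefficientwise autocorrelation equations on C₁₅₅
  have hDauto : ∀ k : ZMod 155,
      ∑ a : ZMod 155, D.coeff a * D.coeff (a - k) = if k = 0 then 36 else 0 := by
    intro k
    have := congrArg (fun v : AddMonoidAlgebra ℤ (ZMod 155) => v.coeff k) hDeq
    simp only at this
    rw [CW_conv_coeff D D k] at this
    rw [this, AddMonoidAlgebra.natCast_def, AddMonoidAlgebra.coeff_single]
    rw [Finsupp.single_apply]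
    by_cases hk : k = 0
    · subst hk; rw [if_pos rfl, if_pos rfl]; norm_num
    · rw [if_neg (fun hc => hk hc.symm), if_neg hk]
  -- project to C₃₁
  have hFauto := CWFp_auto (fun a => D.coeff a) hDauto
  have hdvd := CW_F_dvd3 (CWFp (fun a => D.coeff a)) hFauto
  set F := CWFp (fun a => D.coeff a) with hFdef
  set G : ZMod 31 → ℤ := fun j => F j / 3 with hGdef
  have hFG : ∀ j, F j = 3 * G j := fun j => (Int.mul_ediv_cancel' (hdvd j)).symm
  have hGv : ∀ j, G j = 0 ∨ G j = 1 ∨ G j = -1 := by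
    intro j
    have hb := CWFp_bound (fun a => D.coeff a) hDval j
    rw [← hFdef, hFG j, abs_le] at hb
    omega
  have hGauto : ∀ k : ZMod 31, ∑ j : ZMod 31, G j * G (j - k) = if k = 0 then 4 else 0 := by
    intro k
    have h36 := hFauto k
    have h9 : ∀ j : ZMod 31, F j * F (j - k) = 9 * (G j * G (j - k)) := by
      intro j; rw [hFG j, hFG (j - k)]; ring
    rw [Finset.sum_congr rfl fun j _ => h9 j, ← Finset.mul_sum] at h36
    by_cases hk : k = 0
    · subst hk; rw [if_pos rfl] at h36 ⊢; omega
    · rw [if_neg hk] at h36 ⊢; omega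
  exact CW_final G hGv hGauto
end

section
/- Let $D \in \mathbb{Z}[C_{60}]$ be a circulant weighing matrix $CW(60, 36)$ and let $\chi$ be a character of $C_{60}$ of order 60. Then $\chi(D)$ is not divisible by 3 in $\mathbb{Z}[\zeta_{60}]$. -/
open Polynomial

noncomputable section

namespace CW36aux

abbrev Kf := ZMod 3






/-- Evaluation homomorphism from the group algebra at a 60-th root of unity. -/
def evalHom (S : Type) [CommRing S] (s : S) (hs : s ^ 60 = 1) :
    AddMonoidAlgebra ℤ (ZMod 60) →ₐ[ℤ] S :=
  AddMonoidAlgebra.lift ℤ S (ZMod 60)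
    { toFun := fun g => s ^ (Multiplicative.toAdd g).val
      map_one' := by
        norm_num [show (Multiplicative.toAdd (1 : Multiplicative (ZMod 60))) = 0 from rfl]
      map_mul' := by
        intro a b
        have key : ∀ n : ℕ, s ^ (n % 60) = s ^ n := by
          intro n
          conv_rhs => rw [← Nat.div_add_mod n 60]
          rw [pow_add, pow_mul, hs, one_pow, one_mul]
        show s ^ (Multiplicative.toAdd (a * b)).val = _
        have : Multiplicative.toAdd (a * b) = Multiplicative.toAdd a + Multiplicative.toAdd b := rfl
        rw [this, ZMod.val_add, key, pow_add] }

lemma evalHom_single (S : Type) [CommRing S] (s : S) (hs : s ^ 60 = 1) (g : ZMod 60) (n : ℤ) :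
    evalHom S s hs (AddMonoidAlgebra.single g n) = n • s ^ g.val := by
  rw [evalHom, AddMonoidAlgebra.lift_single]
  rfl

lemma evalHom_apply (S : Type) [CommRing S] (s : S) (hs : s ^ 60 = 1)
    (E : AddMonoidAlgebra ℤ (ZMod 60)) :
    evalHom S s hs E = ∑ g : ZMod 60, (E.coeff g) • s ^ g.val := by
  rw [evalHom, AddMonoidAlgebra.lift_apply]
  rw [Finsupp.sum_fintype]
  · rfl
  · intro a; exact zero_smul _ _

lemma evalHom_neg_apply (S : Type) [CommRing S] (s : S) (hs : s ^ 60 = 1)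
    (E : AddMonoidAlgebra ℤ (ZMod 60)) :
    evalHom S s hs (AddMonoidAlgebra.ofCoeff (Finsupp.equivMapDomain (Equiv.neg (ZMod 60)) E.coeff))
      = ∑ g : ZMod 60, (E.coeff g) • s ^ (-g).val := by
  rw [evalHom_apply]
  rw [← Equiv.sum_comp (Equiv.neg (ZMod 60)) (fun g => ((AddMonoidAlgebra.ofCoeff (Finsupp.equivMapDomain (Equiv.neg (ZMod 60)) E.coeff)).coeff g) • s ^ g.val)]
  apply Finset.sum_congr rfl
  intro g _
  congr 1
  rw [AddMonoidAlgebra.coeff_ofCoeff, Finsupp.equivMapDomain_apply]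
  simp







abbrev AZ := ℤ[X] ⧸ Ideal.span ({(X:ℤ[X])^60 - 1} : Set ℤ[X])

def pz : ℤ[X] →+* AZ := Ideal.Quotient.mk _

lemma pz_X_pow_60 : (pz X) ^ 60 = 1 := by
  rw [← map_pow, ← map_one pz]
  rw [pz, Ideal.Quotient.mk_eq_mk_iff_sub_mem]
  exact Ideal.mem_span_singleton_self _

-- π of C n is intCast
lemma pz_C (n : ℤ) : pz (C n) = (n : AZ) := by
  rw [show (C n : ℤ[X]) = (n : ℤ[X]) by simp]
  exact map_intCast pz n

lemma quotient_dvd (a : ℤ[X]) (h : pz a = 0) : (X:ℤ[X])^60 - 1 ∣ a := by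
  rw [pz, Ideal.Quotient.eq_zero_iff_mem, Ideal.mem_span_singleton] at h
  exact h








lemma ne_zero_of_eval_zero_ne (p : Kf[X]) (h : p.eval 0 ≠ 0) : p ≠ 0 := by
  intro h0; rw [h0] at h; simp at h

lemma cyclotomic4 : cyclotomic 4 Kf = X^2 + 1 := by
  have hp := prod_cyclotomic_eq_X_pow_sub_one (by norm_num : 0 < 4) Kf
  have hd : Nat.divisors 4 = {1, 2, 4} := by decide
  rw [hd, Finset.prod_insert (by decide), Finset.prod_insert (by decide),
    Finset.prod_singleton, cyclotomic_one, cyclotomic_two] at hp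
  have hfac : ((X:Kf[X]) - 1) * ((X + 1) * (X^2+1)) = X^4 - 1 := by ring
  have h1 : ((X:Kf[X]) - 1) ≠ 0 := ne_zero_of_eval_zero_ne _ (by norm_num)
  have h2 : ((X:Kf[X]) + 1) ≠ 0 := ne_zero_of_eval_zero_ne _ (by norm_num)
  have := hp.trans hfac.symm
  exact mul_left_cancel₀ h2 (mul_left_cancel₀ h1 this)

lemma cyclotomic5 : cyclotomic 5 Kf = X^4 + X^3 + X^2 + X + 1 := by
  have hp := prod_cyclotomic_eq_X_pow_sub_one (by norm_num : 0 < 5) Kf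
  have hd : Nat.divisors 5 = {1, 5} := by decide
  rw [hd, Finset.prod_insert (by decide), Finset.prod_singleton, cyclotomic_one] at hp
  have hfac : ((X:Kf[X]) - 1) * (X^4 + X^3 + X^2 + X + 1) = X^5 - 1 := by ring
  have h1 : ((X:Kf[X]) - 1) ≠ 0 := ne_zero_of_eval_zero_ne _ (by norm_num)
  exact mul_left_cancel₀ h1 (hp.trans hfac.symm)

lemma cyclotomic10 : cyclotomic 10 Kf = X^4 - X^3 + X^2 - X + 1 := by
  have hp := prod_cyclotomic_eq_X_pow_sub_one (by norm_num : 0 < 10) Kf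
  have hd : Nat.divisors 10 = {1, 2, 5, 10} := by decide
  rw [hd, Finset.prod_insert (by decide), Finset.prod_insert (by decide),
    Finset.prod_insert (by decide), Finset.prod_singleton,
    cyclotomic_one, cyclotomic_two, cyclotomic5] at hp
  have hfac : ((X:Kf[X]) - 1) * ((X + 1) * ((X^4 + X^3 + X^2 + X + 1) *
      (X^4 - X^3 + X^2 - X + 1))) = X^10 - 1 := by ring
  have h1 : ((X:Kf[X]) - 1) ≠ 0 := ne_zero_of_eval_zero_ne _ (by norm_num)
  have h2 : ((X:Kf[X]) + 1) ≠ 0 := ne_zero_of_eval_zero_ne _ (by norm_num)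
  have h5 : ((X:Kf[X])^4 + X^3 + X^2 + X + 1) ≠ 0 := ne_zero_of_eval_zero_ne _ (by norm_num)
  exact mul_left_cancel₀ h5 (mul_left_cancel₀ h2 (mul_left_cancel₀ h1 (hp.trans hfac.symm)))

lemma cyclotomic20 : cyclotomic 20 Kf = X^8 - X^6 + X^4 - X^2 + 1 := by
  have hp := prod_cyclotomic_eq_X_pow_sub_one (by norm_num : 0 < 20) Kf
  have hd : Nat.divisors 20 = {1, 2, 4, 5, 10, 20} := by decide
  rw [hd, Finset.prod_insert (by decide), Finset.prod_insert (by decide),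
    Finset.prod_insert (by decide), Finset.prod_insert (by decide),
    Finset.prod_insert (by decide), Finset.prod_singleton,
    cyclotomic_one, cyclotomic_two, cyclotomic4, cyclotomic5, cyclotomic10] at hp
  have hfac : ((X:Kf[X]) - 1) * ((X + 1) * ((X^2 + 1) * ((X^4 + X^3 + X^2 + X + 1) *
      ((X^4 - X^3 + X^2 - X + 1) * (X^8 - X^6 + X^4 - X^2 + 1))))) = X^20 - 1 := by ring
  have h1 : ((X:Kf[X]) - 1) ≠ 0 := ne_zero_of_eval_zero_ne _ (by norm_num)
  have h2 : ((X:Kf[X]) + 1) ≠ 0 := ne_zero_of_eval_zero_ne _ (by norm_num)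
  have h4 : ((X:Kf[X])^2 + 1) ≠ 0 := ne_zero_of_eval_zero_ne _ (by norm_num)
  have h5 : ((X:Kf[X])^4 + X^3 + X^2 + X + 1) ≠ 0 := ne_zero_of_eval_zero_ne _ (by norm_num)
  have h10 : ((X:Kf[X])^4 - X^3 + X^2 - X + 1) ≠ 0 := ne_zero_of_eval_zero_ne _ (by norm_num)
  exact mul_left_cancel₀ h10 (mul_left_cancel₀ h5 (mul_left_cancel₀ h4
    (mul_left_cancel₀ h2 (mul_left_cancel₀ h1 (hp.trans hfac.symm)))))

lemma cyclotomic60 : cyclotomic 60 Kf = (X^8 - X^6 + X^4 - X^2 + 1)^2 := by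
  haveI : Fact (Nat.Prime 3) := ⟨by norm_num⟩
  have := cyclotomic_mul_prime_eq_pow_of_not_dvd Kf (p := 3) (n := 20) (by norm_num)
  rw [show 20 * 3 = 60 from rfl] at this
  rw [this, cyclotomic20]








lemma monic_structure_2 (p : Kf[X]) (hm : p.Monic) (hd : p.natDegree = 2) :
    p = X^2 + C (p.coeff 1) * X + C (p.coeff 0) := by
  ext n
  match n with
  | 0 => simp [coeff_X_pow]
  | 1 => simp [coeff_X_pow]
  | 2 =>
    have : p.coeff 2 = 1 := by
      have := hm.coeff_natDegree; rwa [hd] at this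
    simp [coeff_X_pow, this]
  | (n+3) =>
    have h1 : p.coeff (n+3) = 0 := coeff_eq_zero_of_natDegree_lt (by omega)
    have h2 : ((X:Kf[X])^2).coeff (n+3) = 0 := by simp [coeff_X_pow]
    simp [h1, h2, coeff_X]

/-- A linear factor gives a root. -/
lemma root_of_linear_factor (f a : Kf[X]) (ha : a ∣ f) (hd : a.natDegree = 1) :
    ∃ c : Kf, f.eval c = 0 := by
  have ha0 : a ≠ 0 := fun h => by simp [h] at hd
  have hm := monic_mul_leadingCoeff_inv ha0
  have hdm : (a * C (leadingCoeff a)⁻¹).natDegree = 1 := by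
    rw [natDegree_mul ha0 (by simp [leadingCoeff_ne_zero.mpr ha0, inv_ne_zero])]
    simp [hd]
  set a' := a * C (leadingCoeff a)⁻¹ with ha'
  have hstruct := eq_X_add_C_of_natDegree_le_one (le_of_eq hdm)
  have hcoef1 : a'.coeff 1 = 1 := by
    have := hm.coeff_natDegree; rwa [hdm] at this
  refine ⟨-(a'.coeff 0), ?_⟩
  obtain ⟨b, hb⟩ := ha
  have hcc : (C (leadingCoeff a)⁻¹ : Kf[X]) * C (leadingCoeff a) = 1 := by
    rw [← C_mul, inv_mul_cancel₀ (leadingCoeff_ne_zero.mpr ha0), C_1]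
  have : f = a' * (C (leadingCoeff a) * b) := by
    rw [hb, ha', mul_assoc, ← mul_assoc (C (leadingCoeff a)⁻¹), hcc, one_mul]
  rw [this, eval_mul]
  have : a'.eval (-(a'.coeff 0)) = 0 := by
    conv_lhs => rw [hstruct]
    simp [hcoef1]
  rw [this, zero_mul]

/-- A monic quartic that is not irreducible has a root or factors into two monic quadratics. -/
lemma quartic_cases (f : Kf[X]) (hm : f.Monic) (hd : f.natDegree = 4) (hni : ¬ Irreducible f) :
    (∃ c : Kf, f.eval c = 0) ∨
    ∃ s t u v : Kf, f = (X^2 + C s * X + C t) * (X^2 + C u * X + C v) := by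
  have hf0 : f ≠ 0 := hm.ne_zero
  have hfu : ¬ IsUnit f := by
    rw [Polynomial.isUnit_iff_degree_eq_zero]
    rw [degree_eq_natDegree hf0, hd]; norm_num
  rw [irreducible_iff] at hni
  push_neg at hni
  obtain ⟨a, b, hab, hna, hnb⟩ := hni hfu
  have ha0 : a ≠ 0 := fun h => hf0 (by rw [hab, h, zero_mul])
  have hb0 : b ≠ 0 := fun h => hf0 (by rw [hab, h, mul_zero])
  have hdeg : a.natDegree + b.natDegree = 4 := by
    rw [← natDegree_mul ha0 hb0, ← hab, hd]
  have hna1 : 1 ≤ a.natDegree := by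
    by_contra h
    push_neg at h
    interval_cases h' : a.natDegree
    · obtain ⟨c, hc⟩ := natDegree_eq_zero.mp h'
      exact hna (hc ▸ isUnit_C.mpr (isUnit_iff_ne_zero.mpr (fun h0 => ha0 (by rw [← hc, h0, C_0]))))
  have hnb1 : 1 ≤ b.natDegree := by
    by_contra h
    push_neg at h
    interval_cases h' : b.natDegree
    · obtain ⟨c, hc⟩ := natDegree_eq_zero.mp h'
      exact hnb (hc ▸ isUnit_C.mpr (isUnit_iff_ne_zero.mpr (fun h0 => hb0 (by rw [← hc, h0, C_0]))))
  -- case analysis on degree of a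
  rcases (by omega : a.natDegree = 1 ∨ b.natDegree = 1 ∨ (a.natDegree = 2 ∧ b.natDegree = 2)) with h1 | h1 | ⟨h1, h2⟩
  · exact Or.inl (root_of_linear_factor f a ⟨b, hab⟩ h1)
  · exact Or.inl (root_of_linear_factor f b ⟨a, by rw [hab]; ring⟩ h1)
  · right
    have hlc : leadingCoeff a ≠ 0 := leadingCoeff_ne_zero.mpr ha0
    set a' := a * C (leadingCoeff a)⁻¹ with ha'
    set b' := b * C (leadingCoeff a) with hb'
    have hcc : (C (leadingCoeff a)⁻¹ : Kf[X]) * C (leadingCoeff a) = 1 := by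
      rw [← C_mul, inv_mul_cancel₀ hlc, C_1]
    have hmab : f = a' * b' := by
      rw [hab, ha', hb',
        show a * C (leadingCoeff a)⁻¹ * (b * C (leadingCoeff a))
          = (a * b) * (C (leadingCoeff a)⁻¹ * C (leadingCoeff a)) from by ring, hcc, mul_one]
    have hma' : a'.Monic := monic_mul_leadingCoeff_inv ha0
    have hmb' : b'.Monic := hma'.of_mul_monic_left (by rw [← hmab]; exact hm)
    have hda' : a'.natDegree = 2 := by
      rw [ha', natDegree_mul ha0 (by simp [hlc, inv_ne_zero])]
      simp [h1]
    have hdb' : b'.natDegree = 2 := by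
      rw [hb', natDegree_mul hb0 (by simp [hlc])]
      simp [h2]
    exact ⟨a'.coeff 1, a'.coeff 0, b'.coeff 1, b'.coeff 0, by
      rw [hmab]
      congr 1
      · exact monic_structure_2 a' hma' hda'
      · exact monic_structure_2 b' hmb' hdb'⟩


lemma quad_cases (f : Kf[X]) (hm : f.Monic) (hd : f.natDegree = 2) (hni : ¬ Irreducible f) :
    ∃ c : Kf, f.eval c = 0 := by
  have hf0 : f ≠ 0 := hm.ne_zero
  have hfu : ¬ IsUnit f := by
    rw [Polynomial.isUnit_iff_degree_eq_zero]
    rw [degree_eq_natDegree hf0, hd]; norm_num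
  rw [irreducible_iff] at hni
  push_neg at hni
  obtain ⟨a, b, hab, hna, hnb⟩ := hni hfu
  have ha0 : a ≠ 0 := fun h => hf0 (by rw [hab, h, zero_mul])
  have hb0 : b ≠ 0 := fun h => hf0 (by rw [hab, h, mul_zero])
  have hdeg : a.natDegree + b.natDegree = 2 := by
    rw [← natDegree_mul ha0 hb0, ← hab, hd]
  have hna1 : 1 ≤ a.natDegree := by
    by_contra h
    push_neg at h
    interval_cases h' : a.natDegree
    · obtain ⟨c, hc⟩ := natDegree_eq_zero.mp h'
      exact hna (hc ▸ isUnit_C.mpr (isUnit_iff_ne_zero.mpr (fun h0 => ha0 (by rw [← hc, h0, C_0]))))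
  have hnb1 : 1 ≤ b.natDegree := by
    by_contra h
    push_neg at h
    interval_cases h' : b.natDegree
    · obtain ⟨c, hc⟩ := natDegree_eq_zero.mp h'
      exact hnb (hc ▸ isUnit_C.mpr (isUnit_iff_ne_zero.mpr (fun h0 => hb0 (by rw [← hc, h0, C_0]))))
  exact root_of_linear_factor f a ⟨b, hab⟩ (by omega)

lemma monic_q3 : (X^2 + 1 : Kf[X]).Monic := by monicity!
lemma monic_q4 : (X^4 + X^3 + X^2 + X + 1 : Kf[X]).Monic := by monicity!
lemma monic_q5 : (X^4 - X^3 + X^2 - X + 1 : Kf[X]).Monic := by monicity!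

lemma deg_q3 : (X^2 + 1 : Kf[X]).natDegree = 2 := by compute_degree!
lemma deg_q4 : (X^4 + X^3 + X^2 + X + 1 : Kf[X]).natDegree = 4 := by compute_degree!
lemma deg_q5 : (X^4 - X^3 + X^2 - X + 1 : Kf[X]).natDegree = 4 := by compute_degree!

lemma noroot_q3 : ∀ c : Kf, (X^2 + 1 : Kf[X]).eval c ≠ 0 := by
  intro c
  simp only [eval_add, eval_sub, eval_pow, eval_X, eval_one]
  fin_cases c <;> decide

lemma noroot_q4 : ∀ c : Kf, (X^4 + X^3 + X^2 + X + 1 : Kf[X]).eval c ≠ 0 := by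
  intro c
  simp only [eval_add, eval_sub, eval_pow, eval_X, eval_one]
  fin_cases c <;> decide

lemma noroot_q5 : ∀ c : Kf, (X^4 - X^3 + X^2 - X + 1 : Kf[X]).eval c ≠ 0 := by
  intro c
  simp only [eval_add, eval_sub, eval_pow, eval_X, eval_one]
  fin_cases c <;> decide

lemma irr_q1 : Irreducible (X - 1 : Kf[X]) := by
  have := irreducible_X_sub_C (1 : Kf)
  rwa [C_1] at this

lemma irr_q2 : Irreducible (X + 1 : Kf[X]) := by
  have := irreducible_X_sub_C (-1 : Kf)
  rwa [map_neg, C_1, sub_neg_eq_add] at this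

lemma irr_q3 : Irreducible (X^2 + 1 : Kf[X]) := by
  by_contra h
  obtain ⟨c, hc⟩ := quad_cases _ monic_q3 deg_q3 h
  exact noroot_q3 c hc

lemma quartic_irred (f : Kf[X]) (hm : f.Monic) (hd : f.natDegree = 4)
    (hnr : ∀ c : Kf, f.eval c ≠ 0)
    (hq : ∀ s t u v : Kf, f ≠ (X^2 + C s * X + C t) * (X^2 + C u * X + C v)) :
    Irreducible f := by
  by_contra h
  rcases quartic_cases f hm hd h with ⟨c, hc⟩ | ⟨s, t, u, v, hf⟩
  · exact hnr c hc
  · exact hq s t u v hf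

lemma coeff_expand (s t u v : Kf) :
    (X^2 + C s * X + C t) * (X^2 + C u * X + C v)
      = X^4 + C (s+u) * X^3 + C (t+v+s*u) * X^2 + C (s*v+t*u) * X + C (t*v) := by
  simp only [C_add, C_mul]
  ring

lemma irr_q4 : Irreducible (X^4 + X^3 + X^2 + X + 1 : Kf[X]) := by
  apply quartic_irred _ monic_q4 deg_q4 noroot_q4
  intro s t u v hf
  have h0 := congrArg (eval (0:Kf)) hf
  have h1 := congrArg (eval (1:Kf)) hf
  have h2 := congrArg (eval (2:Kf)) hf
  simp only [eval_mul, eval_add, eval_sub, eval_pow, eval_X, eval_C, eval_one] at h0 h1 h2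
  clear hf
  revert s t u v
  decide

lemma irr_q5 : Irreducible (X^4 - X^3 + X^2 - X + 1 : Kf[X]) := by
  apply quartic_irred _ monic_q5 deg_q5 noroot_q5
  intro s t u v hf
  have h0 := congrArg (eval (0:Kf)) hf
  have h1 := congrArg (eval (1:Kf)) hf
  have h2 := congrArg (eval (2:Kf)) hf
  simp only [eval_mul, eval_add, eval_sub, eval_pow, eval_X, eval_C, eval_one] at h0 h1 h2
  clear hf
  revert s t u v
  decide








lemma reflect_pow_aux (q : Kf[X]) (c : Kf) (hq : reflect q.natDegree q = C c * q) (k : ℕ) :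
    reflect (k * q.natDegree) (q ^ k) = C (c ^ k) * q ^ k := by
  induction k with
  | zero =>
    rw [zero_mul, pow_zero, pow_zero, ← C_1, reflect_C]
    simp
  | succ n ih =>
    have h1 : (q ^ n).natDegree ≤ n * q.natDegree := by
      rw [natDegree_pow]
    have h2 : q.natDegree ≤ q.natDegree := le_refl _
    rw [pow_succ, show (n + 1) * q.natDegree = n * q.natDegree + q.natDegree from by ring,
      reflect_mul _ _ h1 h2, ih, hq]
    rw [pow_succ, C_mul]
    ring

lemma rev_dvd {q F : Kf[X]} (c : Kf) (hq : reflect q.natDegree q = C c * q) (hq0 : q ≠ 0)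
    (k : ℕ) (hF : F.natDegree ≤ 60) (hdvd : q ^ k ∣ F) : q ^ k ∣ reflect 60 F := by
  obtain ⟨G, rfl⟩ := hdvd
  by_cases hG : G = 0
  · simp [hG]
  have hdeg : (q ^ k * G).natDegree = k * q.natDegree + G.natDegree :=
    by rw [natDegree_mul (pow_ne_zero _ hq0) hG, natDegree_pow]
  have hb : k * q.natDegree + G.natDegree ≤ 60 := by rw [← hdeg]; exact hF
  have hsplit : reflect 60 (q ^ k * G)
      = reflect (k * q.natDegree) (q ^ k) * reflect (60 - k * q.natDegree) G := by
    have := reflect_mul (q ^ k) G (F := k * q.natDegree) (G := 60 - k * q.natDegree)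
      (by rw [natDegree_pow]) (by omega)
    rwa [show k * q.natDegree + (60 - k * q.natDegree) = 60 from by omega] at this
  rw [hsplit, reflect_pow_aux q c hq k]
  exact ⟨C (c ^ k) * reflect (60 - k * q.natDegree) G, by ring⟩

lemma key_lemma {q P N : Kf[X]} (hq : Prime q) (c : Kf) (hrevq : reflect q.natDegree q = C c * q)
    {e : Kf}
    (hP : P.natDegree ≤ 60) (hN : N.natDegree ≤ 60)
    (hrNP : reflect 60 N = P + C e * (X ^ 60 - 1))
    (hq3 : q ^ 3 ∣ P * N) (hqx : q ^ 3 ∣ ((X : Kf[X]) ^ 60 - 1)) : q ^ 2 ∣ P := by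
  have hq0 : q ≠ 0 := hq.ne_zero
  by_cases h1 : q ∣ P
  · obtain ⟨R, rfl⟩ := h1
    by_cases h2 : q ∣ R
    · obtain ⟨R', rfl⟩ := h2
      exact ⟨R', by ring⟩
    · have hq2RN : q ^ 2 ∣ R * N := by
        have h3 : q * (q ^ 2) ∣ q * (R * N) := by
          rw [show q * (q ^ 2) = q ^ 3 from by ring, show q * (R * N) = q * R * N from by ring]
          exact hq3
        exact (mul_dvd_mul_iff_left hq0).mp h3
      have hN2 : q ^ 2 ∣ N := (Prime.pow_dvd_of_dvd_mul_left hq 2 h2 hq2RN)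
      have hrev2 := rev_dvd c hrevq hq0 2 hN hN2
      rw [hrNP] at hrev2
      have hz : q ^ 2 ∣ C e * (X ^ 60 - 1) :=
        Dvd.dvd.mul_left (dvd_trans (pow_dvd_pow q (by norm_num)) hqx) _
      have := dvd_sub hrev2 hz
      simpa using this
  · exfalso
    have hN3 : q ^ 3 ∣ N := Prime.pow_dvd_of_dvd_mul_left hq 3 h1 hq3
    have hrev3 := rev_dvd c hrevq hq0 3 hN hN3
    rw [hrNP] at hrev3
    have hz : q ^ 3 ∣ C e * (X ^ 60 - 1) := Dvd.dvd.mul_left hqx _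
    have hP3 := dvd_sub hrev3 hz
    simp only [add_sub_cancel_right] at hP3
    exact h1 (dvd_trans (dvd_pow_self q (by norm_num)) hP3)








lemma deg_q1 : (X - 1 : Kf[X]).natDegree = 1 := by compute_degree!
lemma deg_q2 : (X + 1 : Kf[X]).natDegree = 1 := by compute_degree!


lemma refl_q1 : reflect (X - 1 : Kf[X]).natDegree (X - 1 : Kf[X]) = C (-1) * (X - 1) := by
  rw [deg_q1]
  rw [show (X - 1 : Kf[X]) = X^1 + C (-1) * X^0 from by
    simp only [pow_one, pow_zero, mul_one, map_neg, C_1]; ring]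
  simp only [reflect_add, reflect_C_mul, reflect_monomial]
  norm_num [revAt_le]
  try ring

lemma refl_q2 : reflect (X + 1 : Kf[X]).natDegree (X + 1 : Kf[X]) = C 1 * (X + 1) := by
  rw [deg_q2]
  rw [show (X + 1 : Kf[X]) = X^1 + C 1 * X^0 from by simp]
  simp only [reflect_add, reflect_C_mul, reflect_monomial]
  norm_num [revAt_le]
  try ring

lemma refl_q3 : reflect (X^2 + 1 : Kf[X]).natDegree (X^2 + 1 : Kf[X]) = C 1 * (X^2 + 1) := by
  rw [deg_q3]
  rw [show (X^2 + 1 : Kf[X]) = X^2 + C 1 * X^0 from by simp]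
  simp only [reflect_add, reflect_C_mul, reflect_monomial]
  norm_num [revAt_le]
  try ring

lemma refl_q4 : reflect (X^4 + X^3 + X^2 + X + 1 : Kf[X]).natDegree
    (X^4 + X^3 + X^2 + X + 1 : Kf[X]) = C 1 * (X^4 + X^3 + X^2 + X + 1) := by
  rw [deg_q4]
  rw [show (X^4 + X^3 + X^2 + X + 1 : Kf[X]) = X^4 + X^3 + X^2 + X^1 + C 1 * X^0 from by simp]
  simp only [reflect_add, reflect_C_mul, reflect_monomial]
  norm_num [revAt_le]
  try ring

lemma refl_q5 : reflect (X^4 - X^3 + X^2 - X + 1 : Kf[X]).natDegree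
    (X^4 - X^3 + X^2 - X + 1 : Kf[X]) = C 1 * (X^4 - X^3 + X^2 - X + 1) := by
  rw [deg_q5]
  rw [show (X^4 - X^3 + X^2 - X + 1 : Kf[X])
    = X^4 + C (-1) * X^3 + X^2 + C (-1) * X^1 + C 1 * X^0 from by
    simp only [pow_one, pow_zero, mul_one, map_neg, C_1]; ring]
  simp only [reflect_add, reflect_C_mul, reflect_monomial]
  norm_num [revAt_le]
  try ring

-- char 3 facts
lemma three_eq_zero : (3 : Kf[X]) = 0 := by
  have h1 : C ((3:Kf)) = (3 : Kf[X]) := map_ofNat C 3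
  rw [← h1, show (3:Kf) = 0 from by decide, C_0]

lemma x60_factor : ((X : Kf[X])^20 - 1)^3 = X^60 - 1 := by
  have h : ((X : Kf[X])^20 - 1)^3 = X^60 - 3 * X^40 + 3 * X^20 - 1 := by ring
  rw [h, three_eq_zero]
  ring

lemma x20_sq : ((X : Kf[X])^20 - 1)^2 = X^40 + X^20 + 1 := by
  have h : ((X : Kf[X])^20 - 1)^2 = X^40 + X^20 + 1 - 3 * X^20 := by ring
  rw [h, three_eq_zero]
  ring

lemma sqfree_x20 : Squarefree ((X : Kf[X])^20 - 1) := by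
  have hsep : ((X : Kf[X])^20 - C 1).Separable :=
    separable_X_pow_sub_C (1 : Kf) (by decide) one_ne_zero
  rw [C_1] at hsep
  exact hsep.squarefree

lemma x20_full_factor : ((X : Kf[X])^20 - 1)
    = (X - 1) * ((X + 1) * ((X^2 + 1) * ((X^4 + X^3 + X^2 + X + 1) *
      ((X^4 - X^3 + X^2 - X + 1) * (X^8 - X^6 + X^4 - X^2 + 1))))) := by
  ring








variable (d : ZMod 60 → ℤ)

def Pz : ℤ[X] := ∑ g : ZMod 60, C (d g) * X ^ g.val
def Nz : ℤ[X] := ∑ g : ZMod 60, C (d g) * X ^ (-g).val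
def Pk : Kf[X] := ∑ g : ZMod 60, C ((d g : Kf)) * X ^ g.val
def Nk : Kf[X] := ∑ g : ZMod 60, C ((d g : Kf)) * X ^ (-g).val

lemma map_Pz : (Pz d).map (Int.castRingHom Kf) = Pk d := by
  rw [Pz, Pk, ← Polynomial.coe_mapRingHom, map_sum]
  apply Finset.sum_congr rfl
  intro g _
  simp

lemma map_Nz : (Nz d).map (Int.castRingHom Kf) = Nk d := by
  rw [Nz, Nk, ← Polynomial.coe_mapRingHom, map_sum]
  apply Finset.sum_congr rfl
  intro g _
  simp

lemma natDegree_Pk : (Pk d).natDegree ≤ 59 := by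
  rw [Pk]
  apply Polynomial.natDegree_sum_le_of_forall_le
  intro g _
  apply le_trans (natDegree_C_mul_le _ _)
  rw [natDegree_X_pow]
  exact Nat.lt_succ_iff.mp (ZMod.val_lt g)

lemma natDegree_Nk : (Nk d).natDegree ≤ 59 := by
  rw [Nk]
  apply Polynomial.natDegree_sum_le_of_forall_le
  intro g _
  apply le_trans (natDegree_C_mul_le _ _)
  rw [natDegree_X_pow]
  exact Nat.lt_succ_iff.mp (ZMod.val_lt (-g))

def reflectHom : Kf[X] →+ Kf[X] := AddMonoidHom.mk' (reflect 60) (fun a b => reflect_add a b 60)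

lemma reflectHom_apply (p : Kf[X]) : reflectHom p = reflect 60 p := rfl

lemma reflect_Nk : reflect 60 (Nk d) = Pk d + C ((d 0 : Kf)) * (X ^ 60 - 1) := by
  have h1 : reflect 60 (Nk d) = ∑ g : ZMod 60, C ((d g : Kf)) * X ^ (60 - (-g).val) := by
    rw [Nk, show reflect 60 = ⇑(reflectHom) from rfl, map_sum]
    apply Finset.sum_congr rfl
    intro g _
    rw [reflectHom_apply, reflect_C_mul, reflect_monomial,
      revAt_le (ZMod.val_lt (-g)).le]
  rw [h1, Pk]
  rw [← Finset.add_sum_erase _ _ (Finset.mem_univ (0 : ZMod 60)),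
    ← Finset.add_sum_erase _ (fun g => C ((d g : Kf)) * X ^ g.val) (Finset.mem_univ (0 : ZMod 60))]
  have hcong : ∑ g ∈ Finset.univ.erase (0 : ZMod 60), C ((d g : Kf)) * X ^ (60 - (-g).val)
      = ∑ g ∈ Finset.univ.erase (0 : ZMod 60), C ((d g : Kf)) * X ^ g.val := by
    apply Finset.sum_congr rfl
    intro g hg
    have hg0 : g ≠ 0 := Finset.ne_of_mem_erase hg
    rw [ZMod.neg_val]
    simp only [hg0, if_false]
    congr 2
    have := ZMod.val_lt g
    have hv0 : g.val ≠ 0 := fun h => hg0 ((ZMod.val_eq_zero g).mp h)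
    omega
  rw [hcong]
  simp only [neg_zero, ZMod.val_zero, pow_zero, mul_one]
  ring

lemma reflect_Pk : reflect 60 (Pk d) = Nk d + C ((d 0 : Kf)) * (X ^ 60 - 1) := by
  have h1 : reflect 60 (Pk d) = ∑ g : ZMod 60, C ((d g : Kf)) * X ^ (60 - g.val) := by
    rw [Pk, show reflect 60 = ⇑(reflectHom) from rfl, map_sum]
    apply Finset.sum_congr rfl
    intro g _
    rw [reflectHom_apply, reflect_C_mul, reflect_monomial,
      revAt_le (ZMod.val_lt g).le]
  rw [h1, Nk]
  rw [← Finset.add_sum_erase _ _ (Finset.mem_univ (0 : ZMod 60)),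
    ← Finset.add_sum_erase _ (fun g => C ((d g : Kf)) * X ^ (-g).val) (Finset.mem_univ (0 : ZMod 60))]
  have hcong : ∑ g ∈ Finset.univ.erase (0 : ZMod 60), C ((d g : Kf)) * X ^ (60 - g.val)
      = ∑ g ∈ Finset.univ.erase (0 : ZMod 60), C ((d g : Kf)) * X ^ (-g).val := by
    apply Finset.sum_congr rfl
    intro g hg
    have hg0 : g ≠ 0 := Finset.ne_of_mem_erase hg
    rw [ZMod.neg_val]
    simp only [hg0, if_false]
  rw [hcong]
  simp only [neg_zero, ZMod.val_zero, pow_zero, mul_one, Nat.sub_zero]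
  ring

lemma coeff_Pk (j : ℕ) (hj : j < 60) : (Pk d).coeff j = ((d (j : ZMod 60) : Kf)) := by
  rw [Pk, finset_sum_coeff]
  rw [Finset.sum_eq_single ((j : ZMod 60))]
  · rw [coeff_C_mul, coeff_X_pow, ZMod.val_natCast_of_lt hj, if_pos rfl, mul_one]
  · intro g _ hne
    rw [coeff_C_mul, coeff_X_pow, if_neg, mul_zero]
    intro h
    exact hne (by rw [h]; exact (ZMod.natCast_rightInverse g).symm)
  · intro h
    exact absurd (Finset.mem_univ _) h




lemma cast_inj3 {a b : ℤ} (ha : a = 0 ∨ a = 1 ∨ a = -1) (hb : b = 0 ∨ b = 1 ∨ b = -1)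
    (h : (a : Kf) = (b : Kf)) : a = b := by
  rcases ha with rfl | rfl | rfl <;> rcases hb with rfl | rfl | rfl <;>
    first
      | rfl
      | (exact absurd h (by decide))

lemma coprime_of_pair {q q' : Kf[X]} (hirr : Irreducible q)
    (h : q * q' ∣ (X:Kf[X])^20 - 1) : IsCoprime q q' :=
  hirr.coprime_iff_not_dvd.mpr
    (fun hd => hirr.not_isUnit (sqfree_x20 q (dvd_trans (mul_dvd_mul_left q hd) h)))


end CW36aux

open CW36aux

set_option maxHeartbeats 2000000 in
/-- From the proof of Theorem 4.24: if `D` is a `CW(60, 36)` and `χ` is a character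
of `C_60` of order `60` (given by `x ↦ ζ^x` for a primitive `60`-th root of unity
`ζ`), then `χ(D)` is not divisible by `3` in `ℤ[ζ_60]`. -/
theorem CW60_36_character_not_div_three
    (D : AddMonoidAlgebra ℤ (ZMod 60))
    (hcoef : ∀ g : ZMod 60, D.coeff g = 0 ∨ D.coeff g = 1 ∨ D.coeff g = -1)
    (hD : D * (show AddMonoidAlgebra ℤ (ZMod 60) from
        AddMonoidAlgebra.ofCoeff (Finsupp.equivMapDomain (Equiv.neg (ZMod 60)) D.coeff))
      = (36 : AddMonoidAlgebra ℤ (ZMod 60)))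
    (ζ : ℂ) (hζ : IsPrimitiveRoot ζ 60) :
    ¬ ∃ Y ∈ Algebra.adjoin ℤ ({ζ} : Set ℂ),
        (∑ g : ZMod 60, (D.coeff g : ℂ) * ζ ^ (g.val)) = 3 * Y := by
  rintro ⟨Y, hY, hsum⟩
  have hz60C : ζ ^ 60 = 1 := hζ.pow_eq_one
  -- step 1 : divisibility over ℤ[X] coming from the weighing-matrix equation
  have hPimg : evalHom AZ (pz X) pz_X_pow_60 D = pz (Pz (fun g => D.coeff g)) := by
    rw [evalHom_apply, Pz, map_sum]
    apply Finset.sum_congr rfl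
    intro g _
    rw [map_mul, map_pow, pz_C, zsmul_eq_mul]
  have hNimg : evalHom AZ (pz X) pz_X_pow_60 (AddMonoidAlgebra.ofCoeff (Finsupp.equivMapDomain (Equiv.neg (ZMod 60)) D.coeff))
      = pz (Nz (fun g => D.coeff g)) := by
    rw [evalHom_neg_apply, Nz, map_sum]
    apply Finset.sum_congr rfl
    intro g _
    rw [map_mul, map_pow, pz_C, zsmul_eq_mul]
  have h36img : evalHom AZ (pz X) pz_X_pow_60 (36 : AddMonoidAlgebra ℤ (ZMod 60))
      = pz (36 : ℤ[X]) := by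
    rw [map_ofNat, map_ofNat]
  have hAZ := congrArg (evalHom AZ (pz X) pz_X_pow_60) hD
  rw [map_mul, hPimg, hNimg, h36img] at hAZ
  have hdvdz : (X:ℤ[X])^60 - 1 ∣ (Pz (fun g => D.coeff g)) * (Nz (fun g => D.coeff g)) - 36 := by
    apply quotient_dvd
    rw [map_sub, map_mul, hAZ, sub_self]
  -- step 2 : over Kf[X]
  have h36K : (36 : Kf[X]) = 0 := by
    rw [show (36 : Kf[X]) = 12 * 3 from by norm_num, three_eq_zero, mul_zero]
  have hdvdk : ((X:Kf[X])^60 - 1) ∣ (Pk (fun g => D.coeff g)) * (Nk (fun g => D.coeff g)) := by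
    obtain ⟨T, hT⟩ := hdvdz
    refine ⟨T.map (Int.castRingHom Kf), ?_⟩
    have hmm := congrArg (Polynomial.map (Int.castRingHom Kf)) hT
    rw [Polynomial.map_sub, Polynomial.map_mul, map_Pz, map_Nz,
      Polynomial.map_mul, Polynomial.map_sub, Polynomial.map_pow, Polynomial.map_one,
      Polynomial.map_X, Polynomial.map_ofNat, h36K, sub_zero] at hmm
    exact hmm
  -- step 3 : the divisibility hypothesis gives (cyclotomic 20)^2 ∣ Pk
  rw [Algebra.adjoin_singleton_eq_range_aeval] at hY
  obtain ⟨W, hW0⟩ := hY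
  have hW : aeval ζ W = Y := hW0
  have haevP : aeval ζ (Pz (fun g => D.coeff g)) = ∑ g : ZMod 60, (D.coeff g : ℂ) * ζ ^ (g.val) := by
    rw [Pz, map_sum]
    apply Finset.sum_congr rfl
    intro g _
    rw [map_mul, map_pow, aeval_X, aeval_C]
    norm_num
  have haev : aeval ζ (Pz (fun g => D.coeff g) - 3 * W) = 0 := by
    rw [map_sub, map_mul, haevP, hsum, hW, map_ofNat, sub_self]
  have hmp : minpoly ℤ ζ ∣ Pz (fun g => D.coeff g) - 3 * W :=
    minpoly.isIntegrallyClosed_dvd (hζ.isIntegral (by norm_num)) haev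
  rw [← Polynomial.cyclotomic_eq_minpoly hζ (by norm_num)] at hmp
  obtain ⟨T, hT⟩ := hmp
  have hE2 : ((X^8 - X^6 + X^4 - X^2 + 1) : Kf[X])^2 ∣ Pk (fun g => D.coeff g) := by
    refine ⟨T.map (Int.castRingHom Kf), ?_⟩
    have hmm := congrArg (Polynomial.map (Int.castRingHom Kf)) hT
    rw [Polynomial.map_sub, Polynomial.map_mul, Polynomial.map_mul, map_Pz, map_cyclotomic,
      Polynomial.map_ofNat, three_eq_zero, zero_mul, sub_zero] at hmm
    rw [← cyclotomic60]
    exact hmm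
  -- step 4 : the five self-reciprocal prime factors
  have hone_1 : ((X - 1) : Kf[X]) ∣ (X:Kf[X])^20 - 1 :=
    ⟨(X + 1) * (X^2 + 1) * (X^4 + X^3 + X^2 + X + 1) * (X^4 - X^3 + X^2 - X + 1) * (X^8 - X^6 + X^4 - X^2 + 1), by rw [x20_full_factor]; ring⟩
  have hq3_1 : ((X - 1) : Kf[X])^3 ∣ ((X:Kf[X])^60 - 1) := by
    rw [← x60_factor]
    exact pow_dvd_pow_of_dvd hone_1 3
  have hsq_1 : ((X - 1) : Kf[X])^2 ∣ Pk (fun g => D.coeff g) :=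
    key_lemma (UniqueFactorizationMonoid.irreducible_iff_prime.mp irr_q1) (-1) refl_q1
      (le_trans (natDegree_Pk (fun g => D.coeff g)) (by norm_num))
      (le_trans (natDegree_Nk (fun g => D.coeff g)) (by norm_num))
      (reflect_Nk (fun g => D.coeff g)) (hq3_1.trans hdvdk) hq3_1
  have hone_2 : ((X + 1) : Kf[X]) ∣ (X:Kf[X])^20 - 1 :=
    ⟨(X - 1) * (X^2 + 1) * (X^4 + X^3 + X^2 + X + 1) * (X^4 - X^3 + X^2 - X + 1) * (X^8 - X^6 + X^4 - X^2 + 1), by rw [x20_full_factor]; ring⟩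
  have hq3_2 : ((X + 1) : Kf[X])^3 ∣ ((X:Kf[X])^60 - 1) := by
    rw [← x60_factor]
    exact pow_dvd_pow_of_dvd hone_2 3
  have hsq_2 : ((X + 1) : Kf[X])^2 ∣ Pk (fun g => D.coeff g) :=
    key_lemma (UniqueFactorizationMonoid.irreducible_iff_prime.mp irr_q2) 1 refl_q2
      (le_trans (natDegree_Pk (fun g => D.coeff g)) (by norm_num))
      (le_trans (natDegree_Nk (fun g => D.coeff g)) (by norm_num))
      (reflect_Nk (fun g => D.coeff g)) (hq3_2.trans hdvdk) hq3_2
  have hone_3 : ((X^2 + 1) : Kf[X]) ∣ (X:Kf[X])^20 - 1 :=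
    ⟨(X - 1) * (X + 1) * (X^4 + X^3 + X^2 + X + 1) * (X^4 - X^3 + X^2 - X + 1) * (X^8 - X^6 + X^4 - X^2 + 1), by rw [x20_full_factor]; ring⟩
  have hq3_3 : ((X^2 + 1) : Kf[X])^3 ∣ ((X:Kf[X])^60 - 1) := by
    rw [← x60_factor]
    exact pow_dvd_pow_of_dvd hone_3 3
  have hsq_3 : ((X^2 + 1) : Kf[X])^2 ∣ Pk (fun g => D.coeff g) :=
    key_lemma (UniqueFactorizationMonoid.irreducible_iff_prime.mp irr_q3) 1 refl_q3
      (le_trans (natDegree_Pk (fun g => D.coeff g)) (by norm_num))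
      (le_trans (natDegree_Nk (fun g => D.coeff g)) (by norm_num))
      (reflect_Nk (fun g => D.coeff g)) (hq3_3.trans hdvdk) hq3_3
  have hone_4 : ((X^4 + X^3 + X^2 + X + 1) : Kf[X]) ∣ (X:Kf[X])^20 - 1 :=
    ⟨(X - 1) * (X + 1) * (X^2 + 1) * (X^4 - X^3 + X^2 - X + 1) * (X^8 - X^6 + X^4 - X^2 + 1), by rw [x20_full_factor]; ring⟩
  have hq3_4 : ((X^4 + X^3 + X^2 + X + 1) : Kf[X])^3 ∣ ((X:Kf[X])^60 - 1) := by
    rw [← x60_factor]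
    exact pow_dvd_pow_of_dvd hone_4 3
  have hsq_4 : ((X^4 + X^3 + X^2 + X + 1) : Kf[X])^2 ∣ Pk (fun g => D.coeff g) :=
    key_lemma (UniqueFactorizationMonoid.irreducible_iff_prime.mp irr_q4) 1 refl_q4
      (le_trans (natDegree_Pk (fun g => D.coeff g)) (by norm_num))
      (le_trans (natDegree_Nk (fun g => D.coeff g)) (by norm_num))
      (reflect_Nk (fun g => D.coeff g)) (hq3_4.trans hdvdk) hq3_4
  have hone_5 : ((X^4 - X^3 + X^2 - X + 1) : Kf[X]) ∣ (X:Kf[X])^20 - 1 :=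
    ⟨(X - 1) * (X + 1) * (X^2 + 1) * (X^4 + X^3 + X^2 + X + 1) * (X^8 - X^6 + X^4 - X^2 + 1), by rw [x20_full_factor]; ring⟩
  have hq3_5 : ((X^4 - X^3 + X^2 - X + 1) : Kf[X])^3 ∣ ((X:Kf[X])^60 - 1) := by
    rw [← x60_factor]
    exact pow_dvd_pow_of_dvd hone_5 3
  have hsq_5 : ((X^4 - X^3 + X^2 - X + 1) : Kf[X])^2 ∣ Pk (fun g => D.coeff g) :=
    key_lemma (UniqueFactorizationMonoid.irreducible_iff_prime.mp irr_q5) 1 refl_q5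
      (le_trans (natDegree_Pk (fun g => D.coeff g)) (by norm_num))
      (le_trans (natDegree_Nk (fun g => D.coeff g)) (by norm_num))
      (reflect_Nk (fun g => D.coeff g)) (hq3_5.trans hdvdk) hq3_5
  -- step 5 : coprimality and assembly
  have cop_1_2 : IsCoprime ((X - 1) : Kf[X]) ((X + 1)) :=
    coprime_of_pair irr_q1 ⟨(X^2 + 1) * (X^4 + X^3 + X^2 + X + 1) * (X^4 - X^3 + X^2 - X + 1) * (X^8 - X^6 + X^4 - X^2 + 1), by rw [x20_full_factor]; ring⟩
  have cop_1_3 : IsCoprime ((X - 1) : Kf[X]) ((X^2 + 1)) :=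
    coprime_of_pair irr_q1 ⟨(X + 1) * (X^4 + X^3 + X^2 + X + 1) * (X^4 - X^3 + X^2 - X + 1) * (X^8 - X^6 + X^4 - X^2 + 1), by rw [x20_full_factor]; ring⟩
  have cop_1_4 : IsCoprime ((X - 1) : Kf[X]) ((X^4 + X^3 + X^2 + X + 1)) :=
    coprime_of_pair irr_q1 ⟨(X + 1) * (X^2 + 1) * (X^4 - X^3 + X^2 - X + 1) * (X^8 - X^6 + X^4 - X^2 + 1), by rw [x20_full_factor]; ring⟩
  have cop_1_5 : IsCoprime ((X - 1) : Kf[X]) ((X^4 - X^3 + X^2 - X + 1)) :=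
    coprime_of_pair irr_q1 ⟨(X + 1) * (X^2 + 1) * (X^4 + X^3 + X^2 + X + 1) * (X^8 - X^6 + X^4 - X^2 + 1), by rw [x20_full_factor]; ring⟩
  have cop_1_6 : IsCoprime ((X - 1) : Kf[X]) ((X^8 - X^6 + X^4 - X^2 + 1)) :=
    coprime_of_pair irr_q1 ⟨(X + 1) * (X^2 + 1) * (X^4 + X^3 + X^2 + X + 1) * (X^4 - X^3 + X^2 - X + 1), by rw [x20_full_factor]; ring⟩
  have cop_2_3 : IsCoprime ((X + 1) : Kf[X]) ((X^2 + 1)) :=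
    coprime_of_pair irr_q2 ⟨(X - 1) * (X^4 + X^3 + X^2 + X + 1) * (X^4 - X^3 + X^2 - X + 1) * (X^8 - X^6 + X^4 - X^2 + 1), by rw [x20_full_factor]; ring⟩
  have cop_2_4 : IsCoprime ((X + 1) : Kf[X]) ((X^4 + X^3 + X^2 + X + 1)) :=
    coprime_of_pair irr_q2 ⟨(X - 1) * (X^2 + 1) * (X^4 - X^3 + X^2 - X + 1) * (X^8 - X^6 + X^4 - X^2 + 1), by rw [x20_full_factor]; ring⟩
  have cop_2_5 : IsCoprime ((X + 1) : Kf[X]) ((X^4 - X^3 + X^2 - X + 1)) :=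
    coprime_of_pair irr_q2 ⟨(X - 1) * (X^2 + 1) * (X^4 + X^3 + X^2 + X + 1) * (X^8 - X^6 + X^4 - X^2 + 1), by rw [x20_full_factor]; ring⟩
  have cop_2_6 : IsCoprime ((X + 1) : Kf[X]) ((X^8 - X^6 + X^4 - X^2 + 1)) :=
    coprime_of_pair irr_q2 ⟨(X - 1) * (X^2 + 1) * (X^4 + X^3 + X^2 + X + 1) * (X^4 - X^3 + X^2 - X + 1), by rw [x20_full_factor]; ring⟩
  have cop_3_4 : IsCoprime ((X^2 + 1) : Kf[X]) ((X^4 + X^3 + X^2 + X + 1)) :=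
    coprime_of_pair irr_q3 ⟨(X - 1) * (X + 1) * (X^4 - X^3 + X^2 - X + 1) * (X^8 - X^6 + X^4 - X^2 + 1), by rw [x20_full_factor]; ring⟩
  have cop_3_5 : IsCoprime ((X^2 + 1) : Kf[X]) ((X^4 - X^3 + X^2 - X + 1)) :=
    coprime_of_pair irr_q3 ⟨(X - 1) * (X + 1) * (X^4 + X^3 + X^2 + X + 1) * (X^8 - X^6 + X^4 - X^2 + 1), by rw [x20_full_factor]; ring⟩
  have cop_3_6 : IsCoprime ((X^2 + 1) : Kf[X]) ((X^8 - X^6 + X^4 - X^2 + 1)) :=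
    coprime_of_pair irr_q3 ⟨(X - 1) * (X + 1) * (X^4 + X^3 + X^2 + X + 1) * (X^4 - X^3 + X^2 - X + 1), by rw [x20_full_factor]; ring⟩
  have cop_4_5 : IsCoprime ((X^4 + X^3 + X^2 + X + 1) : Kf[X]) ((X^4 - X^3 + X^2 - X + 1)) :=
    coprime_of_pair irr_q4 ⟨(X - 1) * (X + 1) * (X^2 + 1) * (X^8 - X^6 + X^4 - X^2 + 1), by rw [x20_full_factor]; ring⟩
  have cop_4_6 : IsCoprime ((X^4 + X^3 + X^2 + X + 1) : Kf[X]) ((X^8 - X^6 + X^4 - X^2 + 1)) :=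
    coprime_of_pair irr_q4 ⟨(X - 1) * (X + 1) * (X^2 + 1) * (X^4 - X^3 + X^2 - X + 1), by rw [x20_full_factor]; ring⟩
  have cop_5_6 : IsCoprime ((X^4 - X^3 + X^2 - X + 1) : Kf[X]) ((X^8 - X^6 + X^4 - X^2 + 1)) :=
    coprime_of_pair irr_q5 ⟨(X - 1) * (X + 1) * (X^2 + 1) * (X^4 + X^3 + X^2 + X + 1), by rw [x20_full_factor]; ring⟩
  have d6 := hE2
  have d5 := (cop_5_6.pow (m := 2) (n := 2)).mul_dvd hsq_5 d6
  have c4 : IsCoprime ((X^4 + X^3 + X^2 + X + 1) ^ 2 : Kf[X]) ((X^4 - X^3 + X^2 - X + 1)^2 * (X^8 - X^6 + X^4 - X^2 + 1)^2) :=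
    (cop_4_5.pow).mul_right (cop_4_6.pow)
  have d4 := c4.mul_dvd hsq_4 d5
  have c3 : IsCoprime ((X^2 + 1) ^ 2 : Kf[X]) ((X^4 + X^3 + X^2 + X + 1)^2 * ((X^4 - X^3 + X^2 - X + 1)^2 * (X^8 - X^6 + X^4 - X^2 + 1)^2)) :=
    (cop_3_4.pow).mul_right ((cop_3_5.pow).mul_right (cop_3_6.pow))
  have d3 := c3.mul_dvd hsq_3 d4
  have c2 : IsCoprime ((X + 1) ^ 2 : Kf[X]) ((X^2 + 1)^2 * ((X^4 + X^3 + X^2 + X + 1)^2 * ((X^4 - X^3 + X^2 - X + 1)^2 * (X^8 - X^6 + X^4 - X^2 + 1)^2))) :=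
    (cop_2_3.pow).mul_right ((cop_2_4.pow).mul_right ((cop_2_5.pow).mul_right (cop_2_6.pow)))
  have d2 := c2.mul_dvd hsq_2 d3
  have c1 : IsCoprime ((X - 1) ^ 2 : Kf[X]) ((X + 1)^2 * ((X^2 + 1)^2 * ((X^4 + X^3 + X^2 + X + 1)^2 * ((X^4 - X^3 + X^2 - X + 1)^2 * (X^8 - X^6 + X^4 - X^2 + 1)^2)))) :=
    (cop_1_2.pow).mul_right ((cop_1_3.pow).mul_right ((cop_1_4.pow).mul_right ((cop_1_5.pow).mul_right (cop_1_6.pow))))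
  have d1 := c1.mul_dvd hsq_1 d2
  have hfinal : ((X:Kf[X])^20 - 1)^2 ∣ Pk (fun g => D.coeff g) := by
    rw [show ((X:Kf[X])^20 - 1)^2 = (X - 1)^2 * ((X + 1)^2 * ((X^2 + 1)^2 * ((X^4 + X^3 + X^2 + X + 1)^2 * ((X^4 - X^3 + X^2 - X + 1)^2 * (X^8 - X^6 + X^4 - X^2 + 1)^2)))) from by rw [x20_full_factor]; ring]
    exact d1
  -- step 6 : constancy of the coefficients on cosets of the subgroup of order 3
  have hQdvd : ((X:Kf[X])^40 + X^20 + 1) ∣ Pk (fun g => D.coeff g) := by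
    rw [← x20_sq]; exact hfinal
  obtain ⟨V, hV⟩ := hQdvd
  have hQ0 : ((X:Kf[X])^40 + X^20 + 1) ≠ 0 := by
    intro h
    have := congrArg (Polynomial.eval 0) h
    simp at this
  have hQdeg : ((X:Kf[X])^40 + X^20 + 1).natDegree = 40 := by compute_degree!
  have hVc : ∀ m : ℕ, 20 ≤ m → V.coeff m = 0 := by
    intro m hm
    by_cases hV0 : V = 0
    · simp [hV0]
    apply coeff_eq_zero_of_natDegree_lt
    have h1 : (Pk (fun g => D.coeff g)).natDegree = 40 + V.natDegree := by
      rw [hV, natDegree_mul hQ0 hV0, hQdeg]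
    have h2 := natDegree_Pk (fun g => D.coeff g)
    omega
  have hPsplit : Pk (fun g => D.coeff g) = V + V * X^20 + V * X^40 := by rw [hV]; ring
  have hcoV : ∀ j : ℕ, j < 20 →
      (Pk (fun g => D.coeff g)).coeff j = V.coeff j
      ∧ (Pk (fun g => D.coeff g)).coeff (j+20) = V.coeff j
      ∧ (Pk (fun g => D.coeff g)).coeff (j+40) = V.coeff j := by
    intro j hj
    rw [hPsplit]
    simp only [coeff_add, coeff_mul_X_pow']
    refine ⟨?_, ?_, ?_⟩
    · rw [if_neg (by omega), if_neg (by omega), add_zero, add_zero]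
    · rw [if_pos (by omega), if_neg (by omega), add_zero, Nat.add_sub_cancel,
        hVc (j+20) (by omega), zero_add]
    · rw [if_pos (by omega), if_pos (by omega),
        show j + 40 - 20 = j + 20 from by omega, Nat.add_sub_cancel,
        hVc (j+40) (by omega), hVc (j+20) (by omega), zero_add, zero_add]
  have hj1 : ∀ j : ℕ, j < 20 → ((D.coeff ((j:ZMod 60)) : ℤ) : Kf) = ((D.coeff (((j+20:ℕ):ZMod 60)) : ℤ) : Kf) := by
    intro j hj
    have h1 := coeff_Pk (fun g => D.coeff g) j (by omega)
    have h2 := coeff_Pk (fun g => D.coeff g) (j+20) (by omega)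
    have hc := hcoV j hj
    rw [← h1, ← h2, hc.1, hc.2.1]
  have hj2 : ∀ j : ℕ, j < 20 → ((D.coeff ((j:ZMod 60)) : ℤ) : Kf) = ((D.coeff (((j+40:ℕ):ZMod 60)) : ℤ) : Kf) := by
    intro j hj
    have h1 := coeff_Pk (fun g => D.coeff g) j (by omega)
    have h2 := coeff_Pk (fun g => D.coeff g) (j+40) (by omega)
    have hc := hcoV j hj
    rw [← h1, ← h2, hc.1, hc.2.2]
  have hD1 : ∀ j : ℕ, j < 20 → D.coeff ((j:ZMod 60)) = D.coeff (((j+20:ℕ):ZMod 60)) :=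
    fun j hj => cast_inj3 (hcoef _) (hcoef _) (hj1 j hj)
  have hD2 : ∀ j : ℕ, j < 20 → D.coeff ((j:ZMod 60)) = D.coeff (((j+40:ℕ):ZMod 60)) :=
    fun j hj => cast_inj3 (hcoef _) (hcoef _) (hj2 j hj)
  -- step 7 : the character sum vanishes
  have hz3 : (1:ℂ) + ζ^20 + ζ^40 = 0 := by
    have hne : ζ^20 ≠ 1 := hζ.pow_ne_one_of_pos_of_lt (by norm_num) (by norm_num)
    have hcube : (ζ^20)^3 = 1 := by
      rw [← pow_mul, show 20*3 = 60 from rfl]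
      exact hζ.pow_eq_one
    have hfac : (ζ^20 - 1) * (1 + ζ^20 + ζ^40) = 0 := by linear_combination hcube
    rcases mul_eq_zero.mp hfac with h | h
    · exact absurd (sub_eq_zero.mp h) hne
    · exact h
  have e20 : D.coeff (20 : ZMod 60) = D.coeff (0 : ZMod 60) := by
    have h := hD1 0 (by norm_num)
    norm_num at h
    exact h.symm
  have e21 : D.coeff (21 : ZMod 60) = D.coeff (1 : ZMod 60) := by
    have h := hD1 1 (by norm_num)
    norm_num at h
    exact h.symm
  have e22 : D.coeff (22 : ZMod 60) = D.coeff (2 : ZMod 60) := by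
    have h := hD1 2 (by norm_num)
    norm_num at h
    exact h.symm
  have e23 : D.coeff (23 : ZMod 60) = D.coeff (3 : ZMod 60) := by
    have h := hD1 3 (by norm_num)
    norm_num at h
    exact h.symm
  have e24 : D.coeff (24 : ZMod 60) = D.coeff (4 : ZMod 60) := by
    have h := hD1 4 (by norm_num)
    norm_num at h
    exact h.symm
  have e25 : D.coeff (25 : ZMod 60) = D.coeff (5 : ZMod 60) := by
    have h := hD1 5 (by norm_num)
    norm_num at h
    exact h.symm
  have e26 : D.coeff (26 : ZMod 60) = D.coeff (6 : ZMod 60) := by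
    have h := hD1 6 (by norm_num)
    norm_num at h
    exact h.symm
  have e27 : D.coeff (27 : ZMod 60) = D.coeff (7 : ZMod 60) := by
    have h := hD1 7 (by norm_num)
    norm_num at h
    exact h.symm
  have e28 : D.coeff (28 : ZMod 60) = D.coeff (8 : ZMod 60) := by
    have h := hD1 8 (by norm_num)
    norm_num at h
    exact h.symm
  have e29 : D.coeff (29 : ZMod 60) = D.coeff (9 : ZMod 60) := by
    have h := hD1 9 (by norm_num)
    norm_num at h
    exact h.symm
  have e30 : D.coeff (30 : ZMod 60) = D.coeff (10 : ZMod 60) := by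
    have h := hD1 10 (by norm_num)
    norm_num at h
    exact h.symm
  have e31 : D.coeff (31 : ZMod 60) = D.coeff (11 : ZMod 60) := by
    have h := hD1 11 (by norm_num)
    norm_num at h
    exact h.symm
  have e32 : D.coeff (32 : ZMod 60) = D.coeff (12 : ZMod 60) := by
    have h := hD1 12 (by norm_num)
    norm_num at h
    exact h.symm
  have e33 : D.coeff (33 : ZMod 60) = D.coeff (13 : ZMod 60) := by
    have h := hD1 13 (by norm_num)
    norm_num at h
    exact h.symm
  have e34 : D.coeff (34 : ZMod 60) = D.coeff (14 : ZMod 60) := by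
    have h := hD1 14 (by norm_num)
    norm_num at h
    exact h.symm
  have e35 : D.coeff (35 : ZMod 60) = D.coeff (15 : ZMod 60) := by
    have h := hD1 15 (by norm_num)
    norm_num at h
    exact h.symm
  have e36 : D.coeff (36 : ZMod 60) = D.coeff (16 : ZMod 60) := by
    have h := hD1 16 (by norm_num)
    norm_num at h
    exact h.symm
  have e37 : D.coeff (37 : ZMod 60) = D.coeff (17 : ZMod 60) := by
    have h := hD1 17 (by norm_num)
    norm_num at h
    exact h.symm
  have e38 : D.coeff (38 : ZMod 60) = D.coeff (18 : ZMod 60) := by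
    have h := hD1 18 (by norm_num)
    norm_num at h
    exact h.symm
  have e39 : D.coeff (39 : ZMod 60) = D.coeff (19 : ZMod 60) := by
    have h := hD1 19 (by norm_num)
    norm_num at h
    exact h.symm
  have e40 : D.coeff (40 : ZMod 60) = D.coeff (0 : ZMod 60) := by
    have h := hD2 0 (by norm_num)
    norm_num at h
    exact h.symm
  have e41 : D.coeff (41 : ZMod 60) = D.coeff (1 : ZMod 60) := by
    have h := hD2 1 (by norm_num)
    norm_num at h
    exact h.symm
  have e42 : D.coeff (42 : ZMod 60) = D.coeff (2 : ZMod 60) := by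
    have h := hD2 2 (by norm_num)
    norm_num at h
    exact h.symm
  have e43 : D.coeff (43 : ZMod 60) = D.coeff (3 : ZMod 60) := by
    have h := hD2 3 (by norm_num)
    norm_num at h
    exact h.symm
  have e44 : D.coeff (44 : ZMod 60) = D.coeff (4 : ZMod 60) := by
    have h := hD2 4 (by norm_num)
    norm_num at h
    exact h.symm
  have e45 : D.coeff (45 : ZMod 60) = D.coeff (5 : ZMod 60) := by
    have h := hD2 5 (by norm_num)
    norm_num at h
    exact h.symm
  have e46 : D.coeff (46 : ZMod 60) = D.coeff (6 : ZMod 60) := by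
    have h := hD2 6 (by norm_num)
    norm_num at h
    exact h.symm
  have e47 : D.coeff (47 : ZMod 60) = D.coeff (7 : ZMod 60) := by
    have h := hD2 7 (by norm_num)
    norm_num at h
    exact h.symm
  have e48 : D.coeff (48 : ZMod 60) = D.coeff (8 : ZMod 60) := by
    have h := hD2 8 (by norm_num)
    norm_num at h
    exact h.symm
  have e49 : D.coeff (49 : ZMod 60) = D.coeff (9 : ZMod 60) := by
    have h := hD2 9 (by norm_num)
    norm_num at h
    exact h.symm
  have e50 : D.coeff (50 : ZMod 60) = D.coeff (10 : ZMod 60) := by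
    have h := hD2 10 (by norm_num)
    norm_num at h
    exact h.symm
  have e51 : D.coeff (51 : ZMod 60) = D.coeff (11 : ZMod 60) := by
    have h := hD2 11 (by norm_num)
    norm_num at h
    exact h.symm
  have e52 : D.coeff (52 : ZMod 60) = D.coeff (12 : ZMod 60) := by
    have h := hD2 12 (by norm_num)
    norm_num at h
    exact h.symm
  have e53 : D.coeff (53 : ZMod 60) = D.coeff (13 : ZMod 60) := by
    have h := hD2 13 (by norm_num)
    norm_num at h
    exact h.symm
  have e54 : D.coeff (54 : ZMod 60) = D.coeff (14 : ZMod 60) := by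
    have h := hD2 14 (by norm_num)
    norm_num at h
    exact h.symm
  have e55 : D.coeff (55 : ZMod 60) = D.coeff (15 : ZMod 60) := by
    have h := hD2 15 (by norm_num)
    norm_num at h
    exact h.symm
  have e56 : D.coeff (56 : ZMod 60) = D.coeff (16 : ZMod 60) := by
    have h := hD2 16 (by norm_num)
    norm_num at h
    exact h.symm
  have e57 : D.coeff (57 : ZMod 60) = D.coeff (17 : ZMod 60) := by
    have h := hD2 17 (by norm_num)
    norm_num at h
    exact h.symm
  have e58 : D.coeff (58 : ZMod 60) = D.coeff (18 : ZMod 60) := by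
    have h := hD2 18 (by norm_num)
    norm_num at h
    exact h.symm
  have e59 : D.coeff (59 : ZMod 60) = D.coeff (19 : ZMod 60) := by
    have h := hD2 19 (by norm_num)
    norm_num at h
    exact h.symm
  have himg : Finset.image (fun i : ℕ => (i : ZMod 60)) (Finset.range 60) = Finset.univ := by
    apply Finset.eq_univ_of_forall
    intro g
    rw [Finset.mem_image]
    exact ⟨g.val, Finset.mem_range.mpr (ZMod.val_lt g), ZMod.natCast_rightInverse g⟩
  have hreix : (∑ g : ZMod 60, (D.coeff g : ℂ) * ζ ^ (g.val))
      = ∑ i ∈ Finset.range 60, (D.coeff ((i : ZMod 60)) : ℂ) * ζ ^ i := by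
    rw [← himg, Finset.sum_image ?hinj]
    · apply Finset.sum_congr rfl
      intro i hi
      rw [ZMod.val_natCast_of_lt (Finset.mem_range.mp hi)]
    · intro a ha b hb h
      have := congrArg ZMod.val h
      rwa [ZMod.val_natCast_of_lt (Finset.mem_range.mp ha),
        ZMod.val_natCast_of_lt (Finset.mem_range.mp hb)] at this
  have hSz : (∑ g : ZMod 60, (D.coeff g : ℂ) * ζ ^ (g.val)) = 0 := by
    rw [hreix]
    simp only [Finset.sum_range_succ, Finset.sum_range_zero, Nat.cast_ofNat, Nat.cast_zero,
      Nat.cast_one, zero_add]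
    rw [e20, e21, e22, e23, e24, e25, e26, e27, e28, e29, e30, e31, e32, e33, e34, e35, e36, e37, e38, e39, e40, e41, e42, e43, e44, e45, e46, e47, e48, e49, e50, e51, e52, e53, e54, e55, e56, e57, e58, e59]
    linear_combination ((D.coeff (0 : ZMod 60) : ℂ) * ζ ^ 0 + (D.coeff (1 : ZMod 60) : ℂ) * ζ ^ 1 + (D.coeff (2 : ZMod 60) : ℂ) * ζ ^ 2 + (D.coeff (3 : ZMod 60) : ℂ) * ζ ^ 3 + (D.coeff (4 : ZMod 60) : ℂ) * ζ ^ 4 + (D.coeff (5 : ZMod 60) : ℂ) * ζ ^ 5 + (D.coeff (6 : ZMod 60) : ℂ) * ζ ^ 6 + (D.coeff (7 : ZMod 60) : ℂ) * ζ ^ 7 + (D.coeff (8 : ZMod 60) : ℂ) * ζ ^ 8 + (D.coeff (9 : ZMod 60) : ℂ) * ζ ^ 9 + (D.coeff (10 : ZMod 60) : ℂ) * ζ ^ 10 + (D.coeff (11 : ZMod 60) : ℂ) * ζ ^ 11 + (D.coeff (12 : ZMod 60) : ℂ) * ζ ^ 12 + (D.coeff (13 : ZMod 60) : ℂ) * ζ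 ^ 13 + (D.coeff (14 : ZMod 60) : ℂ) * ζ ^ 14 + (D.coeff (15 : ZMod 60) : ℂ) * ζ ^ 15 + (D.coeff (16 : ZMod 60) : ℂ) * ζ ^ 16 + (D.coeff (17 : ZMod 60) : ℂ) * ζ ^ 17 + (D.coeff (18 : ZMod 60) : ℂ) * ζ ^ 18 + (D.coeff (19 : ZMod 60) : ℂ) * ζ ^ 19) * hz3
  -- step 8 : contradiction with the weighing matrix equation
  have hC := congrArg (evalHom ℂ ζ hz60C) hD
  rw [map_mul, map_ofNat] at hC
  have hCP : evalHom ℂ ζ hz60C D = ∑ g : ZMod 60, (D.coeff g : ℂ) * ζ ^ (g.val) := by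
    rw [evalHom_apply]
    apply Finset.sum_congr rfl
    intro g _
    rw [zsmul_eq_mul]
  rw [hCP, hSz, zero_mul] at hC
  exact absurd hC (by norm_num)

end
end
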